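/- arXiv:2401.07050 — 5 statements merged into one kernel-verified Lean document; each statement's English description precedes it below -/
import Mathlib

section
/- Let (X, <, R) be a countable homogeneous ordered bipartite graph in which every red point precedes every blue point and both colour classes X_r and X_b are order-isomorphic to ℚ. Suppose that for every red point a, both R(a) and X_b \ R(a) are dense in X_b, and for every blue point b, both R(b) and X_r \ R(b) are dense in X_r. Then for every pair of finite disjoint subsets A₁ and A₂ of X_r, the set of blue points joined to all members of A₁ and to no members of A₂ is dense in X_b (and symmetrically with the colours exchanged). -/
/-- A map `f` defined on the finite set `s` is a partial isomorphism of the structure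
`(X, lt, red, R)`: it preserves the order `lt`, the colours `red`, and the graph
relation `R` together with its negation. -/
def IsPartialIso {X : Type*} (lt : X → X → Prop) (red : X → Bool) (R : X → X → Prop)
    (s : Finset X) (f : X → X) : Prop :=
  (∀ x ∈ s, ∀ y ∈ s, (lt x y ↔ lt (f x) (f y))) ∧
  (∀ x ∈ s, red (f x) = red x) ∧
  (∀ x ∈ s, ∀ y ∈ s, (R x y ↔ R (f x) (f y)))

/-- `g` is an automorphism of the structure `(X, lt, red, R)`. -/
def IsAuto {X : Type*} (lt : X → X → Prop) (red : X → Bool) (R : X → X → Prop)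
    (g : X ≃ X) : Prop :=
  (∀ x y, lt x y ↔ lt (g x) (g y)) ∧ (∀ x, red (g x) = red x) ∧
  (∀ x y, R x y ↔ R (g x) (g y))

/-- The structure `(X, lt, red, R)` is homogeneous: every isomorphism between finite
substructures extends to an automorphism. -/
def Homogeneous {X : Type*} (lt : X → X → Prop) (red : X → Bool) (R : X → X → Prop) : Prop :=
  ∀ (s : Finset X) (f : X → X), IsPartialIso lt red R s f →
    ∃ g : X ≃ X, IsAuto lt red R g ∧ ∀ x ∈ s, g x = f x

/-- Row predicate: the point `x` has prescribed relations to `f₁`, `f₂`. -/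
def RowP {X : Type*} (R : X → X → Prop) (s₁ s₂ : Prop) (f₁ f₂ x : X) : Prop :=
  (R x f₁ ↔ s₁) ∧ (R x f₂ ↔ s₂)

lemma classify4 (P₁ P₂ t₁ t₂ : Prop) :
    (((P₁ ↔ t₁) ∧ (P₂ ↔ t₂)) ∨ ((P₁ ↔ ¬t₁) ∧ (P₂ ↔ ¬t₂))) ∨
    (((P₁ ↔ t₁) ∧ (P₂ ↔ ¬t₂)) ∨ ((P₁ ↔ ¬t₁) ∧ (P₂ ↔ t₂))) := by tauto

lemma finBC (P₁ P₂ P₃ t₁ t₂ : Prop) (hσ : t₁ ↔ t₂)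
    (h12 : ((P₁ ↔ t₁) ∧ (P₂ ↔ ¬t₂)) ∨ ((P₁ ↔ ¬t₁) ∧ (P₂ ↔ t₂)))
    (h13 : ((P₁ ↔ t₁) ∧ (P₃ ↔ ¬t₂)) ∨ ((P₁ ↔ ¬t₁) ∧ (P₃ ↔ t₂)))
    (h23 : ((P₂ ↔ t₁) ∧ (P₃ ↔ ¬t₂)) ∨ ((P₂ ↔ ¬t₁) ∧ (P₃ ↔ t₂))) : False := by tauto

lemma finAD (P₁ P₂ P₃ t₁ t₂ : Prop) (hσ : ¬ (t₁ ↔ t₂))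
    (h12 : ((P₁ ↔ t₁) ∧ (P₂ ↔ t₂)) ∨ ((P₁ ↔ ¬t₁) ∧ (P₂ ↔ ¬t₂)))
    (h13 : ((P₁ ↔ t₁) ∧ (P₃ ↔ t₂)) ∨ ((P₁ ↔ ¬t₁) ∧ (P₃ ↔ ¬t₂)))
    (h23 : ((P₂ ↔ t₁) ∧ (P₃ ↔ t₂)) ∨ ((P₂ ↔ ¬t₁) ∧ (P₃ ↔ ¬t₂))) : False := by tauto

/-- The key two-constraint density lemma, proved abstractly.  `col x = true` is the
"solution" class (where we search, inside the interval `(e₁, e₂)`), `col x = false`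
is the "constraint" class containing `d₁, d₂`. -/
theorem coreG {X : Type*}
    (lt : X → X → Prop) (col : X → Bool) (R : X → X → Prop)
    (htrans : ∀ {a b c}, lt a b → lt b c → lt a c)
    (hirr : ∀ a, ¬ lt a a)
    (htot : ∀ a b, a ≠ b → lt a b ∨ lt b a)
    (hsymm : ∀ x y, R x y → R y x)
    (hnr : ∀ x y, col x = col y → ¬ R x y)
    (hcross : ∀ x y, col x = true → col y = false → lt x y)
    (hHom : ∀ (s : Finset X) (f : X → X),
        (∀ x ∈ s, ∀ y ∈ s, (lt x y ↔ lt (f x) (f y))) →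
        (∀ x ∈ s, col (f x) = col x) →
        (∀ x ∈ s, ∀ y ∈ s, (R x y ↔ R (f x) (f y))) →
        ∃ g : X ≃ X, (∀ x y, lt x y ↔ lt (g x) (g y)) ∧ (∀ x, col (g x) = col x) ∧
          (∀ x y, R x y ↔ R (g x) (g y)) ∧ ∀ x ∈ s, g x = f x)
    (hdsol : ∀ (d : X), col d = false → ∀ (t : Prop) (u v : X), col u = true →
        col v = true → lt u v → ∃ x, col x = true ∧ lt u x ∧ lt x v ∧ (R x d ↔ t))
    (hdcon : ∀ (y : X), col y = true → ∀ (t : Prop) (u v : X), col u = false →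
        col v = false → lt u v → ∃ f, col f = false ∧ lt u f ∧ lt f v ∧ (R y f ↔ t))
    (hsolA : ∀ x, col x = true → ∃ y, col y = true ∧ lt x y)
    (hsolB : ∀ x, col x = true → ∃ y, col y = true ∧ lt y x)
    (hconA : ∀ x, col x = false → ∃ y, col y = false ∧ lt x y)
    (hconB : ∀ x, col x = false → ∃ y, col y = false ∧ lt y x)
    (d₁ d₂ : X) (hcd₁ : col d₁ = false) (hcd₂ : col d₂ = false) (hd12 : lt d₁ d₂)
    (t₁ t₂ : Prop)
    (e₁ e₂ : X) (hce₁ : col e₁ = true) (hce₂ : col e₂ = true) (he12 : lt e₁ e₂) :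
    ∃ x, col x = true ∧ lt e₁ x ∧ lt x e₂ ∧ (R x d₁ ↔ t₁) ∧ (R x d₂ ↔ t₂) := by
  classical
  by_contra hcon
  have hbad : ∀ x, col x = true → lt e₁ x → lt x e₂ →
      ¬ ((R x d₁ ↔ t₁) ∧ (R x d₂ ↔ t₂)) := by
    intro x h1 h2 h3 h4
    exact hcon ⟨x, h1, h2, h3, h4.1, h4.2⟩
  have asym : ∀ {a b : X}, lt a b → ¬ lt b a := fun h h' => hirr _ (htrans h h')
  have hneq : ∀ {a b : X}, lt a b → a ≠ b := fun h he => hirr _ (he ▸ h)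
  have hge_trans : ∀ {a b c : X}, ¬ lt a b → ¬ lt b c → ¬ lt a c := by
    intro a b c h1 h2 hac
    by_cases he : a = b
    · exact h2 (he ▸ hac)
    · rcases htot a b he with h | h
      · exact h1 h
      · exact h2 (htrans h hac)
  have lt_of_lt_nlt : ∀ {a b c : X}, lt a b → ¬ lt c b → lt a c := by
    intro a b c h1 h2
    by_cases he : a = c
    · exact absurd (he ▸ h1) h2
    · rcases htot a c he with h | h
      · exact h
      · exact absurd (htrans h h1) h2
  have lt_of_nlt_lt : ∀ {a b c : X}, ¬ lt b a → lt b c → lt a c := by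
    intro a b c h1 h2
    by_cases he : a = b
    · exact he ▸ h2
    · rcases htot a b he with h | h
      · exact htrans h h2
      · exact absurd h h1
  have colne : ∀ {x y : X}, col x = true → col y = false → x ≠ y := by
    intro x y hx hy he; rw [he, hy] at hx; exact Bool.false_ne_true hx
  have iff_resolve : ∀ P Q : Prop, ¬ (P ↔ ¬ Q) → (P ↔ Q) := by
    intro P Q h
    by_cases hq : Q
    · by_cases hp : P
      · exact iff_of_true hp hq
      · exact absurd (iff_of_false hp (not_not_intro hq)) h
    · by_cases hp : P
      · exact absurd (iff_of_true hp hq) h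
      · exact iff_of_false hp hq
  have iff_resolve' : ∀ P Q : Prop, ¬ (P ↔ Q) → (P ↔ ¬ Q) := by
    intro P Q h
    by_cases hq : Q
    · by_cases hp : P
      · exact absurd (iff_of_true hp hq) h
      · exact iff_of_false hp (not_not_intro hq)
    · by_cases hp : P
      · exact iff_of_true hp hq
      · exact absurd (iff_of_false hp hq) h
  -- two-point (constraint side) homogeneity transfer
  have hmap2 : ∀ a₁ a₂ b₁ b₂ : X, col a₁ = false → col a₂ = false → col b₁ = false →
      col b₂ = false → lt a₁ a₂ → lt b₁ b₂ →
      ∃ g : X ≃ X, (∀ x y, lt x y ↔ lt (g x) (g y)) ∧ (∀ x, col (g x) = col x) ∧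
        (∀ x y, R x y ↔ R (g x) (g y)) ∧ g a₁ = b₁ ∧ g a₂ = b₂ := by
    intro a₁ a₂ b₁ b₂ h1 h2 h3 h4 h5 h6
    have hne : a₁ ≠ a₂ := hneq h5
    set f : X → X := fun x => if x = a₁ then b₁ else if x = a₂ then b₂ else x with hf
    have hfa₁ : f a₁ = b₁ := by simp [hf]
    have hfa₂ : f a₂ = b₂ := by
      simp only [hf]; rw [if_neg (Ne.symm hne)]; simp
    have hmem : ∀ x ∈ ({a₁, a₂} : Finset X), x = a₁ ∨ x = a₂ := by
      intro x hx; simpa using hx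
    have c1 : ∀ x ∈ ({a₁, a₂} : Finset X), ∀ y ∈ ({a₁, a₂} : Finset X),
        (lt x y ↔ lt (f x) (f y)) := by
      intro x hx y hy
      rcases hmem x hx with rfl | rfl <;> rcases hmem y hy with rfl | rfl <;>
        simp only [hfa₁, hfa₂]
      · exact iff_of_false (hirr _) (hirr _)
      · exact iff_of_true h5 h6
      · exact iff_of_false (asym h5) (asym h6)
      · exact iff_of_false (hirr _) (hirr _)
    have c2 : ∀ x ∈ ({a₁, a₂} : Finset X), col (f x) = col x := by
      intro x hx
      rcases hmem x hx with rfl | rfl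
      · rw [hfa₁, h3, h1]
      · rw [hfa₂, h4, h2]
    have c3 : ∀ x ∈ ({a₁, a₂} : Finset X), ∀ y ∈ ({a₁, a₂} : Finset X),
        (R x y ↔ R (f x) (f y)) := by
      intro x hx y hy
      rcases hmem x hx with rfl | rfl <;> rcases hmem y hy with rfl | rfl <;>
        simp only [hfa₁, hfa₂]
      · exact iff_of_false (hnr _ _ rfl) (hnr _ _ rfl)
      · exact iff_of_false (hnr _ _ (h1.trans h2.symm)) (hnr _ _ (h3.trans h4.symm))
      · exact iff_of_false (hnr _ _ (h2.trans h1.symm)) (hnr _ _ (h4.trans h3.symm))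
      · exact iff_of_false (hnr _ _ rfl) (hnr _ _ rfl)
    obtain ⟨g, hg1, hg2, hg3, hg4⟩ := hHom {a₁, a₂} f c1 c2 c3
    refine ⟨g, hg1, hg2, hg3, ?_, ?_⟩
    · rw [hg4 a₁ (by simp), hfa₁]
    · rw [hg4 a₂ (by simp), hfa₂]
  have hmap4 : ∀ a₁ a₂ u v b₁ b₂ u' v' : X, col a₁ = false → col a₂ = false →
      col u = true → col v = true → col b₁ = false → col b₂ = false →
      col u' = true → col v' = true → lt a₁ a₂ → lt u v → lt b₁ b₂ → lt u' v' →
      (R u a₁ ↔ R u' b₁) → (R u a₂ ↔ R u' b₂) → (R v a₁ ↔ R v' b₁) →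
      (R v a₂ ↔ R v' b₂) →
      ∃ g : X ≃ X, (∀ x y, lt x y ↔ lt (g x) (g y)) ∧ (∀ x, col (g x) = col x) ∧
        (∀ x y, R x y ↔ R (g x) (g y)) ∧ g a₁ = b₁ ∧ g a₂ = b₂ ∧ g u = u' ∧ g v = v' := by
    intro a₁ a₂ u v b₁ b₂ u' v' hca₁ hca₂ hcu hcv hcb₁ hcb₂ hcu' hcv' laa luv lbb luv'
    intro r₁ r₂ r₃ r₄
    have n12 : a₁ ≠ a₂ := hneq laa
    have nuv : u ≠ v := hneq luv
    have nua₁ : u ≠ a₁ := colne hcu hca₁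
    have nua₂ : u ≠ a₂ := colne hcu hca₂
    have nva₁ : v ≠ a₁ := colne hcv hca₁
    have nva₂ : v ≠ a₂ := colne hcv hca₂
    set f : X → X := fun x => if x = a₁ then b₁ else if x = a₂ then b₂ else
      if x = u then u' else if x = v then v' else x with hf
    have hfa₁ : f a₁ = b₁ := by simp [hf]
    have hfa₂ : f a₂ = b₂ := by
      simp only [hf]; rw [if_neg (Ne.symm n12)]; simp
    have hfu : f u = u' := by
      simp only [hf]; rw [if_neg nua₁, if_neg nua₂]; simp
    have hfv : f v = v' := by
      simp only [hf]; rw [if_neg nva₁, if_neg nva₂, if_neg (Ne.symm nuv)]; simp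
    have hmem : ∀ x ∈ ({a₁, a₂, u, v} : Finset X), x = a₁ ∨ x = a₂ ∨ x = u ∨ x = v := by
      intro x hx; simpa using hx
    have c1 : ∀ x ∈ ({a₁, a₂, u, v} : Finset X), ∀ y ∈ ({a₁, a₂, u, v} : Finset X),
        (lt x y ↔ lt (f x) (f y)) := by
      intro x hx y hy
      rcases hmem x hx with rfl | rfl | rfl | rfl <;>
        rcases hmem y hy with rfl | rfl | rfl | rfl <;>
        simp only [hfa₁, hfa₂, hfu, hfv]
      · exact iff_of_false (hirr _) (hirr _)
      · exact iff_of_true laa lbb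
      · exact iff_of_false (asym (hcross _ _ hcu hca₁)) (asym (hcross _ _ hcu' hcb₁))
      · exact iff_of_false (asym (hcross _ _ hcv hca₁)) (asym (hcross _ _ hcv' hcb₁))
      · exact iff_of_false (asym laa) (asym lbb)
      · exact iff_of_false (hirr _) (hirr _)
      · exact iff_of_false (asym (hcross _ _ hcu hca₂)) (asym (hcross _ _ hcu' hcb₂))
      · exact iff_of_false (asym (hcross _ _ hcv hca₂)) (asym (hcross _ _ hcv' hcb₂))
      · exact iff_of_true (hcross _ _ hcu hca₁) (hcross _ _ hcu' hcb₁)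
      · exact iff_of_true (hcross _ _ hcu hca₂) (hcross _ _ hcu' hcb₂)
      · exact iff_of_false (hirr _) (hirr _)
      · exact iff_of_true luv luv'
      · exact iff_of_true (hcross _ _ hcv hca₁) (hcross _ _ hcv' hcb₁)
      · exact iff_of_true (hcross _ _ hcv hca₂) (hcross _ _ hcv' hcb₂)
      · exact iff_of_false (asym luv) (asym luv')
      · exact iff_of_false (hirr _) (hirr _)
    have c2 : ∀ x ∈ ({a₁, a₂, u, v} : Finset X), col (f x) = col x := by
      intro x hx
      rcases hmem x hx with rfl | rfl | rfl | rfl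
      · rw [hfa₁, hcb₁, hca₁]
      · rw [hfa₂, hcb₂, hca₂]
      · rw [hfu, hcu', hcu]
      · rw [hfv, hcv', hcv]
    have c3 : ∀ x ∈ ({a₁, a₂, u, v} : Finset X), ∀ y ∈ ({a₁, a₂, u, v} : Finset X),
        (R x y ↔ R (f x) (f y)) := by
      intro x hx y hy
      rcases hmem x hx with rfl | rfl | rfl | rfl <;>
        rcases hmem y hy with rfl | rfl | rfl | rfl <;>
        simp only [hfa₁, hfa₂, hfu, hfv]
      · exact iff_of_false (hnr _ _ rfl) (hnr _ _ rfl)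
      · exact iff_of_false (hnr _ _ (hca₁.trans hca₂.symm)) (hnr _ _ (hcb₁.trans hcb₂.symm))
      · exact ⟨fun h => hsymm _ _ (r₁.mp (hsymm _ _ h)),
          fun h => hsymm _ _ (r₁.mpr (hsymm _ _ h))⟩
      · exact ⟨fun h => hsymm _ _ (r₃.mp (hsymm _ _ h)),
          fun h => hsymm _ _ (r₃.mpr (hsymm _ _ h))⟩
      · exact iff_of_false (hnr _ _ (hca₂.trans hca₁.symm)) (hnr _ _ (hcb₂.trans hcb₁.symm))
      · exact iff_of_false (hnr _ _ rfl) (hnr _ _ rfl)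
      · exact ⟨fun h => hsymm _ _ (r₂.mp (hsymm _ _ h)),
          fun h => hsymm _ _ (r₂.mpr (hsymm _ _ h))⟩
      · exact ⟨fun h => hsymm _ _ (r₄.mp (hsymm _ _ h)),
          fun h => hsymm _ _ (r₄.mpr (hsymm _ _ h))⟩
      · exact r₁
      · exact r₂
      · exact iff_of_false (hnr _ _ rfl) (hnr _ _ rfl)
      · exact iff_of_false (hnr _ _ (hcu.trans hcv.symm)) (hnr _ _ (hcu'.trans hcv'.symm))
      · exact r₃
      · exact r₄
      · exact iff_of_false (hnr _ _ (hcv.trans hcu.symm)) (hnr _ _ (hcv'.trans hcu'.symm))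
      · exact iff_of_false (hnr _ _ rfl) (hnr _ _ rfl)
    obtain ⟨g, hg1, hg2, hg3, hg4⟩ := hHom {a₁, a₂, u, v} f c1 c2 c3
    refine ⟨g, hg1, hg2, hg3, ?_, ?_, ?_, ?_⟩
    · rw [hg4 a₁ (by simp), hfa₁]
    · rw [hg4 a₂ (by simp), hfa₂]
    · rw [hg4 u (by simp), hfu]
    · rw [hg4 v (by simp), hfv]
  -- every sign pattern over any constraint pair is realized by some solution point
  have exA : ∀ f₁ f₂ : X, col f₁ = false → col f₂ = false → lt f₁ f₂ →
      ∀ s₁ s₂ : Prop, ∃ x, col x = true ∧ (R x f₁ ↔ s₁) ∧ (R x f₂ ↔ s₂) := by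
    intro f₁ f₂ hf₁ hf₂ hff s₁ s₂
    obtain ⟨u0, hu0, hu0lt⟩ := hconB f₁ hf₁
    obtain ⟨g₁, hg₁c, hg₁l, hg₁r, hg₁bit⟩ := hdcon e₁ hce₁ s₁ u0 f₁ hu0 hf₁ hu0lt
    obtain ⟨g₂, hg₂c, hg₂l, hg₂r, hg₂bit⟩ := hdcon e₁ hce₁ s₂ g₁ f₁ hg₁c hf₁ hg₁r
    obtain ⟨g, hgl, hgc, hgR, hga, hgb⟩ := hmap2 g₁ g₂ f₁ f₂ hg₁c hg₂c hf₁ hf₂ hg₂l hff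
    refine ⟨g e₁, hgc e₁ ▸ hce₁, ?_, ?_⟩
    · rw [← hga]; exact (hgR e₁ g₁).symm.trans hg₁bit
    · rw [← hgb]; exact (hgR e₁ g₂).symm.trans hg₂bit
  -- witness extraction: a point inside a protected subinterval of (e₁,e₂) whose
  -- row matches a given BC-row
  have getBC : ∀ lo hi : X, col lo = true → col hi = true → lt lo hi →
      (∀ x, lt lo x → lt x hi → lt e₁ x ∧ lt x e₂) →
      ∀ P₁ P₂ : Prop, (((P₁ ↔ t₁) ∧ (P₂ ↔ ¬t₂)) ∨ ((P₁ ↔ ¬t₁) ∧ (P₂ ↔ t₂))) →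
      ∃ w, col w = true ∧ lt lo w ∧ lt w hi ∧ (R w d₁ ↔ P₁) ∧ (R w d₂ ↔ P₂) := by
    intro lo hi hclo hchi hlh hin P₁ P₂ hsh
    rcases hsh with ⟨h1, h2⟩ | ⟨h1, h2⟩
    · obtain ⟨w, hwc, hw1, hw2, hwbit⟩ := hdsol d₁ hcd₁ t₁ lo hi hclo hchi hlh
      have hnB : ¬ (R w d₂ ↔ t₂) := fun hiff =>
        hbad w hwc (hin w hw1 hw2).1 (hin w hw1 hw2).2 ⟨hwbit, hiff⟩
      exact ⟨w, hwc, hw1, hw2, hwbit.trans h1.symm,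
        (iff_resolve' _ _ hnB).trans h2.symm⟩
    · obtain ⟨w, hwc, hw1, hw2, hwbit⟩ := hdsol d₂ hcd₂ t₂ lo hi hclo hchi hlh
      have hnB : ¬ (R w d₁ ↔ t₁) := fun hiff =>
        hbad w hwc (hin w hw1 hw2).1 (hin w hw1 hw2).2 ⟨hiff, hwbit⟩
      exact ⟨w, hwc, hw1, hw2, (iff_resolve' _ _ hnB).trans h1.symm,
        hwbit.trans h2.symm⟩
  -- the main transfer lemma T1: no A-row point lies between two BC-row points
  have hT1 : ∀ f₁ f₂ : X, col f₁ = false → col f₂ = false → lt f₁ f₂ →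
      ∀ u v : X, col u = true → col v = true →
      (((R u f₁ ↔ t₁) ∧ (R u f₂ ↔ ¬t₂)) ∨ ((R u f₁ ↔ ¬t₁) ∧ (R u f₂ ↔ t₂))) →
      (((R v f₁ ↔ t₁) ∧ (R v f₂ ↔ ¬t₂)) ∨ ((R v f₁ ↔ ¬t₁) ∧ (R v f₂ ↔ t₂))) →
      lt u v → ∀ w, col w = true → (R w f₁ ↔ t₁) → (R w f₂ ↔ t₂) →
      ¬ (lt u w ∧ lt w v) := by
    intro f₁ f₂ hf₁ hf₂ hff u v hcu hcv hu hv huv w hcw hw1 hw2 ⟨huw, hwv⟩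
    obtain ⟨m, hmc, hm1, hm2, -⟩ := hdsol d₁ hcd₁ True e₁ e₂ hce₁ hce₂ he12
    obtain ⟨uh, huhc, huh1, huh2, huhb1, huhb2⟩ := getBC e₁ m hce₁ hmc hm1
      (fun x h1 h2 => ⟨h1, htrans h2 hm2⟩) (R u f₁) (R u f₂) hu
    obtain ⟨vh, hvhc, hvh1, hvh2, hvhb1, hvhb2⟩ := getBC uh m huhc hmc huh2
      (fun x h1 h2 => ⟨htrans huh1 h1, htrans h2 hm2⟩) (R v f₁) (R v f₂) hv
    obtain ⟨g, hgl, hgc, hgR, hga, hgb, hgu, hgv⟩ := hmap4 d₁ d₂ uh vh f₁ f₂ u v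
      hcd₁ hcd₂ huhc hvhc hf₁ hf₂ hcu hcv hd12 hvh1 hff huv huhb1 huhb2 hvhb1 hvhb2
    set w' := g.symm w with hw'
    have hgw : g w' = w := g.apply_symm_apply w
    have hcw' : col w' = true := by
      have := hgc w'; rw [hgw] at this; rw [← this, hcw]
    have hlt1 : lt uh w' := by
      rw [hgl uh w', hgu, hgw]; exact huw
    have hlt2 : lt w' vh := by
      rw [hgl w' vh, hgv, hgw]; exact hwv
    have hb1 : R w' d₁ ↔ t₁ := by
      rw [hgR w' d₁, hgw, hga]; exact hw1
    have hb2 : R w' d₂ ↔ t₂ := by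
      rw [hgR w' d₂, hgw, hgb]; exact hw2
    exact hbad w' hcw' (htrans huh1 hlt1) (htrans hlt2 (htrans hvh2 hm2)) ⟨hb1, hb2⟩
  -- an A-row point for the base pair, and the protected zone next to it
  obtain ⟨w0, hw0c, hw0b1, hw0b2⟩ := exA d₁ d₂ hcd₁ hcd₂ hd12 t₁ t₂
  have hside : (∀ z, col z = true →
      (((R z d₁ ↔ t₁) ∧ (R z d₂ ↔ ¬t₂)) ∨ ((R z d₁ ↔ ¬t₁) ∧ (R z d₂ ↔ t₂))) → lt z w0) ∨
      (∀ z, col z = true →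
      (((R z d₁ ↔ t₁) ∧ (R z d₂ ↔ ¬t₂)) ∨ ((R z d₁ ↔ ¬t₁) ∧ (R z d₂ ↔ t₂))) → lt w0 z) := by
    by_contra hn
    push_neg at hn
    obtain ⟨⟨z₁, hz₁c, hz₁m, hz₁n⟩, ⟨z₂, hz₂c, hz₂m, hz₂n⟩⟩ := hn
    have hdisj : ∀ z, (((R z d₁ ↔ t₁) ∧ (R z d₂ ↔ ¬t₂)) ∨
        ((R z d₁ ↔ ¬t₁) ∧ (R z d₂ ↔ t₂))) → z ≠ w0 := by
      intro z hz he; subst he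
      rcases hz with ⟨k1, k2⟩ | ⟨k1, k2⟩
      · exact iff_not_self (hw0b2.symm.trans k2)
      · exact iff_not_self (hw0b1.symm.trans k1)
    have hne₁ : z₁ ≠ w0 := hdisj z₁ hz₁m
    have hne₂ : z₂ ≠ w0 := hdisj z₂ hz₂m
    have hl₁ : lt w0 z₁ := (htot z₁ w0 hne₁).resolve_left hz₁n
    have hl₂ : lt z₂ w0 := (htot w0 z₂ (Ne.symm hne₂)).resolve_left hz₂n
    exact hT1 d₁ d₂ hcd₁ hcd₂ hd12 z₂ z₁ hz₂c hz₁c hz₂m hz₁m (htrans hl₂ hl₁)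
      w0 hw0c hw0b1 hw0b2 ⟨hl₂, hl₁⟩
  -- zone (p₁,p₂): an interval free of BC-points for the base pair
  obtain ⟨p₁, p₂, hp₁c, hp₂c, hpp, hzone⟩ : ∃ p₁ p₂, col p₁ = true ∧ col p₂ = true ∧
      lt p₁ p₂ ∧ ∀ z, col z = true → lt p₁ z → lt z p₂ →
      ¬ (((R z d₁ ↔ t₁) ∧ (R z d₂ ↔ ¬t₂)) ∨ ((R z d₁ ↔ ¬t₁) ∧ (R z d₂ ↔ t₂))) := by
    rcases hside with hS | hS
    · obtain ⟨p₂, hp₂c, hp₂l⟩ := hsolA w0 hw0c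
      exact ⟨w0, p₂, hw0c, hp₂c, hp₂l,
        fun z hz h1 h2 hbc => asym h1 (hS z hz hbc)⟩
    · obtain ⟨p₁, hp₁c, hp₁l⟩ := hsolB w0 hw0c
      exact ⟨p₁, w0, hp₁c, hw0c, hp₁l,
        fun z hz h1 h2 hbc => asym h2 (hS z hz hbc)⟩
  -- witness extraction inside the zone: points with prescribed AD-rows
  have getAD : ∀ lo hi : X, col lo = true → col hi = true → lt lo hi →
      (∀ x, lt lo x → lt x hi → lt p₁ x ∧ lt x p₂) →
      ∀ P₁ P₂ : Prop, (((P₁ ↔ t₁) ∧ (P₂ ↔ t₂)) ∨ ((P₁ ↔ ¬t₁) ∧ (P₂ ↔ ¬t₂))) →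
      ∃ w, col w = true ∧ lt lo w ∧ lt w hi ∧ (R w d₁ ↔ P₁) ∧ (R w d₂ ↔ P₂) := by
    intro lo hi hclo hchi hlh hin P₁ P₂ hsh
    rcases hsh with ⟨h1, h2⟩ | ⟨h1, h2⟩
    · obtain ⟨w, hwc, hw1, hw2, hwbit⟩ := hdsol d₁ hcd₁ t₁ lo hi hclo hchi hlh
      have hnBC := hzone w hwc (hin w hw1 hw2).1 (hin w hw1 hw2).2
      have k : ¬ (R w d₂ ↔ ¬ t₂) := fun hk => hnBC (Or.inl ⟨hwbit, hk⟩)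
      exact ⟨w, hwc, hw1, hw2, hwbit.trans h1.symm,
        (iff_resolve _ _ k).trans h2.symm⟩
    · obtain ⟨w, hwc, hw1, hw2, hwbit⟩ := hdsol d₁ hcd₁ (¬t₁) lo hi hclo hchi hlh
      have hnBC := hzone w hwc (hin w hw1 hw2).1 (hin w hw1 hw2).2
      have k : ¬ (R w d₂ ↔ t₂) := fun hk => hnBC (Or.inr ⟨hwbit, hk⟩)
      exact ⟨w, hwc, hw1, hw2, hwbit.trans h1.symm,
        (iff_resolve' _ _ k).trans h2.symm⟩
  -- transfer lemma T2: no BC-row point lies between two AD-row points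
  have hT2 : ∀ f₁ f₂ : X, col f₁ = false → col f₂ = false → lt f₁ f₂ →
      ∀ u v : X, col u = true → col v = true →
      (((R u f₁ ↔ t₁) ∧ (R u f₂ ↔ t₂)) ∨ ((R u f₁ ↔ ¬t₁) ∧ (R u f₂ ↔ ¬t₂))) →
      (((R v f₁ ↔ t₁) ∧ (R v f₂ ↔ t₂)) ∨ ((R v f₁ ↔ ¬t₁) ∧ (R v f₂ ↔ ¬t₂))) →
      lt u v → ∀ z, col z = true →
      (((R z f₁ ↔ t₁) ∧ (R z f₂ ↔ ¬t₂)) ∨ ((R z f₁ ↔ ¬t₁) ∧ (R z f₂ ↔ t₂))) →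
      ¬ (lt u z ∧ lt z v) := by
    intro f₁ f₂ hf₁ hf₂ hff u v hcu hcv hu hv huv z hcz hz ⟨huz, hzv⟩
    obtain ⟨uh, huhc, huh1, huh2, huhb1, huhb2⟩ := getAD p₁ p₂ hp₁c hp₂c hpp
      (fun x h1 h2 => ⟨h1, h2⟩) (R u f₁) (R u f₂) hu
    obtain ⟨vh, hvhc, hvh1, hvh2, hvhb1, hvhb2⟩ := getAD uh p₂ huhc hp₂c huh2
      (fun x h1 h2 => ⟨htrans huh1 h1, h2⟩) (R v f₁) (R v f₂) hv
    obtain ⟨g, hgl, hgc, hgR, hga, hgb, hgu, hgv⟩ := hmap4 d₁ d₂ uh vh f₁ f₂ u v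
      hcd₁ hcd₂ huhc hvhc hf₁ hf₂ hcu hcv hd12 hvh1 hff huv huhb1 huhb2 hvhb1 hvhb2
    set z' := g.symm z with hz'
    have hgz : g z' = z := g.apply_symm_apply z
    have hcz' : col z' = true := by
      have := hgc z'; rw [hgz] at this; rw [← this, hcz]
    have hlt1 : lt uh z' := by rw [hgl uh z', hgu, hgz]; exact huz
    have hlt2 : lt z' vh := by rw [hgl z' vh, hgv, hgz]; exact hzv
    have hb1 : R z' d₁ ↔ R z f₁ := by rw [hgR z' d₁, hgz, hga]
    have hb2 : R z' d₂ ↔ R z f₂ := by rw [hgR z' d₂, hgz, hgb]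
    refine hzone z' hcz' (htrans huh1 hlt1) (htrans hlt2 hvh2) ?_
    rcases hz with ⟨k1, k2⟩ | ⟨k1, k2⟩
    · exact Or.inl ⟨hb1.trans k1, hb2.trans k2⟩
    · exact Or.inr ⟨hb1.trans k1, hb2.trans k2⟩
  -- separation: for any constraint pair, the AD-rows and BC-rows are totally separated
  have hSep : ∀ f₁ f₂ : X, col f₁ = false → col f₂ = false → lt f₁ f₂ →
      (∀ s z, col s = true → col z = true →
        (((R s f₁ ↔ t₁) ∧ (R s f₂ ↔ t₂)) ∨ ((R s f₁ ↔ ¬t₁) ∧ (R s f₂ ↔ ¬t₂))) →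
        (((R z f₁ ↔ t₁) ∧ (R z f₂ ↔ ¬t₂)) ∨ ((R z f₁ ↔ ¬t₁) ∧ (R z f₂ ↔ t₂))) →
        lt z s) ∨
      (∀ s z, col s = true → col z = true →
        (((R s f₁ ↔ t₁) ∧ (R s f₂ ↔ t₂)) ∨ ((R s f₁ ↔ ¬t₁) ∧ (R s f₂ ↔ ¬t₂))) →
        (((R z f₁ ↔ t₁) ∧ (R z f₂ ↔ ¬t₂)) ∨ ((R z f₁ ↔ ¬t₁) ∧ (R z f₂ ↔ t₂))) →
        lt s z) := by
    intro f₁ f₂ hf₁ hf₂ hff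
    obtain ⟨a, hac, hab1, hab2⟩ := exA f₁ f₂ hf₁ hf₂ hff t₁ t₂
    have hdisj2 : ∀ x : X,
        (((R x f₁ ↔ t₁) ∧ (R x f₂ ↔ t₂)) ∨ ((R x f₁ ↔ ¬t₁) ∧ (R x f₂ ↔ ¬t₂))) →
        (((R x f₁ ↔ t₁) ∧ (R x f₂ ↔ ¬t₂)) ∨ ((R x f₁ ↔ ¬t₁) ∧ (R x f₂ ↔ t₂))) →
        False := by
      intro x hx hy
      rcases hx with ⟨k1, k2⟩ | ⟨k1, k2⟩ <;> rcases hy with ⟨l1, l2⟩ | ⟨l1, l2⟩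
      · exact iff_not_self (k2.symm.trans l2)
      · exact iff_not_self (k1.symm.trans l1)
      · exact iff_not_self (l1.symm.trans k1)
      · exact iff_not_self (l2.symm.trans k2)
    have haside : (∀ z, col z = true →
        (((R z f₁ ↔ t₁) ∧ (R z f₂ ↔ ¬t₂)) ∨ ((R z f₁ ↔ ¬t₁) ∧ (R z f₂ ↔ t₂))) → lt z a) ∨
        (∀ z, col z = true →
        (((R z f₁ ↔ t₁) ∧ (R z f₂ ↔ ¬t₂)) ∨ ((R z f₁ ↔ ¬t₁) ∧ (R z f₂ ↔ t₂))) → lt a z) := by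
      by_contra hn
      push_neg at hn
      obtain ⟨⟨z₁, hz₁c, hz₁m, hz₁n⟩, ⟨z₂, hz₂c, hz₂m, hz₂n⟩⟩ := hn
      have hne₁ : z₁ ≠ a := fun he => hdisj2 z₁ (he ▸ Or.inl ⟨hab1, hab2⟩) hz₁m
      have hne₂ : z₂ ≠ a := fun he => hdisj2 z₂ (he ▸ Or.inl ⟨hab1, hab2⟩) hz₂m
      have hl₁ : lt a z₁ := (htot z₁ a hne₁).resolve_left hz₁n
      have hl₂ : lt z₂ a := (htot a z₂ (Ne.symm hne₂)).resolve_left hz₂n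
      exact hT1 f₁ f₂ hf₁ hf₂ hff z₂ z₁ hz₂c hz₁c hz₂m hz₁m (htrans hl₂ hl₁)
        a hac hab1 hab2 ⟨hl₂, hl₁⟩
    have pwAD : ∀ s, col s = true →
        (((R s f₁ ↔ t₁) ∧ (R s f₂ ↔ t₂)) ∨ ((R s f₁ ↔ ¬t₁) ∧ (R s f₂ ↔ ¬t₂))) →
        ∀ u v, col u = true → col v = true →
        (((R u f₁ ↔ t₁) ∧ (R u f₂ ↔ ¬t₂)) ∨ ((R u f₁ ↔ ¬t₁) ∧ (R u f₂ ↔ t₂))) →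
        (((R v f₁ ↔ t₁) ∧ (R v f₂ ↔ ¬t₂)) ∨ ((R v f₁ ↔ ¬t₁) ∧ (R v f₂ ↔ t₂))) →
        lt u s → lt s v → False := by
      intro s hcs hs u v hcu hcv hu hv hus hsv
      rcases hs with hsA | hsD
      · exact hT1 f₁ f₂ hf₁ hf₂ hff u v hcu hcv hu hv (htrans hus hsv)
          s hcs hsA.1 hsA.2 ⟨hus, hsv⟩
      · rcases haside with hS | hS
        · have hva : lt v a := hS v hcv hv
          exact hT2 f₁ f₂ hf₁ hf₂ hff s a hcs hac (Or.inr hsD)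
            (Or.inl ⟨hab1, hab2⟩) (htrans hsv hva) v hcv hv ⟨hsv, hva⟩
        · have hau : lt a u := hS u hcu hu
          exact hT2 f₁ f₂ hf₁ hf₂ hff a s hac hcs (Or.inl ⟨hab1, hab2⟩)
            (Or.inr hsD) (htrans hau hus) u hcu hu ⟨hau, hus⟩
    by_contra hn
    push_neg at hn
    obtain ⟨⟨s₀, z₀, hcs₀, hcz₀, hs₀, hz₀, hn₀⟩, ⟨s₁, z₁, hcs₁, hcz₁, hs₁, hz₁, hn₁⟩⟩ := hn
    have hne₀ : z₀ ≠ s₀ := fun he => hdisj2 z₀ (he ▸ hs₀) hz₀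
    have hl₀ : lt s₀ z₀ := (htot z₀ s₀ hne₀).resolve_left hn₀
    have hne₁ : s₁ ≠ z₁ := fun he => hdisj2 s₁ hs₁ (he ▸ hz₁)
    have hl₁ : lt z₁ s₁ := (htot s₁ z₁ hne₁).resolve_left hn₁
    -- no AD-point above z₀
    have hA : ∀ z, col z = true →
        (((R z f₁ ↔ t₁) ∧ (R z f₂ ↔ t₂)) ∨ ((R z f₁ ↔ ¬t₁) ∧ (R z f₂ ↔ ¬t₂))) →
        ¬ lt z₀ z := fun z hz haz hlt =>
      hT2 f₁ f₂ hf₁ hf₂ hff s₀ z hcs₀ hz hs₀ haz (htrans hl₀ hlt) z₀ hcz₀ hz₀ ⟨hl₀, hlt⟩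
    -- no BC-point above s₁
    have hB : ∀ z, col z = true →
        (((R z f₁ ↔ t₁) ∧ (R z f₂ ↔ ¬t₂)) ∨ ((R z f₁ ↔ ¬t₁) ∧ (R z f₂ ↔ t₂))) →
        ¬ lt s₁ z := fun z hz hbz hlt =>
      pwAD s₁ hcs₁ hs₁ z₁ z hcz₁ hz hz₁ hbz hl₁ hlt
    have hne₂ : z₀ ≠ s₁ := fun he => hdisj2 z₀ (he ▸ hs₁) hz₀
    rcases htot z₀ s₁ hne₂ with h | h
    · exact hA s₁ hcs₁ hs₁ h
    · exact hB z₀ hcz₀ hz₀ h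
  -- transfer of the separation direction between constraint pairs
  have hDirT : ∀ f₁ f₂ f₁' f₂' : X, col f₁ = false → col f₂ = false →
      col f₁' = false → col f₂' = false → lt f₁ f₂ → lt f₁' f₂' →
      (∀ s z, col s = true → col z = true →
        (((R s f₁ ↔ t₁) ∧ (R s f₂ ↔ t₂)) ∨ ((R s f₁ ↔ ¬t₁) ∧ (R s f₂ ↔ ¬t₂))) →
        (((R z f₁ ↔ t₁) ∧ (R z f₂ ↔ ¬t₂)) ∨ ((R z f₁ ↔ ¬t₁) ∧ (R z f₂ ↔ t₂))) →
        lt z s) →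
      (∀ s z, col s = true → col z = true →
        (((R s f₁' ↔ t₁) ∧ (R s f₂' ↔ t₂)) ∨ ((R s f₁' ↔ ¬t₁) ∧ (R s f₂' ↔ ¬t₂))) →
        (((R z f₁' ↔ t₁) ∧ (R z f₂' ↔ ¬t₂)) ∨ ((R z f₁' ↔ ¬t₁) ∧ (R z f₂' ↔ t₂))) →
        lt z s) := by
    intro f₁ f₂ f₁' f₂' hf₁ hf₂ hf₁' hf₂' hff hff' hdir s z hcs hcz hs hz
    obtain ⟨g, hgl, hgc, hgR, hga, hgb⟩ := hmap2 f₁ f₂ f₁' f₂' hf₁ hf₂ hf₁' hf₂' hff hff'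
    have hgs : g (g.symm s) = s := g.apply_symm_apply s
    have hgz : g (g.symm z) = z := g.apply_symm_apply z
    have hcs0 : col (g.symm s) = true := by
      have := hgc (g.symm s); rw [hgs] at this; rw [← this, hcs]
    have hcz0 : col (g.symm z) = true := by
      have := hgc (g.symm z); rw [hgz] at this; rw [← this, hcz]
    have hsb1 : R (g.symm s) f₁ ↔ R s f₁' := by rw [hgR (g.symm s) f₁, hgs, hga]
    have hsb2 : R (g.symm s) f₂ ↔ R s f₂' := by rw [hgR (g.symm s) f₂, hgs, hgb]
    have hzb1 : R (g.symm z) f₁ ↔ R z f₁' := by rw [hgR (g.symm z) f₁, hgz, hga]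
    have hzb2 : R (g.symm z) f₂ ↔ R z f₂' := by rw [hgR (g.symm z) f₂, hgz, hgb]
    have hs0 : ((R (g.symm s) f₁ ↔ t₁) ∧ (R (g.symm s) f₂ ↔ t₂)) ∨
        ((R (g.symm s) f₁ ↔ ¬t₁) ∧ (R (g.symm s) f₂ ↔ ¬t₂)) := by
      rcases hs with ⟨k1, k2⟩ | ⟨k1, k2⟩
      · exact Or.inl ⟨hsb1.trans k1, hsb2.trans k2⟩
      · exact Or.inr ⟨hsb1.trans k1, hsb2.trans k2⟩
    have hz0 : ((R (g.symm z) f₁ ↔ t₁) ∧ (R (g.symm z) f₂ ↔ ¬t₂)) ∨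
        ((R (g.symm z) f₁ ↔ ¬t₁) ∧ (R (g.symm z) f₂ ↔ t₂)) := by
      rcases hz with ⟨k1, k2⟩ | ⟨k1, k2⟩
      · exact Or.inl ⟨hzb1.trans k1, hzb2.trans k2⟩
      · exact Or.inr ⟨hzb1.trans k1, hzb2.trans k2⟩
    have hlt0 := hdir (g.symm s) (g.symm z) hcs0 hcz0 hs0 hz0
    have := (hgl (g.symm z) (g.symm s)).mp hlt0
    rwa [hgz, hgs] at this
  have hDirT' : ∀ f₁ f₂ f₁' f₂' : X, col f₁ = false → col f₂ = false →
      col f₁' = false → col f₂' = false → lt f₁ f₂ → lt f₁' f₂' →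
      (∀ s z, col s = true → col z = true →
        (((R s f₁ ↔ t₁) ∧ (R s f₂ ↔ t₂)) ∨ ((R s f₁ ↔ ¬t₁) ∧ (R s f₂ ↔ ¬t₂))) →
        (((R z f₁ ↔ t₁) ∧ (R z f₂ ↔ ¬t₂)) ∨ ((R z f₁ ↔ ¬t₁) ∧ (R z f₂ ↔ t₂))) →
        lt s z) →
      (∀ s z, col s = true → col z = true →
        (((R s f₁' ↔ t₁) ∧ (R s f₂' ↔ t₂)) ∨ ((R s f₁' ↔ ¬t₁) ∧ (R s f₂' ↔ ¬t₂))) →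
        (((R z f₁' ↔ t₁) ∧ (R z f₂' ↔ ¬t₂)) ∨ ((R z f₁' ↔ ¬t₁) ∧ (R z f₂' ↔ t₂))) →
        lt s z) := by
    intro f₁ f₂ f₁' f₂' hf₁ hf₂ hf₁' hf₂' hff hff' hdir s z hcs hcz hs hz
    obtain ⟨g, hgl, hgc, hgR, hga, hgb⟩ := hmap2 f₁ f₂ f₁' f₂' hf₁ hf₂ hf₁' hf₂' hff hff'
    have hgs : g (g.symm s) = s := g.apply_symm_apply s
    have hgz : g (g.symm z) = z := g.apply_symm_apply z
    have hcs0 : col (g.symm s) = true := by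
      have := hgc (g.symm s); rw [hgs] at this; rw [← this, hcs]
    have hcz0 : col (g.symm z) = true := by
      have := hgc (g.symm z); rw [hgz] at this; rw [← this, hcz]
    have hsb1 : R (g.symm s) f₁ ↔ R s f₁' := by rw [hgR (g.symm s) f₁, hgs, hga]
    have hsb2 : R (g.symm s) f₂ ↔ R s f₂' := by rw [hgR (g.symm s) f₂, hgs, hgb]
    have hzb1 : R (g.symm z) f₁ ↔ R z f₁' := by rw [hgR (g.symm z) f₁, hgz, hga]
    have hzb2 : R (g.symm z) f₂ ↔ R z f₂' := by rw [hgR (g.symm z) f₂, hgz, hgb]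
    have hs0 : ((R (g.symm s) f₁ ↔ t₁) ∧ (R (g.symm s) f₂ ↔ t₂)) ∨
        ((R (g.symm s) f₁ ↔ ¬t₁) ∧ (R (g.symm s) f₂ ↔ ¬t₂)) := by
      rcases hs with ⟨k1, k2⟩ | ⟨k1, k2⟩
      · exact Or.inl ⟨hsb1.trans k1, hsb2.trans k2⟩
      · exact Or.inr ⟨hsb1.trans k1, hsb2.trans k2⟩
    have hz0 : ((R (g.symm z) f₁ ↔ t₁) ∧ (R (g.symm z) f₂ ↔ ¬t₂)) ∨
        ((R (g.symm z) f₁ ↔ ¬t₁) ∧ (R (g.symm z) f₂ ↔ t₂)) := by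
      rcases hz with ⟨k1, k2⟩ | ⟨k1, k2⟩
      · exact Or.inl ⟨hzb1.trans k1, hzb2.trans k2⟩
      · exact Or.inr ⟨hzb1.trans k1, hzb2.trans k2⟩
    have hlt0 := hdir (g.symm s) (g.symm z) hcs0 hcz0 hs0 hz0
    have := (hgl (g.symm s) (g.symm z)).mp hlt0
    rwa [hgz, hgs] at this
  -- min/max of three points
  have step2min : ∀ p q : X, ∃ m, (m = p ∨ m = q) ∧ ¬ lt p m ∧ ¬ lt q m := by
    intro p q
    by_cases h : lt p q
    · exact ⟨p, Or.inl rfl, hirr p, asym h⟩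
    · exact ⟨q, Or.inr rfl, h, hirr q⟩
  have step2max : ∀ p q : X, ∃ m, (m = p ∨ m = q) ∧ ¬ lt m p ∧ ¬ lt m q := by
    intro p q
    by_cases h : lt p q
    · exact ⟨q, Or.inr rfl, asym h, hirr q⟩
    · exact ⟨p, Or.inl rfl, hirr p, h⟩
  have min3 : ∀ p q r : X, col p = true → col q = true → col r = true →
      ∃ m, col m = true ∧ ¬ lt p m ∧ ¬ lt q m ∧ ¬ lt r m := by
    intro p q r hp hq hr
    obtain ⟨m1, hm1e, h1p, h1q⟩ := step2min p q
    obtain ⟨m2, hm2e, h2m, h2r⟩ := step2min m1 r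
    have hcm2 : col m2 = true := by
      rcases hm2e with rfl | rfl
      · rcases hm1e with rfl | rfl
        · exact hp
        · exact hq
      · exact hr
    exact ⟨m2, hcm2, hge_trans h1p h2m, hge_trans h1q h2m, h2r⟩
  have max3 : ∀ p q r : X, col p = true → col q = true → col r = true →
      ∃ m, col m = true ∧ ¬ lt m p ∧ ¬ lt m q ∧ ¬ lt m r := by
    intro p q r hp hq hr
    obtain ⟨m1, hm1e, h1p, h1q⟩ := step2max p q
    obtain ⟨m2, hm2e, h2m, h2r⟩ := step2max m1 r
    have hcm2 : col m2 = true := by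
      rcases hm2e with rfl | rfl
      · rcases hm1e with rfl | rfl
        · exact hp
        · exact hq
      · exact hr
    exact ⟨m2, hcm2, hge_trans h2m h1p, hge_trans h2m h1q, h2r⟩
  -- the endgame: three constraint points, pairwise separation with a common
  -- direction, and a solution point beyond all the relevant witnesses
  obtain ⟨f₃, hf₃c, hf₃l⟩ := hconA d₂ hcd₂
  have h13 : lt d₁ f₃ := htrans hd12 hf₃l
  rcases hSep d₁ d₂ hcd₁ hcd₂ hd12 with hdir | hdir
  · -- BC-rows lie below AD-rows, at every constraint pair
    have hdir13 := hDirT d₁ d₂ d₁ f₃ hcd₁ hcd₂ hcd₁ hf₃c hd12 h13 hdir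
    have hdir23 := hDirT d₁ d₂ d₂ f₃ hcd₁ hcd₂ hcd₂ hf₃c hd12 hf₃l hdir
    by_cases hσ : (t₁ ↔ t₂)
    · obtain ⟨b12, hc12, hb12a, hb12b⟩ := exA d₁ d₂ hcd₁ hcd₂ hd12 t₁ (¬t₂)
      obtain ⟨b13, hc13, hb13a, hb13b⟩ := exA d₁ f₃ hcd₁ hf₃c h13 t₁ (¬t₂)
      obtain ⟨b23, hc23, hb23a, hb23b⟩ := exA d₂ f₃ hcd₂ hf₃c hf₃l t₁ (¬t₂)
      obtain ⟨m, hmc, hm1, hm2, hm3⟩ := min3 b12 b13 b23 hc12 hc13 hc23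
      obtain ⟨x, hxc, hxm⟩ := hsolB m hmc
      have hx12 : lt x b12 := lt_of_lt_nlt hxm hm1
      have hx13 : lt x b13 := lt_of_lt_nlt hxm hm2
      have hx23 : lt x b23 := lt_of_lt_nlt hxm hm3
      have hBC12 : ((R x d₁ ↔ t₁) ∧ (R x d₂ ↔ ¬t₂)) ∨
          ((R x d₁ ↔ ¬t₁) ∧ (R x d₂ ↔ t₂)) := by
        rcases classify4 (R x d₁) (R x d₂) t₁ t₂ with hAD | hBC
        · exact absurd (hdir x b12 hxc hc12 hAD (Or.inl ⟨hb12a, hb12b⟩)) (asym hx12)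
        · exact hBC
      have hBC13 : ((R x d₁ ↔ t₁) ∧ (R x f₃ ↔ ¬t₂)) ∨
          ((R x d₁ ↔ ¬t₁) ∧ (R x f₃ ↔ t₂)) := by
        rcases classify4 (R x d₁) (R x f₃) t₁ t₂ with hAD | hBC
        · exact absurd (hdir13 x b13 hxc hc13 hAD (Or.inl ⟨hb13a, hb13b⟩)) (asym hx13)
        · exact hBC
      have hBC23 : ((R x d₂ ↔ t₁) ∧ (R x f₃ ↔ ¬t₂)) ∨
          ((R x d₂ ↔ ¬t₁) ∧ (R x f₃ ↔ t₂)) := by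
        rcases classify4 (R x d₂) (R x f₃) t₁ t₂ with hAD | hBC
        · exact absurd (hdir23 x b23 hxc hc23 hAD (Or.inl ⟨hb23a, hb23b⟩)) (asym hx23)
        · exact hBC
      exact finBC (R x d₁) (R x d₂) (R x f₃) t₁ t₂ hσ hBC12 hBC13 hBC23
    · obtain ⟨a12, hc12, ha12a, ha12b⟩ := exA d₁ d₂ hcd₁ hcd₂ hd12 t₁ t₂
      obtain ⟨a13, hc13, ha13a, ha13b⟩ := exA d₁ f₃ hcd₁ hf₃c h13 t₁ t₂
      obtain ⟨a23, hc23, ha23a, ha23b⟩ := exA d₂ f₃ hcd₂ hf₃c hf₃l t₁ t₂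
      obtain ⟨m, hmc, hm1, hm2, hm3⟩ := max3 a12 a13 a23 hc12 hc13 hc23
      obtain ⟨x, hxc, hxm⟩ := hsolA m hmc
      have hx12 : lt a12 x := lt_of_nlt_lt hm1 hxm
      have hx13 : lt a13 x := lt_of_nlt_lt hm2 hxm
      have hx23 : lt a23 x := lt_of_nlt_lt hm3 hxm
      have hAD12 : ((R x d₁ ↔ t₁) ∧ (R x d₂ ↔ t₂)) ∨
          ((R x d₁ ↔ ¬t₁) ∧ (R x d₂ ↔ ¬t₂)) := by
        rcases classify4 (R x d₁) (R x d₂) t₁ t₂ with hAD | hBC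
        · exact hAD
        · exact absurd (hdir a12 x hc12 hxc (Or.inl ⟨ha12a, ha12b⟩) hBC) (asym hx12)
      have hAD13 : ((R x d₁ ↔ t₁) ∧ (R x f₃ ↔ t₂)) ∨
          ((R x d₁ ↔ ¬t₁) ∧ (R x f₃ ↔ ¬t₂)) := by
        rcases classify4 (R x d₁) (R x f₃) t₁ t₂ with hAD | hBC
        · exact hAD
        · exact absurd (hdir13 a13 x hc13 hxc (Or.inl ⟨ha13a, ha13b⟩) hBC) (asym hx13)
      have hAD23 : ((R x d₂ ↔ t₁) ∧ (R x f₃ ↔ t₂)) ∨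
          ((R x d₂ ↔ ¬t₁) ∧ (R x f₃ ↔ ¬t₂)) := by
        rcases classify4 (R x d₂) (R x f₃) t₁ t₂ with hAD | hBC
        · exact hAD
        · exact absurd (hdir23 a23 x hc23 hxc (Or.inl ⟨ha23a, ha23b⟩) hBC) (asym hx23)
      exact finAD (R x d₁) (R x d₂) (R x f₃) t₁ t₂ hσ hAD12 hAD13 hAD23
  · -- AD-rows lie below BC-rows, at every constraint pair
    have hdir13 := hDirT' d₁ d₂ d₁ f₃ hcd₁ hcd₂ hcd₁ hf₃c hd12 h13 hdir
    have hdir23 := hDirT' d₁ d₂ d₂ f₃ hcd₁ hcd₂ hcd₂ hf₃c hd12 hf₃l hdir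
    by_cases hσ : (t₁ ↔ t₂)
    · obtain ⟨b12, hc12, hb12a, hb12b⟩ := exA d₁ d₂ hcd₁ hcd₂ hd12 t₁ (¬t₂)
      obtain ⟨b13, hc13, hb13a, hb13b⟩ := exA d₁ f₃ hcd₁ hf₃c h13 t₁ (¬t₂)
      obtain ⟨b23, hc23, hb23a, hb23b⟩ := exA d₂ f₃ hcd₂ hf₃c hf₃l t₁ (¬t₂)
      obtain ⟨m, hmc, hm1, hm2, hm3⟩ := max3 b12 b13 b23 hc12 hc13 hc23
      obtain ⟨x, hxc, hxm⟩ := hsolA m hmc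
      have hx12 : lt b12 x := lt_of_nlt_lt hm1 hxm
      have hx13 : lt b13 x := lt_of_nlt_lt hm2 hxm
      have hx23 : lt b23 x := lt_of_nlt_lt hm3 hxm
      have hBC12 : ((R x d₁ ↔ t₁) ∧ (R x d₂ ↔ ¬t₂)) ∨
          ((R x d₁ ↔ ¬t₁) ∧ (R x d₂ ↔ t₂)) := by
        rcases classify4 (R x d₁) (R x d₂) t₁ t₂ with hAD | hBC
        · exact absurd (hdir x b12 hxc hc12 hAD (Or.inl ⟨hb12a, hb12b⟩)) (asym hx12)
        · exact hBC
      have hBC13 : ((R x d₁ ↔ t₁) ∧ (R x f₃ ↔ ¬t₂)) ∨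
          ((R x d₁ ↔ ¬t₁) ∧ (R x f₃ ↔ t₂)) := by
        rcases classify4 (R x d₁) (R x f₃) t₁ t₂ with hAD | hBC
        · exact absurd (hdir13 x b13 hxc hc13 hAD (Or.inl ⟨hb13a, hb13b⟩)) (asym hx13)
        · exact hBC
      have hBC23 : ((R x d₂ ↔ t₁) ∧ (R x f₃ ↔ ¬t₂)) ∨
          ((R x d₂ ↔ ¬t₁) ∧ (R x f₃ ↔ t₂)) := by
        rcases classify4 (R x d₂) (R x f₃) t₁ t₂ with hAD | hBC
        · exact absurd (hdir23 x b23 hxc hc23 hAD (Or.inl ⟨hb23a, hb23b⟩)) (asym hx23)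
        · exact hBC
      exact finBC (R x d₁) (R x d₂) (R x f₃) t₁ t₂ hσ hBC12 hBC13 hBC23
    · obtain ⟨a12, hc12, ha12a, ha12b⟩ := exA d₁ d₂ hcd₁ hcd₂ hd12 t₁ t₂
      obtain ⟨a13, hc13, ha13a, ha13b⟩ := exA d₁ f₃ hcd₁ hf₃c h13 t₁ t₂
      obtain ⟨a23, hc23, ha23a, ha23b⟩ := exA d₂ f₃ hcd₂ hf₃c hf₃l t₁ t₂
      obtain ⟨m, hmc, hm1, hm2, hm3⟩ := min3 a12 a13 a23 hc12 hc13 hc23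
      obtain ⟨x, hxc, hxm⟩ := hsolB m hmc
      have hx12 : lt x a12 := lt_of_lt_nlt hxm hm1
      have hx13 : lt x a13 := lt_of_lt_nlt hxm hm2
      have hx23 : lt x a23 := lt_of_lt_nlt hxm hm3
      have hAD12 : ((R x d₁ ↔ t₁) ∧ (R x d₂ ↔ t₂)) ∨
          ((R x d₁ ↔ ¬t₁) ∧ (R x d₂ ↔ ¬t₂)) := by
        rcases classify4 (R x d₁) (R x d₂) t₁ t₂ with hAD | hBC
        · exact hAD
        · exact absurd (hdir a12 x hc12 hxc (Or.inl ⟨ha12a, ha12b⟩) hBC) (asym hx12)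
      have hAD13 : ((R x d₁ ↔ t₁) ∧ (R x f₃ ↔ t₂)) ∨
          ((R x d₁ ↔ ¬t₁) ∧ (R x f₃ ↔ ¬t₂)) := by
        rcases classify4 (R x d₁) (R x f₃) t₁ t₂ with hAD | hBC
        · exact hAD
        · exact absurd (hdir13 a13 x hc13 hxc (Or.inl ⟨ha13a, ha13b⟩) hBC) (asym hx13)
      have hAD23 : ((R x d₂ ↔ t₁) ∧ (R x f₃ ↔ t₂)) ∨
          ((R x d₂ ↔ ¬t₁) ∧ (R x f₃ ↔ ¬t₂)) := by
        rcases classify4 (R x d₂) (R x f₃) t₁ t₂ with hAD | hBC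
        · exact hAD
        · exact absurd (hdir23 a23 x hc23 hxc (Or.inl ⟨ha23a, ha23b⟩) hBC) (asym hx23)
      exact finAD (R x d₁) (R x d₂) (R x f₃) t₁ t₂ hσ hAD12 hAD13 hAD23








/-- In case (iv), if for every red point both its neighbour set and its non-neighbour set
are dense in the blue class, and symmetrically for blue points, then for all finite
disjoint sets `A₁, A₂` of red points the set of blue points joined to everything in `A₁`
and nothing in `A₂` is dense in the blue class; and symmetrically with the colours
exchanged. -/
theorem stmt13 {X : Type*} [LinearOrder X] [Countable X]
    (red : X → Bool) (R : X → X → Prop)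
    (hSymm : ∀ x y, R x y → R y x) (hIrr : ∀ x, ¬ R x x)
    (hBip : ∀ x y, R x y → red x ≠ red y)
    (hHom : Homogeneous (· < · : X → X → Prop) red R)
    (hlt : ∀ x y, red x = true → red y = false → x < y)
    (hQr : Nonempty ({x : X // red x = true} ≃o ℚ))
    (hQb : Nonempty ({x : X // red x = false} ≃o ℚ))
    (hdr : ∀ a : X, red a = true → ∀ b₁ b₂ : X, red b₁ = false → red b₂ = false →
      b₁ < b₂ → (∃ c, red c = false ∧ b₁ < c ∧ c < b₂ ∧ R a c) ∧
                (∃ c, red c = false ∧ b₁ < c ∧ c < b₂ ∧ ¬ R a c))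
    (hdb : ∀ b : X, red b = false → ∀ a₁ a₂ : X, red a₁ = true → red a₂ = true →
      a₁ < a₂ → (∃ c, red c = true ∧ a₁ < c ∧ c < a₂ ∧ R c b) ∧
                (∃ c, red c = true ∧ a₁ < c ∧ c < a₂ ∧ ¬ R c b)) :
    (∀ A₁ A₂ : Finset X, (∀ a ∈ A₁, red a = true) → (∀ a ∈ A₂, red a = true) →
      Disjoint A₁ A₂ → ∀ b₁ b₂ : X, red b₁ = false → red b₂ = false → b₁ < b₂ →
        ∃ c, red c = false ∧ b₁ < c ∧ c < b₂ ∧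
          (∀ a ∈ A₁, R a c) ∧ (∀ a ∈ A₂, ¬ R a c)) ∧
    (∀ B₁ B₂ : Finset X, (∀ b ∈ B₁, red b = false) → (∀ b ∈ B₂, red b = false) →
      Disjoint B₁ B₂ → ∀ a₁ a₂ : X, red a₁ = true → red a₂ = true → a₁ < a₂ →
        ∃ c, red c = true ∧ a₁ < c ∧ c < a₂ ∧
          (∀ b ∈ B₁, R c b) ∧ (∀ b ∈ B₂, ¬ R c b)) := by
  classical
  have nrr : ∀ {x y : X}, red x = red y → ¬ R x y := fun h hr => hBip _ _ hr h
  have cne : ∀ {x y : X}, red x = true → red y = false → x ≠ y := by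
    intro x y hx hy he; rw [he, hy] at hx; exact Bool.false_ne_true hx
  have redA : ∀ x, red x = true → ∃ y, red y = true ∧ x < y := by
    intro x hx
    obtain ⟨e⟩ := hQr
    have h1 : e.symm (e ⟨x, hx⟩) < e.symm (e ⟨x, hx⟩ + 1) := e.symm.strictMono (lt_add_one _)
    rw [e.symm_apply_apply] at h1
    exact ⟨(e.symm (e ⟨x, hx⟩ + 1) : {z : X // red z = true}).1,
      (e.symm (e ⟨x, hx⟩ + 1)).2, Subtype.coe_lt_coe.mpr h1⟩
  have redB : ∀ x, red x = true → ∃ y, red y = true ∧ y < x := by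
    intro x hx
    obtain ⟨e⟩ := hQr
    have h1 : e.symm (e ⟨x, hx⟩ - 1) < e.symm (e ⟨x, hx⟩) :=
      e.symm.strictMono (by linarith)
    rw [e.symm_apply_apply] at h1
    exact ⟨(e.symm (e ⟨x, hx⟩ - 1) : {z : X // red z = true}).1,
      (e.symm (e ⟨x, hx⟩ - 1)).2, Subtype.coe_lt_coe.mpr h1⟩
  have blueA : ∀ x, red x = false → ∃ y, red y = false ∧ x < y := by
    intro x hx
    obtain ⟨e⟩ := hQb
    have h1 : e.symm (e ⟨x, hx⟩) < e.symm (e ⟨x, hx⟩ + 1) := e.symm.strictMono (lt_add_one _)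
    rw [e.symm_apply_apply] at h1
    exact ⟨(e.symm (e ⟨x, hx⟩ + 1) : {z : X // red z = false}).1,
      (e.symm (e ⟨x, hx⟩ + 1)).2, Subtype.coe_lt_coe.mpr h1⟩
  have blueB : ∀ x, red x = false → ∃ y, red y = false ∧ y < x := by
    intro x hx
    obtain ⟨e⟩ := hQb
    have h1 : e.symm (e ⟨x, hx⟩ - 1) < e.symm (e ⟨x, hx⟩) :=
      e.symm.strictMono (by linarith)
    rw [e.symm_apply_apply] at h1
    exact ⟨(e.symm (e ⟨x, hx⟩ - 1) : {z : X // red z = false}).1,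
      (e.symm (e ⟨x, hx⟩ - 1)).2, Subtype.coe_lt_coe.mpr h1⟩
  -- instantiation of the core lemma: red solutions over a blue constraint pair
  have coreRed : ∀ d₁ d₂ : X, red d₁ = false → red d₂ = false → d₁ < d₂ →
      ∀ t₁ t₂ : Prop, ∀ e₁ e₂ : X, red e₁ = true → red e₂ = true → e₁ < e₂ →
      ∃ x, red x = true ∧ e₁ < x ∧ x < e₂ ∧ (R x d₁ ↔ t₁) ∧ (R x d₂ ↔ t₂) := by
    intro d₁ d₂ hd₁ hd₂ hdd t₁ t₂ e₁ e₂ he₁ he₂ hee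
    refine coreG (· < ·) red R (fun h h' => lt_trans h h') (fun a => lt_irrefl a)
      (fun a b h => h.lt_or_gt) hSymm (fun x y h => nrr h) (fun x y hx hy => hlt x y hx hy)
      ?_ ?_ ?_ redA redB blueA blueB d₁ d₂ hd₁ hd₂ hdd t₁ t₂ e₁ e₂ he₁ he₂ hee
    · intro s f c1 c2 c3
      obtain ⟨g, ⟨a1, a2, a3⟩, h4⟩ := hHom s f ⟨c1, c2, c3⟩
      exact ⟨g, a1, a2, a3, h4⟩
    · intro d hd t u v hu hv huv
      by_cases ht : t
      · obtain ⟨c, h1, h2, h3, h4⟩ := (hdb d hd u v hu hv huv).1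
        exact ⟨c, h1, h2, h3, iff_of_true h4 ht⟩
      · obtain ⟨c, h1, h2, h3, h4⟩ := (hdb d hd u v hu hv huv).2
        exact ⟨c, h1, h2, h3, iff_of_false h4 ht⟩
    · intro y hy t u v hu hv huv
      by_cases ht : t
      · obtain ⟨c, h1, h2, h3, h4⟩ := (hdr y hy u v hu hv huv).1
        exact ⟨c, h1, h2, h3, iff_of_true h4 ht⟩
      · obtain ⟨c, h1, h2, h3, h4⟩ := (hdr y hy u v hu hv huv).2
        exact ⟨c, h1, h2, h3, iff_of_false h4 ht⟩
  -- instantiation of the core lemma: blue solutions over a red constraint pair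
  have coreBlue : ∀ d₁ d₂ : X, red d₁ = true → red d₂ = true → d₁ < d₂ →
      ∀ t₁ t₂ : Prop, ∀ e₁ e₂ : X, red e₁ = false → red e₂ = false → e₁ < e₂ →
      ∃ x, red x = false ∧ e₁ < x ∧ x < e₂ ∧ (R x d₁ ↔ t₁) ∧ (R x d₂ ↔ t₂) := by
    intro d₁ d₂ hd₁ hd₂ hdd t₁ t₂ e₁ e₂ he₁ he₂ hee
    have key := coreG (fun a b => b < a) (fun x => !red x) R
      (fun h h' => lt_trans h' h) (fun a => lt_irrefl a)
      (fun a b h => (h.lt_or_gt).symm) hSymm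
      (fun x y h => nrr (by simpa using h))
      (fun x y hx hy => by
        simp only [Bool.not_eq_true'] at hx
        simp only [Bool.not_eq_false'] at hy
        exact hlt y x hy hx)
      ?_ ?_ ?_
      (fun x hx => by
        simp only [Bool.not_eq_true'] at hx
        obtain ⟨y, hy1, hy2⟩ := blueB x hx
        exact ⟨y, by simp [hy1], hy2⟩)
      (fun x hx => by
        simp only [Bool.not_eq_true'] at hx
        obtain ⟨y, hy1, hy2⟩ := blueA x hx
        exact ⟨y, by simp [hy1], hy2⟩)
      (fun x hx => by
        simp only [Bool.not_eq_false'] at hx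
        obtain ⟨y, hy1, hy2⟩ := redB x hx
        exact ⟨y, by simp [hy1], hy2⟩)
      (fun x hx => by
        simp only [Bool.not_eq_false'] at hx
        obtain ⟨y, hy1, hy2⟩ := redA x hx
        exact ⟨y, by simp [hy1], hy2⟩)
      d₂ d₁ (by simp [hd₂]) (by simp [hd₁]) hdd t₂ t₁ e₂ e₁ (by simp [he₂]) (by simp [he₁]) hee
    · obtain ⟨x, hx, h1, h2, hb1, hb2⟩ := key
      simp only [Bool.not_eq_true'] at hx
      exact ⟨x, hx, h2, h1, hb2, hb1⟩
    · intro s f c1 c2 c3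
      have c2' : ∀ x ∈ s, red (f x) = red x := by
        intro x hx
        have := c2 x hx
        simpa using this
      obtain ⟨g, ⟨a1, a2, a3⟩, h4⟩ := hHom s f ⟨fun x hx y hy => c1 y hy x hx, c2', c3⟩
      exact ⟨g, fun x y => a1 y x, fun x => by show (!red (g x)) = (!red x); rw [a2 x], a3, h4⟩
    · intro d hd t u v hu hv huv
      simp only [Bool.not_eq_false'] at hd
      simp only [Bool.not_eq_true'] at hu hv
      by_cases ht : t
      · obtain ⟨c, h1, h2, h3, h4⟩ := (hdr d hd v u hv hu huv).1
        exact ⟨c, by simp [h1], h3, h2, iff_of_true (hSymm _ _ h4) ht⟩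
      · obtain ⟨c, h1, h2, h3, h4⟩ := (hdr d hd v u hv hu huv).2
        exact ⟨c, by simp [h1], h3, h2, iff_of_false (fun hr => h4 (hSymm _ _ hr)) ht⟩
    · intro y hy t u v hu hv huv
      simp only [Bool.not_eq_true'] at hy
      simp only [Bool.not_eq_false'] at hu hv
      by_cases ht : t
      · obtain ⟨c, h1, h2, h3, h4⟩ := (hdb y hy v u hv hu huv).1
        exact ⟨c, by simp [h1], h3, h2, iff_of_true (hSymm _ _ h4) ht⟩
      · obtain ⟨c, h1, h2, h3, h4⟩ := (hdb y hy v u hv hu huv).2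
        exact ⟨c, by simp [h1], h3, h2, iff_of_false (fun hr => h4 (hSymm _ _ hr)) ht⟩
  -- homogeneity transfer used in the upward induction (blue side)
  have hmapUb : ∀ (A : Finset X), (∀ x ∈ A, red x = true) →
      ∀ ℓ aS a : X, red ℓ = false → red aS = true → red a = true →
      (∀ x ∈ A, x < aS) → (∀ x ∈ A, x < a) → (R aS ℓ ↔ R a ℓ) →
      ∃ g : X ≃ X, IsAuto (· < · : X → X → Prop) red R g ∧
        (∀ x ∈ A, g x = x) ∧ g ℓ = ℓ ∧ g aS = a := by
    intro A hA ℓ aS a hℓ hsr har hsgt hagt hbit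
    set f : X → X := fun x => if x = aS then a else x with hf
    have hfs : f aS = a := by simp [hf]
    have hℓne : ℓ ≠ aS := Ne.symm (cne hsr hℓ)
    have hfℓ : f ℓ = ℓ := by simp only [hf]; rw [if_neg hℓne]
    have hfx : ∀ x ∈ A, f x = x := by
      intro x hx
      simp only [hf]
      rw [if_neg (fun he => absurd (hsgt x hx) (by rw [he]; exact lt_irrefl _))]
    set s : Finset X := insert ℓ (insert aS A) with hs
    have hmem : ∀ x ∈ s, x = ℓ ∨ x = aS ∨ x ∈ A := by
      intro x hx; simpa [hs] using hx
    have c1 : ∀ x ∈ s, ∀ y ∈ s, (x < y ↔ f x < f y) := by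
      intro x hx y hy
      rcases hmem x hx with rfl | rfl | hxA <;> rcases hmem y hy with rfl | rfl | hyA
      · rw [hfℓ]
      · rw [hfℓ, hfs]
        exact iff_of_false (lt_asymm (hlt _ _ hsr hℓ)) (lt_asymm (hlt _ _ har hℓ))
      · rw [hfℓ, hfx y hyA]
      · rw [hfℓ, hfs]
        exact iff_of_true (hlt _ _ hsr hℓ) (hlt _ _ har hℓ)
      · rw [hfs]
        exact iff_of_false (lt_irrefl _) (lt_irrefl _)
      · rw [hfs, hfx y hyA]
        exact iff_of_false (lt_asymm (hsgt y hyA)) (lt_asymm (hagt y hyA))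
      · rw [hfℓ, hfx x hxA]
      · rw [hfs, hfx x hxA]
        exact iff_of_true (hsgt x hxA) (hagt x hxA)
      · rw [hfx x hxA, hfx y hyA]
    have c2 : ∀ x ∈ s, red (f x) = red x := by
      intro x hx
      rcases hmem x hx with rfl | rfl | hxA
      · rw [hfℓ]
      · rw [hfs, har, hsr]
      · rw [hfx x hxA]
    have c3 : ∀ x ∈ s, ∀ y ∈ s, (R x y ↔ R (f x) (f y)) := by
      intro x hx y hy
      rcases hmem x hx with rfl | rfl | hxA <;> rcases hmem y hy with rfl | rfl | hyA
      · rw [hfℓ]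
      · rw [hfℓ, hfs]
        exact ⟨fun h => hSymm _ _ (hbit.mp (hSymm _ _ h)),
          fun h => hSymm _ _ (hbit.mpr (hSymm _ _ h))⟩
      · rw [hfℓ, hfx y hyA]
      · rw [hfℓ, hfs]
        exact hbit
      · rw [hfs]
        exact iff_of_false (hIrr _) (hIrr _)
      · rw [hfs, hfx y hyA]
        exact iff_of_false (nrr (hsr.trans (hA y hyA).symm)) (nrr (har.trans (hA y hyA).symm))
      · rw [hfℓ, hfx x hxA]
      · rw [hfs, hfx x hxA]
        exact iff_of_false (nrr ((hA x hxA).trans hsr.symm)) (nrr ((hA x hxA).trans har.symm))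
      · rw [hfx x hxA, hfx y hyA]
    obtain ⟨g, hauto, hgs⟩ := hHom s f ⟨c1, c2, c3⟩
    refine ⟨g, hauto, ?_, ?_, ?_⟩
    · intro x hx
      rw [hgs x (by simp [hs, hx]), hfx x hx]
    · rw [hgs ℓ (by simp [hs]), hfℓ]
    · rw [hgs aS (by simp [hs]), hfs]
  -- upward induction, blue side: a blue point above any bound realizing a column
  have Ub : ∀ n : ℕ, ∀ A₁ A₂ : Finset X, (∀ a ∈ A₁, red a = true) →
      (∀ a ∈ A₂, red a = true) → Disjoint A₁ A₂ → (A₁ ∪ A₂).card = n →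
      ∀ ℓ : X, red ℓ = false → ∃ c, red c = false ∧ ℓ < c ∧
        (∀ a ∈ A₁, R a c) ∧ (∀ a ∈ A₂, ¬ R a c) := by
    intro n
    induction n with
    | zero =>
      intro A₁ A₂ h₁ h₂ hdj hc ℓ hℓ
      have he : A₁ ∪ A₂ = ∅ := Finset.card_eq_zero.mp hc
      obtain ⟨c, hcb, hcl⟩ := blueA ℓ hℓ
      refine ⟨c, hcb, hcl, ?_, ?_⟩ <;> intro a ha
      · exact absurd (he ▸ Finset.mem_union_left A₂ ha) (Finset.notMem_empty a)
      · exact absurd (he ▸ Finset.mem_union_right A₁ ha) (Finset.notMem_empty a)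
    | succ n ih =>
      intro A₁ A₂ h₁ h₂ hdj hc ℓ hℓ
      have hne : (A₁ ∪ A₂).Nonempty := Finset.card_pos.mp (by rw [hc]; exact Nat.succ_pos n)
      set a := (A₁ ∪ A₂).max' hne with ha
      have haU : a ∈ A₁ ∪ A₂ := Finset.max'_mem _ hne
      have hared : red a = true := by
        rcases Finset.mem_union.mp haU with h | h
        · exact h₁ a h
        · exact h₂ a h
      have hcard : (A₁.erase a ∪ A₂.erase a).card = n := by
        rw [← Finset.erase_union_distrib, Finset.card_erase_of_mem haU, hc]
        omega
      obtain ⟨c₀, hc₀b, hc₀l, hc₀1, hc₀2⟩ := ih (A₁.erase a) (A₂.erase a)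
        (fun x hx => h₁ x (Finset.mem_of_mem_erase hx))
        (fun x hx => h₂ x (Finset.mem_of_mem_erase hx))
        (hdj.mono (Finset.erase_subset a A₁) (Finset.erase_subset a A₂)) hcard ℓ hℓ
      have hlt_a : ∀ x ∈ A₁.erase a ∪ A₂.erase a, x < a := by
        intro x hx
        have hxU : x ∈ A₁ ∪ A₂ := by
          rw [← Finset.erase_union_distrib] at hx
          exact Finset.mem_of_mem_erase hx
        have hxne : x ≠ a := by
          rw [← Finset.erase_union_distrib] at hx
          exact Finset.ne_of_mem_erase hx
        exact lt_of_le_of_ne (Finset.le_max' _ x hxU) hxne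
      obtain ⟨e₁, he₁r, he₁gt⟩ : ∃ e₁, red e₁ = true ∧
          ∀ x ∈ A₁.erase a ∪ A₂.erase a, x < e₁ := by
        by_cases hne' : (A₁.erase a ∪ A₂.erase a).Nonempty
        · set b := (A₁.erase a ∪ A₂.erase a).max' hne' with hb
          have hbr : red b = true := by
            have hbU := Finset.max'_mem _ hne'
            rcases Finset.mem_union.mp hbU with h | h
            · exact h₁ b (Finset.mem_of_mem_erase h)
            · exact h₂ b (Finset.mem_of_mem_erase h)
          obtain ⟨e₁, he₁, hlt'⟩ := redA b hbr
          exact ⟨e₁, he₁, fun x hx => lt_of_le_of_lt (Finset.le_max' _ x hx) hlt'⟩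
        · refine ⟨a, hared, fun x hx => absurd hx ?_⟩
          rw [Finset.not_nonempty_iff_eq_empty.mp hne']
          exact Finset.notMem_empty x
      obtain ⟨e₂, he₂r, he₂gt⟩ := redA e₁ he₁r
      obtain ⟨aS, haSr, haS1, haS2, haSb1, haSb2⟩ := coreRed ℓ c₀ hℓ hc₀b hc₀l
        (R a ℓ) (a ∈ A₁) e₁ e₂ he₁r he₂r he₂gt
      obtain ⟨g, ⟨hal, hac, haR⟩, hgA, hgℓ, hga⟩ := hmapUb (A₁.erase a ∪ A₂.erase a)
        (fun x hx => by
          rcases Finset.mem_union.mp hx with h | h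
          · exact h₁ x (Finset.mem_of_mem_erase h)
          · exact h₂ x (Finset.mem_of_mem_erase h))
        ℓ aS a hℓ haSr hared
        (fun x hx => lt_trans (he₁gt x hx) haS1) hlt_a haSb1
      refine ⟨g c₀, (hac c₀).trans hc₀b, ?_, ?_, ?_⟩
      · have := (hal ℓ c₀).mp hc₀l
        rwa [hgℓ] at this
      · intro x hx
        by_cases hxa : x = a
        · subst hxa
          have h5 : R aS c₀ := haSb2.mpr hx
          have := (haR aS c₀).mp h5
          rwa [hga] at this
        · have hx' : x ∈ A₁.erase a := Finset.mem_erase.mpr ⟨hxa, hx⟩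
          have h5 := hc₀1 x hx'
          have := (haR x c₀).mp h5
          rwa [hgA x (Finset.mem_union_left _ hx')] at this
      · intro x hx
        by_cases hxa : x = a
        · subst hxa
          have hnx : ¬ (a ∈ A₁) := fun hmem => (Finset.disjoint_left.mp hdj) hmem hx
          intro hrc
          have : R aS c₀ := by
            have := (haR aS c₀)
            rw [hga] at this
            exact this.mpr hrc
          exact hnx (haSb2.mp this)
        · have hx' : x ∈ A₂.erase a := Finset.mem_erase.mpr ⟨hxa, hx⟩
          have h5 := hc₀2 x hx'
          intro hrc
          refine h5 ?_
          have := (haR x c₀)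
          rw [hgA x (Finset.mem_union_right _ hx')] at this
          exact this.mpr hrc
  -- homogeneity transfer used in the downward induction (red side)
  have hmapUr : ∀ (B : Finset X), (∀ x ∈ B, red x = false) →
      ∀ ℓr bS b : X, red ℓr = true → red bS = false → red b = false →
      (∀ x ∈ B, bS < x) → (∀ x ∈ B, b < x) → (R bS ℓr ↔ R b ℓr) →
      ∃ g : X ≃ X, IsAuto (· < · : X → X → Prop) red R g ∧
        (∀ x ∈ B, g x = x) ∧ g ℓr = ℓr ∧ g bS = b := by
    intro B hB ℓr bS b hℓr hsb hbb hsgt hagt hbit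
    set f : X → X := fun x => if x = bS then b else x with hf
    have hfs : f bS = b := by simp [hf]
    have hℓne : ℓr ≠ bS := cne hℓr hsb
    have hfℓ : f ℓr = ℓr := by simp only [hf]; rw [if_neg hℓne]
    have hfx : ∀ x ∈ B, f x = x := by
      intro x hx
      simp only [hf]
      rw [if_neg (fun he => absurd (hsgt x hx) (by rw [he]; exact lt_irrefl _))]
    set s : Finset X := insert ℓr (insert bS B) with hs
    have hmem : ∀ x ∈ s, x = ℓr ∨ x = bS ∨ x ∈ B := by
      intro x hx; simpa [hs] using hx
    have c1 : ∀ x ∈ s, ∀ y ∈ s, (x < y ↔ f x < f y) := by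
      intro x hx y hy
      rcases hmem x hx with rfl | rfl | hxB <;> rcases hmem y hy with rfl | rfl | hyB
      · rw [hfℓ]
      · rw [hfℓ, hfs]
        exact iff_of_true (hlt _ _ hℓr hsb) (hlt _ _ hℓr hbb)
      · rw [hfℓ, hfx y hyB]
      · rw [hfℓ, hfs]
        exact iff_of_false (lt_asymm (hlt _ _ hℓr hsb)) (lt_asymm (hlt _ _ hℓr hbb))
      · rw [hfs]
        exact iff_of_false (lt_irrefl _) (lt_irrefl _)
      · rw [hfs, hfx y hyB]
        exact iff_of_true (hsgt y hyB) (hagt y hyB)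
      · rw [hfℓ, hfx x hxB]
      · rw [hfs, hfx x hxB]
        exact iff_of_false (lt_asymm (hsgt x hxB)) (lt_asymm (hagt x hxB))
      · rw [hfx x hxB, hfx y hyB]
    have c2 : ∀ x ∈ s, red (f x) = red x := by
      intro x hx
      rcases hmem x hx with rfl | rfl | hxB
      · rw [hfℓ]
      · rw [hfs, hbb, hsb]
      · rw [hfx x hxB]
    have c3 : ∀ x ∈ s, ∀ y ∈ s, (R x y ↔ R (f x) (f y)) := by
      intro x hx y hy
      rcases hmem x hx with rfl | rfl | hxB <;> rcases hmem y hy with rfl | rfl | hyB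
      · rw [hfℓ]
      · rw [hfℓ, hfs]
        exact ⟨fun h => hSymm _ _ (hbit.mp (hSymm _ _ h)),
          fun h => hSymm _ _ (hbit.mpr (hSymm _ _ h))⟩
      · rw [hfℓ, hfx y hyB]
      · rw [hfℓ, hfs]
        exact hbit
      · rw [hfs]
        exact iff_of_false (hIrr _) (hIrr _)
      · rw [hfs, hfx y hyB]
        exact iff_of_false (nrr (hsb.trans (hB y hyB).symm)) (nrr (hbb.trans (hB y hyB).symm))
      · rw [hfℓ, hfx x hxB]
      · rw [hfs, hfx x hxB]
        exact iff_of_false (nrr ((hB x hxB).trans hsb.symm)) (nrr ((hB x hxB).trans hbb.symm))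
      · rw [hfx x hxB, hfx y hyB]
    obtain ⟨g, hauto, hgs⟩ := hHom s f ⟨c1, c2, c3⟩
    refine ⟨g, hauto, ?_, ?_, ?_⟩
    · intro x hx
      rw [hgs x (by simp [hs, hx]), hfx x hx]
    · rw [hgs ℓr (by simp [hs]), hfℓ]
    · rw [hgs bS (by simp [hs]), hfs]
  -- downward induction, red side
  have Ur : ∀ n : ℕ, ∀ B₁ B₂ : Finset X, (∀ b ∈ B₁, red b = false) →
      (∀ b ∈ B₂, red b = false) → Disjoint B₁ B₂ → (B₁ ∪ B₂).card = n →
      ∀ ℓr : X, red ℓr = true → ∃ c, red c = true ∧ c < ℓr ∧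
        (∀ b ∈ B₁, R c b) ∧ (∀ b ∈ B₂, ¬ R c b) := by
    intro n
    induction n with
    | zero =>
      intro B₁ B₂ h₁ h₂ hdj hc ℓr hℓr
      have he : B₁ ∪ B₂ = ∅ := Finset.card_eq_zero.mp hc
      obtain ⟨c, hcr, hcl⟩ := redB ℓr hℓr
      refine ⟨c, hcr, hcl, ?_, ?_⟩ <;> intro b hb
      · exact absurd (he ▸ Finset.mem_union_left B₂ hb) (Finset.notMem_empty b)
      · exact absurd (he ▸ Finset.mem_union_right B₁ hb) (Finset.notMem_empty b)
    | succ n ih =>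
      intro B₁ B₂ h₁ h₂ hdj hc ℓr hℓr
      have hne : (B₁ ∪ B₂).Nonempty := Finset.card_pos.mp (by rw [hc]; exact Nat.succ_pos n)
      set b := (B₁ ∪ B₂).min' hne with hb
      have hbU : b ∈ B₁ ∪ B₂ := Finset.min'_mem _ hne
      have hbblue : red b = false := by
        rcases Finset.mem_union.mp hbU with h | h
        · exact h₁ b h
        · exact h₂ b h
      have hcard : (B₁.erase b ∪ B₂.erase b).card = n := by
        rw [← Finset.erase_union_distrib, Finset.card_erase_of_mem hbU, hc]
        omega
      obtain ⟨c₀, hc₀r, hc₀l, hc₀1, hc₀2⟩ := ih (B₁.erase b) (B₂.erase b)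
        (fun x hx => h₁ x (Finset.mem_of_mem_erase hx))
        (fun x hx => h₂ x (Finset.mem_of_mem_erase hx))
        (hdj.mono (Finset.erase_subset b B₁) (Finset.erase_subset b B₂)) hcard ℓr hℓr
      have hgt_b : ∀ x ∈ B₁.erase b ∪ B₂.erase b, b < x := by
        intro x hx
        have hxU : x ∈ B₁ ∪ B₂ := by
          rw [← Finset.erase_union_distrib] at hx
          exact Finset.mem_of_mem_erase hx
        have hxne : x ≠ b := by
          rw [← Finset.erase_union_distrib] at hx
          exact Finset.ne_of_mem_erase hx
        exact lt_of_le_of_ne (Finset.min'_le _ x hxU) (Ne.symm hxne)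
      obtain ⟨e₂, he₂b, he₂lt⟩ : ∃ e₂, red e₂ = false ∧
          ∀ x ∈ B₁.erase b ∪ B₂.erase b, e₂ < x := by
        by_cases hne' : (B₁.erase b ∪ B₂.erase b).Nonempty
        · set m := (B₁.erase b ∪ B₂.erase b).min' hne' with hm
          have hmb : red m = false := by
            have hmU := Finset.min'_mem _ hne'
            rcases Finset.mem_union.mp hmU with h | h
            · exact h₁ m (Finset.mem_of_mem_erase h)
            · exact h₂ m (Finset.mem_of_mem_erase h)
          obtain ⟨e₂, he₂, hlt'⟩ := blueB m hmb
          exact ⟨e₂, he₂, fun x hx => lt_of_lt_of_le hlt' (Finset.min'_le _ x hx)⟩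
        · refine ⟨b, hbblue, fun x hx => absurd hx ?_⟩
          rw [Finset.not_nonempty_iff_eq_empty.mp hne']
          exact Finset.notMem_empty x
      obtain ⟨e₁, he₁b, he₁lt⟩ := blueB e₂ he₂b
      obtain ⟨bS, hbSb, hbS1, hbS2, hbSb1, hbSb2⟩ := coreBlue c₀ ℓr hc₀r hℓr hc₀l
        (b ∈ B₁) (R b ℓr) e₁ e₂ he₁b he₂b he₁lt
      obtain ⟨g, ⟨hal, hac, haR⟩, hgB, hgℓ, hgb⟩ := hmapUr (B₁.erase b ∪ B₂.erase b)
        (fun x hx => by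
          rcases Finset.mem_union.mp hx with h | h
          · exact h₁ x (Finset.mem_of_mem_erase h)
          · exact h₂ x (Finset.mem_of_mem_erase h))
        ℓr bS b hℓr hbSb hbblue
        (fun x hx => lt_trans hbS2 (he₂lt x hx)) hgt_b hbSb2
      refine ⟨g c₀, (hac c₀).trans hc₀r, ?_, ?_, ?_⟩
      · have := (hal c₀ ℓr).mp hc₀l
        rwa [hgℓ] at this
      · intro y hy
        by_cases hyb : y = b
        · subst hyb
          have h5 : R bS c₀ := hbSb1.mpr hy
          have h6 := (haR bS c₀).mp h5
          rw [hgb] at h6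
          exact hSymm _ _ h6
        · have hy' : y ∈ B₁.erase b := Finset.mem_erase.mpr ⟨hyb, hy⟩
          have h5 := hc₀1 y hy'
          have := (haR c₀ y).mp h5
          rwa [hgB y (Finset.mem_union_left _ hy')] at this
      · intro y hy
        by_cases hyb : y = b
        · subst hyb
          have hnx : ¬ (b ∈ B₁) := fun hmem => (Finset.disjoint_left.mp hdj) hmem hy
          intro hrc
          have h6 : R bS c₀ := by
            have h7 := haR bS c₀
            rw [hgb] at h7
            exact h7.mpr (hSymm _ _ hrc)
          exact hnx (hbSb1.mp h6)
        · have hy' : y ∈ B₂.erase b := Finset.mem_erase.mpr ⟨hyb, hy⟩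
          have h5 := hc₀2 y hy'
          intro hrc
          refine h5 ?_
          have h7 := haR c₀ y
          rw [hgB y (Finset.mem_union_right _ hy')] at h7
          exact h7.mpr hrc
  -- final transfer maps
  have hmapFin : ∀ (A : Finset X), (∀ x ∈ A, red x = true) → ∀ β₁ β₂ b₁ b₂ : X,
      red β₁ = false → red β₂ = false → red b₁ = false → red b₂ = false →
      β₁ < β₂ → b₁ < b₂ →
      (∀ x ∈ A, R x β₁ ↔ R x b₁) → (∀ x ∈ A, R x β₂ ↔ R x b₂) →
      ∃ g : X ≃ X, IsAuto (· < · : X → X → Prop) red R g ∧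
        (∀ x ∈ A, g x = x) ∧ g β₁ = b₁ ∧ g β₂ = b₂ := by
    intro A hA β₁ β₂ b₁ b₂ hβ₁ hβ₂ hb₁ hb₂ hββ hbb hbit₁ hbit₂
    have hne : β₁ ≠ β₂ := ne_of_lt hββ
    set f : X → X := fun x => if x = β₁ then b₁ else if x = β₂ then b₂ else x with hf
    have hf₁ : f β₁ = b₁ := by simp [hf]
    have hf₂ : f β₂ = b₂ := by simp only [hf]; rw [if_neg (Ne.symm hne)]; simp
    have hfx : ∀ x ∈ A, f x = x := by
      intro x hx
      simp only [hf]
      rw [if_neg (cne (hA x hx) hβ₁), if_neg (cne (hA x hx) hβ₂)]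
    set s : Finset X := insert β₁ (insert β₂ A) with hs
    have hmem : ∀ x ∈ s, x = β₁ ∨ x = β₂ ∨ x ∈ A := by
      intro x hx; simpa [hs] using hx
    have c1 : ∀ x ∈ s, ∀ y ∈ s, (x < y ↔ f x < f y) := by
      intro x hx y hy
      rcases hmem x hx with rfl | rfl | hxA <;> rcases hmem y hy with rfl | rfl | hyA
      · rw [hf₁]
        exact iff_of_false (lt_irrefl _) (lt_irrefl _)
      · rw [hf₁, hf₂]
        exact iff_of_true hββ hbb
      · rw [hf₁, hfx y hyA]
        exact iff_of_false (lt_asymm (hlt _ _ (hA y hyA) hβ₁))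
          (lt_asymm (hlt _ _ (hA y hyA) hb₁))
      · rw [hf₁, hf₂]
        exact iff_of_false (lt_asymm hββ) (lt_asymm hbb)
      · rw [hf₂]
        exact iff_of_false (lt_irrefl _) (lt_irrefl _)
      · rw [hf₂, hfx y hyA]
        exact iff_of_false (lt_asymm (hlt _ _ (hA y hyA) hβ₂))
          (lt_asymm (hlt _ _ (hA y hyA) hb₂))
      · rw [hf₁, hfx x hxA]
        exact iff_of_true (hlt _ _ (hA x hxA) hβ₁) (hlt _ _ (hA x hxA) hb₁)
      · rw [hf₂, hfx x hxA]
        exact iff_of_true (hlt _ _ (hA x hxA) hβ₂) (hlt _ _ (hA x hxA) hb₂)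
      · rw [hfx x hxA, hfx y hyA]
    have c2 : ∀ x ∈ s, red (f x) = red x := by
      intro x hx
      rcases hmem x hx with rfl | rfl | hxA
      · rw [hf₁, hb₁, hβ₁]
      · rw [hf₂, hb₂, hβ₂]
      · rw [hfx x hxA]
    have c3 : ∀ x ∈ s, ∀ y ∈ s, (R x y ↔ R (f x) (f y)) := by
      intro x hx y hy
      rcases hmem x hx with rfl | rfl | hxA <;> rcases hmem y hy with rfl | rfl | hyA
      · rw [hf₁]
        exact iff_of_false (nrr rfl) (nrr rfl)
      · rw [hf₁, hf₂]
        exact iff_of_false (nrr (hβ₁.trans hβ₂.symm)) (nrr (hb₁.trans hb₂.symm))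
      · rw [hf₁, hfx y hyA]
        exact ⟨fun h => hSymm _ _ ((hbit₁ y hyA).mp (hSymm _ _ h)),
          fun h => hSymm _ _ ((hbit₁ y hyA).mpr (hSymm _ _ h))⟩
      · rw [hf₁, hf₂]
        exact iff_of_false (nrr (hβ₂.trans hβ₁.symm)) (nrr (hb₂.trans hb₁.symm))
      · rw [hf₂]
        exact iff_of_false (nrr rfl) (nrr rfl)
      · rw [hf₂, hfx y hyA]
        exact ⟨fun h => hSymm _ _ ((hbit₂ y hyA).mp (hSymm _ _ h)),
          fun h => hSymm _ _ ((hbit₂ y hyA).mpr (hSymm _ _ h))⟩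
      · rw [hf₁, hfx x hxA]
        exact hbit₁ x hxA
      · rw [hf₂, hfx x hxA]
        exact hbit₂ x hxA
      · rw [hfx x hxA, hfx y hyA]
    obtain ⟨g, hauto, hgs⟩ := hHom s f ⟨c1, c2, c3⟩
    refine ⟨g, hauto, ?_, ?_, ?_⟩
    · intro x hx
      rw [hgs x (by simp [hs, hx]), hfx x hx]
    · rw [hgs β₁ (by simp [hs]), hf₁]
    · rw [hgs β₂ (by simp [hs]), hf₂]
  have hmapFinR : ∀ (B : Finset X), (∀ x ∈ B, red x = false) → ∀ α₁ α₂ a₁ a₂ : X,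
      red α₁ = true → red α₂ = true → red a₁ = true → red a₂ = true →
      α₁ < α₂ → a₁ < a₂ →
      (∀ y ∈ B, R α₁ y ↔ R a₁ y) → (∀ y ∈ B, R α₂ y ↔ R a₂ y) →
      ∃ g : X ≃ X, IsAuto (· < · : X → X → Prop) red R g ∧
        (∀ y ∈ B, g y = y) ∧ g α₁ = a₁ ∧ g α₂ = a₂ := by
    intro B hB α₁ α₂ a₁ a₂ hα₁ hα₂ ha₁ ha₂ hαα haa hbit₁ hbit₂
    have hne : α₁ ≠ α₂ := ne_of_lt hαα
    set f : X → X := fun x => if x = α₁ then a₁ else if x = α₂ then a₂ else x with hf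
    have hf₁ : f α₁ = a₁ := by simp [hf]
    have hf₂ : f α₂ = a₂ := by simp only [hf]; rw [if_neg (Ne.symm hne)]; simp
    have hfx : ∀ y ∈ B, f y = y := by
      intro y hy
      simp only [hf]
      rw [if_neg (Ne.symm (cne hα₁ (hB y hy))), if_neg (Ne.symm (cne hα₂ (hB y hy)))]
    set s : Finset X := insert α₁ (insert α₂ B) with hs
    have hmem : ∀ x ∈ s, x = α₁ ∨ x = α₂ ∨ x ∈ B := by
      intro x hx; simpa [hs] using hx
    have c1 : ∀ x ∈ s, ∀ y ∈ s, (x < y ↔ f x < f y) := by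
      intro x hx y hy
      rcases hmem x hx with rfl | rfl | hxB <;> rcases hmem y hy with rfl | rfl | hyB
      · rw [hf₁]
        exact iff_of_false (lt_irrefl _) (lt_irrefl _)
      · rw [hf₁, hf₂]
        exact iff_of_true hαα haa
      · rw [hf₁, hfx y hyB]
        exact iff_of_true (hlt _ _ hα₁ (hB y hyB)) (hlt _ _ ha₁ (hB y hyB))
      · rw [hf₁, hf₂]
        exact iff_of_false (lt_asymm hαα) (lt_asymm haa)
      · rw [hf₂]
        exact iff_of_false (lt_irrefl _) (lt_irrefl _)
      · rw [hf₂, hfx y hyB]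
        exact iff_of_true (hlt _ _ hα₂ (hB y hyB)) (hlt _ _ ha₂ (hB y hyB))
      · rw [hf₁, hfx x hxB]
        exact iff_of_false (lt_asymm (hlt _ _ hα₁ (hB x hxB)))
          (lt_asymm (hlt _ _ ha₁ (hB x hxB)))
      · rw [hf₂, hfx x hxB]
        exact iff_of_false (lt_asymm (hlt _ _ hα₂ (hB x hxB)))
          (lt_asymm (hlt _ _ ha₂ (hB x hxB)))
      · rw [hfx x hxB, hfx y hyB]
    have c2 : ∀ x ∈ s, red (f x) = red x := by
      intro x hx
      rcases hmem x hx with rfl | rfl | hxB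
      · rw [hf₁, ha₁, hα₁]
      · rw [hf₂, ha₂, hα₂]
      · rw [hfx x hxB]
    have c3 : ∀ x ∈ s, ∀ y ∈ s, (R x y ↔ R (f x) (f y)) := by
      intro x hx y hy
      rcases hmem x hx with rfl | rfl | hxB <;> rcases hmem y hy with rfl | rfl | hyB
      · rw [hf₁]
        exact iff_of_false (nrr rfl) (nrr rfl)
      · rw [hf₁, hf₂]
        exact iff_of_false (nrr (hα₁.trans hα₂.symm)) (nrr (ha₁.trans ha₂.symm))
      · rw [hf₁, hfx y hyB]
        exact hbit₁ y hyB
      · rw [hf₁, hf₂]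
        exact iff_of_false (nrr (hα₂.trans hα₁.symm)) (nrr (ha₂.trans ha₁.symm))
      · rw [hf₂]
        exact iff_of_false (nrr rfl) (nrr rfl)
      · rw [hf₂, hfx y hyB]
        exact hbit₂ y hyB
      · rw [hf₁, hfx x hxB]
        exact ⟨fun h => hSymm _ _ ((hbit₁ x hxB).mp (hSymm _ _ h)),
          fun h => hSymm _ _ ((hbit₁ x hxB).mpr (hSymm _ _ h))⟩
      · rw [hf₂, hfx x hxB]
        exact ⟨fun h => hSymm _ _ ((hbit₂ x hxB).mp (hSymm _ _ h)),
          fun h => hSymm _ _ ((hbit₂ x hxB).mpr (hSymm _ _ h))⟩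
      · rw [hfx x hxB, hfx y hyB]
    obtain ⟨g, hauto, hgs⟩ := hHom s f ⟨c1, c2, c3⟩
    refine ⟨g, hauto, ?_, ?_, ?_⟩
    · intro y hy
      rw [hgs y (by simp [hs, hy]), hfx y hy]
    · rw [hgs α₁ (by simp [hs]), hf₁]
    · rw [hgs α₂ (by simp [hs]), hf₂]
  constructor
  · -- blue half
    intro A₁ A₂ h₁ h₂ hdj b₁ b₂ hb₁ hb₂ hbb
    have hAred : ∀ x ∈ A₁ ∪ A₂, red x = true := by
      intro x hx
      rcases Finset.mem_union.mp hx with h | h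
      · exact h₁ x h
      · exact h₂ x h
    -- β₁ realizing the column of b₁ over A₁ ∪ A₂, above b₂
    have hfil : ∀ (d : X) (P : X → Prop),
        (∀ x ∈ (A₁ ∪ A₂).filter P, red x = true) ∧
        (∀ x ∈ (A₁ ∪ A₂).filter (fun x => ¬ P x), red x = true) ∧
        Disjoint ((A₁ ∪ A₂).filter P) ((A₁ ∪ A₂).filter (fun x => ¬ P x)) := by
      intro d P
      refine ⟨fun x hx => hAred x (Finset.mem_of_mem_filter x hx),
        fun x hx => hAred x (Finset.mem_of_mem_filter x hx), ?_⟩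
      rw [Finset.disjoint_left]
      intro x hx hx'
      exact (Finset.mem_filter.mp hx').2 (Finset.mem_filter.mp hx).2
    obtain ⟨k1a, k1b, k1c⟩ := hfil b₁ (fun x => R x b₁)
    obtain ⟨β₁, hβ₁b, hβ₁gt, hβ₁1, hβ₁2⟩ := Ub _ _ _ k1a k1b k1c rfl b₂ hb₂
    obtain ⟨γ, hγb, hγgt, hγ1, hγ2⟩ := Ub _ A₁ A₂ h₁ h₂ hdj rfl β₁ hβ₁b
    obtain ⟨k2a, k2b, k2c⟩ := hfil b₂ (fun x => R x b₂)
    obtain ⟨β₂, hβ₂b, hβ₂gt, hβ₂1, hβ₂2⟩ := Ub _ _ _ k2a k2b k2c rfl γ hγb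
    have hbitβ₁ : ∀ x ∈ A₁ ∪ A₂, (R x β₁ ↔ R x b₁) := by
      intro x hx
      by_cases hR : R x b₁
      · exact iff_of_true (hβ₁1 x (Finset.mem_filter.mpr ⟨hx, hR⟩)) hR
      · exact iff_of_false (fun h => hβ₁2 x (Finset.mem_filter.mpr ⟨hx, hR⟩) h) hR
    have hbitβ₂ : ∀ x ∈ A₁ ∪ A₂, (R x β₂ ↔ R x b₂) := by
      intro x hx
      by_cases hR : R x b₂
      · exact iff_of_true (hβ₂1 x (Finset.mem_filter.mpr ⟨hx, hR⟩)) hR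
      · exact iff_of_false (fun h => hβ₂2 x (Finset.mem_filter.mpr ⟨hx, hR⟩) h) hR
    obtain ⟨g, ⟨hal, hac, haR⟩, hgA, hg₁, hg₂⟩ := hmapFin (A₁ ∪ A₂) hAred β₁ β₂ b₁ b₂
      hβ₁b hβ₂b hb₁ hb₂ (lt_trans hγgt hβ₂gt) hbb hbitβ₁ hbitβ₂
    refine ⟨g γ, (hac γ).trans hγb, ?_, ?_, ?_, ?_⟩
    · have := (hal β₁ γ).mp hγgt
      rwa [hg₁] at this
    · have := (hal γ β₂).mp hβ₂gt
      rwa [hg₂] at this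
    · intro a ha
      have h5 := hγ1 a ha
      have := (haR a γ).mp h5
      rwa [hgA a (Finset.mem_union_left _ ha)] at this
    · intro a ha
      have h5 := hγ2 a ha
      intro hrc
      refine h5 ?_
      have h7 := haR a γ
      rw [hgA a (Finset.mem_union_right _ ha)] at h7
      exact h7.mpr hrc
  · -- red half
    intro B₁ B₂ h₁ h₂ hdj a₁ a₂ ha₁ ha₂ haa
    have hBblue : ∀ x ∈ B₁ ∪ B₂, red x = false := by
      intro x hx
      rcases Finset.mem_union.mp hx with h | h
      · exact h₁ x h
      · exact h₂ x h
    have hfil : ∀ (P : X → Prop),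
        (∀ x ∈ (B₁ ∪ B₂).filter P, red x = false) ∧
        (∀ x ∈ (B₁ ∪ B₂).filter (fun x => ¬ P x), red x = false) ∧
        Disjoint ((B₁ ∪ B₂).filter P) ((B₁ ∪ B₂).filter (fun x => ¬ P x)) := by
      intro P
      refine ⟨fun x hx => hBblue x (Finset.mem_of_mem_filter x hx),
        fun x hx => hBblue x (Finset.mem_of_mem_filter x hx), ?_⟩
      rw [Finset.disjoint_left]
      intro x hx hx'
      exact (Finset.mem_filter.mp hx').2 (Finset.mem_filter.mp hx).2
    obtain ⟨k2a, k2b, k2c⟩ := hfil (fun y => R a₂ y)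
    obtain ⟨α₂, hα₂r, hα₂lt, hα₂1, hα₂2⟩ := Ur _ _ _ k2a k2b k2c rfl a₁ ha₁
    obtain ⟨γ, hγr, hγlt, hγ1, hγ2⟩ := Ur _ B₁ B₂ h₁ h₂ hdj rfl α₂ hα₂r
    obtain ⟨k1a, k1b, k1c⟩ := hfil (fun y => R a₁ y)
    obtain ⟨α₁, hα₁r, hα₁lt, hα₁1, hα₁2⟩ := Ur _ _ _ k1a k1b k1c rfl γ hγr
    have hbitα₁ : ∀ y ∈ B₁ ∪ B₂, (R α₁ y ↔ R a₁ y) := by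
      intro y hy
      by_cases hR : R a₁ y
      · exact iff_of_true (hα₁1 y (Finset.mem_filter.mpr ⟨hy, hR⟩)) hR
      · exact iff_of_false (fun h => hα₁2 y (Finset.mem_filter.mpr ⟨hy, hR⟩) h) hR
    have hbitα₂ : ∀ y ∈ B₁ ∪ B₂, (R α₂ y ↔ R a₂ y) := by
      intro y hy
      by_cases hR : R a₂ y
      · exact iff_of_true (hα₂1 y (Finset.mem_filter.mpr ⟨hy, hR⟩)) hR
      · exact iff_of_false (fun h => hα₂2 y (Finset.mem_filter.mpr ⟨hy, hR⟩) h) hR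
    obtain ⟨g, ⟨hal, hac, haR⟩, hgB, hg₁, hg₂⟩ := hmapFinR (B₁ ∪ B₂) hBblue α₁ α₂ a₁ a₂
      hα₁r hα₂r ha₁ ha₂ (lt_trans hα₁lt hγlt) haa hbitα₁ hbitα₂
    refine ⟨g γ, (hac γ).trans hγr, ?_, ?_, ?_, ?_⟩
    · have := (hal α₁ γ).mp hα₁lt
      rwa [hg₁] at this
    · have := (hal γ α₂).mp hγlt
      rwa [hg₂] at this
    · intro b hb
      have h5 := hγ1 b hb
      have := (haR γ b).mp h5
      rwa [hgB b (Finset.mem_union_left _ hb)] at this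
    · intro b hb
      have h5 := hγ2 b hb
      intro hrc
      refine h5 ?_
      have h7 := haR γ b
      rw [hgB b (Finset.mem_union_right _ hb)] at h7
      exact h7.mpr hrc
end

section
/- Let (X, <, R) and (X', <', R') be two countable ordered bipartite graphs, in each of which every red point precedes every blue point, both colour classes are order-isomorphic to ℚ, and the unbounded generic witness property holds: for every pair of finite disjoint subsets A₁ and A₂ of the red class, the set of blue points joined to all members of A₁ and to no members of A₂ is dense in the blue class, and symmetrically for finite disjoint subsets of the blue class with witnesses dense in the red class. Then (X, <, R) and (X', <', R') are isomorphic as ordered coloured bipartite graphs. -/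
/-- The unbounded generic witness property for an ordered coloured bipartite graph in
which all red points precede all blue points: for all finite disjoint sets of red points
the corresponding sets of blue witnesses are dense in the blue class, and symmetrically. -/
def UnboundedGenericWitness {X : Type*} [LinearOrder X]
    (red : X → Bool) (R : X → X → Prop) : Prop :=
  (∀ A₁ A₂ : Finset X, (∀ a ∈ A₁, red a = true) → (∀ a ∈ A₂, red a = true) →
    Disjoint A₁ A₂ → ∀ b₁ b₂ : X, red b₁ = false → red b₂ = false → b₁ < b₂ →
      ∃ c, red c = false ∧ b₁ < c ∧ c < b₂ ∧
        (∀ a ∈ A₁, R a c) ∧ (∀ a ∈ A₂, ¬ R a c)) ∧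
  (∀ B₁ B₂ : Finset X, (∀ b ∈ B₁, red b = false) → (∀ b ∈ B₂, red b = false) →
    Disjoint B₁ B₂ → ∀ a₁ a₂ : X, red a₁ = true → red a₂ = true → a₁ < a₂ →
      ∃ c, red c = true ∧ a₁ < c ∧ c < a₂ ∧
        (∀ b ∈ B₁, R c b) ∧ (∀ b ∈ B₂, ¬ R c b))


/-- A finite partial isomorphism, recorded as a finite set of pairs. -/
def BFGood {X X' : Type*} [LinearOrder X] [LinearOrder X']
    (red : X → Bool) (R : X → X → Prop) (red' : X' → Bool) (R' : X' → X' → Prop)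
    (s : Finset (X × X')) : Prop :=
  ∀ p ∈ s, ∀ q ∈ s,
    (p.1 < q.1 ↔ p.2 < q.2) ∧ red' p.2 = red p.1 ∧ (R p.1 q.1 ↔ R' p.2 q.2)

lemma bf_swapGood {X X' : Type*} [LinearOrder X] [LinearOrder X']
    {red : X → Bool} {R : X → X → Prop} {red' : X' → Bool} {R' : X' → X' → Prop}
    {s : Finset (X × X')} (hs : BFGood red R red' R' s) :
    BFGood red' R' red R (s.image Prod.swap) := by
  intro p hp q hq
  obtain ⟨p₀, hp₀, rfl⟩ := Finset.mem_image.1 hp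
  obtain ⟨q₀, hq₀, rfl⟩ := Finset.mem_image.1 hq
  obtain ⟨h1, h2, h3⟩ := hs p₀ hp₀ q₀ hq₀
  exact ⟨h1.symm, h2.symm, h3.symm⟩

lemma dense_unbounded {Y : Type*} [LinearOrder Y] {P : Y → Prop}
    (h : Nonempty ({x : Y // P x} ≃o ℚ)) :
    (∃ a, P a) ∧ (∀ v, P v → ∃ a, P a ∧ a < v) ∧ (∀ v, P v → ∃ a, P a ∧ v < a) := by
  obtain ⟨e⟩ := h
  refine ⟨⟨(e.symm 0).1, (e.symm 0).2⟩, ?_, ?_⟩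
  · intro v hv
    refine ⟨(e.symm (e ⟨v, hv⟩ - 1)).1, (e.symm _).2, ?_⟩
    have h1 : e.symm (e ⟨v, hv⟩ - 1) < ⟨v, hv⟩ := by
      have := e.symm.lt_iff_lt.2 (show e ⟨v, hv⟩ - 1 < e ⟨v, hv⟩ by linarith)
      rwa [e.symm_apply_apply] at this
    exact Subtype.coe_lt_coe.2 h1
  · intro v hv
    refine ⟨(e.symm (e ⟨v, hv⟩ + 1)).1, (e.symm _).2, ?_⟩
    have h1 : (⟨v, hv⟩ : {x : Y // P x}) < e.symm (e ⟨v, hv⟩ + 1) := by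
      have := e.symm.lt_iff_lt.2 (show e ⟨v, hv⟩ < e ⟨v, hv⟩ + 1 by linarith)
      rwa [e.symm_apply_apply] at this
    exact Subtype.coe_lt_coe.2 h1

lemma bf_extend {X X' : Type*} [LinearOrder X] [LinearOrder X']
    {red : X → Bool} {R : X → X → Prop} {red' : X' → Bool} {R' : X' → X' → Prop}
    (k : Bool)
    (hSymm : ∀ x y, R x y → R y x) (hBip : ∀ x y, R x y → red x ≠ red y)
    (hSymm' : ∀ x y, R' x y → R' y x) (hBip' : ∀ x y, R' x y → red' x ≠ red' y)
    (hcross : ∀ u v, red u = k → red v = (!k) → (u < v ↔ k = true))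
    (hcross' : ∀ u v, red' u = k → red' v = (!k) → (u < v ↔ k = true))
    (hN : ∃ a : X', red' a = k)
    (hU : ∀ v : X', red' v = k → ∃ a, red' a = k ∧ a < v)
    (hU' : ∀ v : X', red' v = k → ∃ a, red' a = k ∧ v < a)
    (hWk : ∀ B₁ B₂ : Finset X', (∀ b ∈ B₁, red' b = (!k)) → (∀ b ∈ B₂, red' b = (!k)) →
      Disjoint B₁ B₂ → ∀ a₁ a₂ : X', red' a₁ = k → red' a₂ = k → a₁ < a₂ →
      ∃ c, red' c = k ∧ a₁ < c ∧ c < a₂ ∧ (∀ b ∈ B₁, R' c b) ∧ (∀ b ∈ B₂, ¬ R' c b))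
    {s : Finset (X × X')} (hs : BFGood red R red' R' s)
    (x : X) (hx : red x = k) :
    ∃ x', BFGood red R red' R' (insert (x, x') s) := by
  classical
  by_cases hdom : ∃ p ∈ s, p.1 = x
  · obtain ⟨p, hp, hpx⟩ := hdom
    refine ⟨p.2, ?_⟩
    have hpe : (x, p.2) = p := by rw [← hpx]
    rw [hpe, Finset.insert_eq_self.2 hp]
    exact hs
  push_neg at hdom
  have hmono : ∀ p ∈ s, ∀ q ∈ s, p.1 ≤ q.1 → p.2 ≤ q.2 := by
    intro p hp q hq h
    by_contra h'
    exact not_lt.2 h ((hs q hq p hp).1.mpr (lt_of_not_ge h'))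
  have hcol : ∀ p ∈ s, red' p.2 = red p.1 := fun p hp => (hs p hp p hp).2.1
  have bnot : ∀ b : Bool, b ≠ k → b = !k := by intro b; cases b <;> cases k <;> simp
  have hinj : ∀ p ∈ s, ∀ q ∈ s, p.2 = q.2 → p.1 = q.1 := by
    intro p hp q hq h
    rcases lt_trichotomy p.1 q.1 with h'|h'|h'
    · exact absurd ((hs p hp q hq).1.mp h') (by rw [h]; exact lt_irrefl _)
    · exact h'
    · exact absurd ((hs q hq p hp).1.mp h') (by rw [h]; exact lt_irrefl _)
  set D1 : Finset X' := (s.filter (fun p => R x p.1)).image Prod.snd with hD1def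
  set D2 : Finset X' := (s.filter (fun p => red p.1 = !k ∧ ¬ R x p.1)).image Prod.snd with hD2def
  have hD1 : ∀ b ∈ D1, red' b = !k := by
    intro b hb
    obtain ⟨p, hp, rfl⟩ := Finset.mem_image.1 hb
    rw [Finset.mem_filter] at hp
    have h1 : red x ≠ red p.1 := hBip x p.1 hp.2
    rw [hx] at h1
    rw [hcol p hp.1]
    exact bnot _ (Ne.symm h1)
  have hD2 : ∀ b ∈ D2, red' b = !k := by
    intro b hb
    obtain ⟨p, hp, rfl⟩ := Finset.mem_image.1 hb
    rw [Finset.mem_filter] at hp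
    rw [hcol p hp.1]
    exact hp.2.1
  have hdisj : Disjoint D1 D2 := by
    rw [Finset.disjoint_left]
    intro b hb1 hb2
    obtain ⟨p, hp, hpb⟩ := Finset.mem_image.1 hb1
    obtain ⟨q, hq, hqb⟩ := Finset.mem_image.1 hb2
    rw [Finset.mem_filter] at hp hq
    have h1 : p.1 = q.1 := hinj p hp.1 q hq.1 (hpb.trans hqb.symm)
    rw [h1] at hp
    exact hq.2.2 hp.2
  set Lo : Finset (X × X') := s.filter (fun p => red p.1 = k ∧ p.1 < x) with hLodef
  set Hi : Finset (X × X') := s.filter (fun p => red p.1 = k ∧ x < p.1) with hHidef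
  have hLos : ∀ p ∈ Lo, p ∈ s := fun p hp => (Finset.mem_filter.1 hp).1
  have hHis : ∀ p ∈ Hi, p ∈ s := fun p hp => (Finset.mem_filter.1 hp).1
  have key : ∃ a₁ a₂ : X', red' a₁ = k ∧ red' a₂ = k ∧ a₁ < a₂ ∧
      (∀ p ∈ Lo, p.2 ≤ a₁) ∧ (∀ p ∈ Hi, a₂ ≤ p.2) := by
    rcases Lo.eq_empty_or_nonempty with hLo | hLo <;>
      rcases Hi.eq_empty_or_nonempty with hHi | hHi
    · obtain ⟨a₂, ha₂⟩ := hN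
      obtain ⟨a₁, ha₁, h12⟩ := hU a₂ ha₂
      exact ⟨a₁, a₂, ha₁, ha₂, h12, by simp [hLo], by simp [hHi]⟩
    · obtain ⟨q₀, hq₀, hq₀min⟩ := Hi.exists_min_image Prod.fst hHi
      have hq₀f := Finset.mem_filter.1 hq₀
      have ha₂ : red' q₀.2 = k := by rw [hcol _ hq₀f.1]; exact hq₀f.2.1
      obtain ⟨a₁, ha₁, h12⟩ := hU q₀.2 ha₂
      refine ⟨a₁, q₀.2, ha₁, ha₂, h12, by simp [hLo], ?_⟩
      intro p hp
      exact hmono q₀ hq₀f.1 p (hHis p hp) (hq₀min p hp)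
    · obtain ⟨p₀, hp₀, hp₀max⟩ := Lo.exists_max_image Prod.fst hLo
      have hp₀f := Finset.mem_filter.1 hp₀
      have ha₁ : red' p₀.2 = k := by rw [hcol _ hp₀f.1]; exact hp₀f.2.1
      obtain ⟨a₂, ha₂, h12⟩ := hU' p₀.2 ha₁
      refine ⟨p₀.2, a₂, ha₁, ha₂, h12, ?_, by simp [hHi]⟩
      intro p hp
      exact hmono p (hLos p hp) p₀ hp₀f.1 (hp₀max p hp)
    · obtain ⟨p₀, hp₀, hp₀max⟩ := Lo.exists_max_image Prod.fst hLo
      obtain ⟨q₀, hq₀, hq₀min⟩ := Hi.exists_min_image Prod.fst hHi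
      have hp₀f := Finset.mem_filter.1 hp₀
      have hq₀f := Finset.mem_filter.1 hq₀
      have ha₁ : red' p₀.2 = k := by rw [hcol _ hp₀f.1]; exact hp₀f.2.1
      have ha₂ : red' q₀.2 = k := by rw [hcol _ hq₀f.1]; exact hq₀f.2.1
      have h12 : p₀.2 < q₀.2 :=
        (hs p₀ hp₀f.1 q₀ hq₀f.1).1.mp (hp₀f.2.2.trans hq₀f.2.2)
      refine ⟨p₀.2, q₀.2, ha₁, ha₂, h12, ?_, ?_⟩
      · intro p hp; exact hmono p (hLos p hp) p₀ hp₀f.1 (hp₀max p hp)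
      · intro p hp; exact hmono q₀ hq₀f.1 p (hHis p hp) (hq₀min p hp)
  obtain ⟨a₁, a₂, ha₁, ha₂, h12, hLoB, hHiB⟩ := key
  obtain ⟨c, hck, hc1, hc2, hcR1, hcR2⟩ := hWk D1 D2 hD1 hD2 hdisj a₁ a₂ ha₁ ha₂ h12
  have horder : ∀ q ∈ s, (x < q.1 ↔ c < q.2) ∧ (q.1 < x ↔ q.2 < c) := by
    intro q hq
    by_cases hqk : red q.1 = k
    · rcases lt_trichotomy q.1 x with h|h|h
      · have hqLo : q ∈ Lo := Finset.mem_filter.2 ⟨hq, hqk, h⟩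
        have h2c : q.2 < c := lt_of_le_of_lt (hLoB q hqLo) hc1
        exact ⟨iff_of_false (not_lt.2 h.le) (not_lt.2 h2c.le), iff_of_true h h2c⟩
      · exact absurd h (hdom q hq)
      · have hqHi : q ∈ Hi := Finset.mem_filter.2 ⟨hq, hqk, h⟩
        have h2c : c < q.2 := lt_of_lt_of_le hc2 (hHiB q hqHi)
        exact ⟨iff_of_true h h2c, iff_of_false (not_lt.2 h.le) (not_lt.2 h2c.le)⟩
    · have hq1 : red q.1 = !k := bnot _ hqk
      have hq2 : red' q.2 = !k := by rw [hcol q hq]; exact hq1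
      have h1 : x < q.1 ↔ c < q.2 := (hcross x q.1 hx hq1).trans (hcross' c q.2 hck hq2).symm
      have hxne : q.1 ≠ x := by
        intro e; rw [e, hx] at hq1; cases k <;> simp at hq1
      have hcne : q.2 ≠ c := by
        intro e; rw [e, hck] at hq2; cases k <;> simp at hq2
      have h2 : q.1 < x ↔ q.2 < c := by
        rcases Bool.eq_false_or_eq_true k with hk | hk
        · have t1 : x < q.1 := (hcross x q.1 hx hq1).mpr hk
          have t2 : c < q.2 := (hcross' c q.2 hck hq2).mpr hk
          exact iff_of_false (lt_asymm t1) (lt_asymm t2)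
        · have n1 : ¬ x < q.1 := by rw [hcross x q.1 hx hq1, hk]; simp
          have n2 : ¬ c < q.2 := by rw [hcross' c q.2 hck hq2, hk]; simp
          exact iff_of_true (lt_of_le_of_ne (not_lt.1 n1) hxne) (lt_of_le_of_ne (not_lt.1 n2) hcne)
      exact ⟨h1, h2⟩
  have hrel : ∀ q ∈ s, (R x q.1 ↔ R' c q.2) := by
    intro q hq
    by_cases hqk : red q.1 = k
    · refine iff_of_false (fun h => hBip x q.1 h (by rw [hx, hqk]))
        (fun h => hBip' c q.2 h (by rw [hck, hcol q hq, hqk]))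
    · by_cases hR : R x q.1
      · exact iff_of_true hR (hcR1 _ (Finset.mem_image.2 ⟨q, Finset.mem_filter.2 ⟨hq, hR⟩, rfl⟩))
      · exact iff_of_false hR
          (hcR2 _ (Finset.mem_image.2 ⟨q, Finset.mem_filter.2 ⟨hq, bnot _ hqk, hR⟩, rfl⟩))
  refine ⟨c, ?_⟩
  intro p hp q hq
  rw [Finset.mem_insert] at hp hq
  rcases hp with rfl | hp <;> rcases hq with rfl | hq
  · exact ⟨iff_of_false (lt_irrefl _) (lt_irrefl _), by rw [hck, hx],
      iff_of_false (fun h => hBip x x h rfl) (fun h => hBip' c c h rfl)⟩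
  · exact ⟨(horder q hq).1, by rw [hck, hx], hrel q hq⟩
  · exact ⟨(horder p hp).2, hcol p hp,
      ⟨fun h => hSymm' _ _ ((hrel p hp).1 (hSymm _ _ h)),
       fun h => hSymm _ _ ((hrel p hp).2 (hSymm' _ _ h))⟩⟩
  · exact hs p hp q hq

lemma bf_forth {X X' : Type*} [LinearOrder X] [LinearOrder X']
    {red : X → Bool} {R : X → X → Prop} {red' : X' → Bool} {R' : X' → X' → Prop}
    (hSymm : ∀ x y, R x y → R y x) (hBip : ∀ x y, R x y → red x ≠ red y)
    (hlt : ∀ x y, red x = true → red y = false → x < y)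
    (hSymm' : ∀ x y, R' x y → R' y x) (hBip' : ∀ x y, R' x y → red' x ≠ red' y)
    (hlt' : ∀ x y, red' x = true → red' y = false → x < y)
    (hQr' : Nonempty ({x : X' // red' x = true} ≃o ℚ))
    (hQb' : Nonempty ({x : X' // red' x = false} ≃o ℚ))
    (hW' : UnboundedGenericWitness red' R')
    {s : Finset (X × X')} (hs : BFGood red R red' R' s) (x : X) :
    ∃ x', BFGood red R red' R' (insert (x, x') s) := by
  obtain ⟨hNr, hUr, hUr'⟩ := dense_unbounded hQr'
  obtain ⟨hNb, hUb, hUb'⟩ := dense_unbounded hQb'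
  rcases Bool.eq_false_or_eq_true (red x) with hx | hx
  swap
  · -- x is blue : k = false
    refine bf_extend false hSymm hBip hSymm' hBip'
      (fun u v hu hv => iff_of_false (asymm (hlt v u (by simpa using hv) hu)) (by simp))
      (fun u v hu hv => iff_of_false (asymm (hlt' v u (by simpa using hv) hu)) (by simp))
      hNb hUb hUb' ?_ hs x hx
    intro B₁ B₂ h1 h2 hd a₁ a₂ ha₁ ha₂ h12
    obtain ⟨c, hc, hc1, hc2, hr1, hr2⟩ :=
      hW'.1 B₁ B₂ (by simpa using h1) (by simpa using h2) hd a₁ a₂ ha₁ ha₂ h12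
    exact ⟨c, hc, hc1, hc2, fun b hb => hSymm' _ _ (hr1 b hb),
      fun b hb h => hr2 b hb (hSymm' _ _ h)⟩
  · -- x is red : k = true
    refine bf_extend true hSymm hBip hSymm' hBip'
      (fun u v hu hv => iff_of_true (hlt u v hu (by simpa using hv)) rfl)
      (fun u v hu hv => iff_of_true (hlt' u v hu (by simpa using hv)) rfl)
      hNr hUr hUr' ?_ hs x hx
    intro B₁ B₂ h1 h2 hd a₁ a₂ ha₁ ha₂ h12
    exact hW'.2 B₁ B₂ (by simpa using h1) (by simpa using h2) hd a₁ a₂ ha₁ ha₂ h12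

/-- Any two countable ordered bipartite graphs in which all reds precede all blues, both
colour classes are copies of ℚ, and the unbounded generic witness property holds, are
isomorphic. -/
theorem stmt14 {X X' : Type*} [LinearOrder X] [LinearOrder X'] [Countable X] [Countable X']
    (red : X → Bool) (R : X → X → Prop)
    (hSymm : ∀ x y, R x y → R y x) (hIrr : ∀ x, ¬ R x x)
    (hBip : ∀ x y, R x y → red x ≠ red y)
    (hlt : ∀ x y, red x = true → red y = false → x < y)
    (hQr : Nonempty ({x : X // red x = true} ≃o ℚ))
    (hQb : Nonempty ({x : X // red x = false} ≃o ℚ))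
    (hW : UnboundedGenericWitness red R)
    (red' : X' → Bool) (R' : X' → X' → Prop)
    (hSymm' : ∀ x y, R' x y → R' y x) (hIrr' : ∀ x, ¬ R' x x)
    (hBip' : ∀ x y, R' x y → red' x ≠ red' y)
    (hlt' : ∀ x y, red' x = true → red' y = false → x < y)
    (hQr' : Nonempty ({x : X' // red' x = true} ≃o ℚ))
    (hQb' : Nonempty ({x : X' // red' x = false} ≃o ℚ))
    (hW' : UnboundedGenericWitness red' R') :
    ∃ g : X ≃ X', (∀ x y : X, x < y ↔ g x < g y) ∧
      (∀ x : X, red' (g x) = red x) ∧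
      (∀ x y : X, R x y ↔ R' (g x) (g y)) := by
  classical
  obtain ⟨x₀, hx₀⟩ := (dense_unbounded hQr).1
  obtain ⟨x₀', hx₀'⟩ := (dense_unbounded hQr').1
  have : Nonempty X := ⟨x₀⟩
  have : Nonempty X' := ⟨x₀'⟩
  obtain ⟨e, he⟩ := exists_surjective_nat X
  obtain ⟨e', he'⟩ := exists_surjective_nat X'
  have forth : ∀ (s : Finset (X × X')), BFGood red R red' R' s → ∀ x : X,
      ∃ x', BFGood red R red' R' (insert (x, x') s) :=
    fun s hs x => bf_forth hSymm hBip hlt hSymm' hBip' hlt' hQr' hQb' hW' hs x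
  have back : ∀ (s : Finset (X × X')), BFGood red R red' R' s → ∀ x' : X',
      ∃ x, BFGood red R red' R' (insert (x, x') s) := by
    intro s hs x'
    obtain ⟨y, hy⟩ := bf_forth hSymm' hBip' hlt' hSymm hBip hlt hQr hQb hW (bf_swapGood hs) x'
    refine ⟨y, ?_⟩
    have h2 := bf_swapGood hy
    rwa [Finset.image_insert, Finset.image_image,
      show (Prod.swap ∘ Prod.swap : X × X' → X × X') = id by ext p <;> simp,
      Finset.image_id, show Prod.swap (x', y) = (y, x') from rfl] at h2
  have key : ∀ (n : ℕ) (s : Finset (X × X')), BFGood red R red' R' s →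
      ∃ t, BFGood red R red' R' t ∧ s ⊆ t ∧
        (∃ y, (e n, y) ∈ t) ∧ (∃ z, (z, e' n) ∈ t) := by
    intro n s hs
    obtain ⟨y, hy⟩ := forth s hs (e n)
    obtain ⟨z, hz⟩ := back _ hy (e' n)
    refine ⟨insert (z, e' n) (insert (e n, y) s), hz, ?_, ⟨y, by simp⟩, ⟨z, by simp⟩⟩
    intro p hp
    simp [hp]
  let T : ℕ → {s : Finset (X × X') // BFGood red R red' R' s} :=
    fun n => Nat.rec ⟨∅, fun p hp => absurd hp (Finset.notMem_empty p)⟩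
      (fun n prev => ⟨(key n prev.1 prev.2).choose, (key n prev.1 prev.2).choose_spec.1⟩) n
  have hT : ∀ n, (T n).1 ⊆ (T (n+1)).1 ∧ (∃ y, (e n, y) ∈ (T (n+1)).1) ∧
      (∃ z, (z, e' n) ∈ (T (n+1)).1) := by
    intro n
    have h := (key n (T n).1 (T n).2).choose_spec
    exact ⟨h.2.1, h.2.2.1, h.2.2.2⟩
  have hmono : ∀ m n : ℕ, m ≤ n → (T m).1 ⊆ (T n).1 := by
    intro m n h
    induction n, h using Nat.le_induction with
    | base => exact subset_rfl
    | succ n hmn ih => exact ih.trans (hT n).1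
  have hgood : ∀ {p q : X × X'}, (∃ n, p ∈ (T n).1) → (∃ n, q ∈ (T n).1) →
      ((p.1 < q.1 ↔ p.2 < q.2) ∧ red' p.2 = red p.1 ∧ (R p.1 q.1 ↔ R' p.2 q.2)) := by
    rintro p q ⟨m, hm⟩ ⟨n, hn⟩
    exact (T (max m n)).2 p (hmono m _ (le_max_left m n) hm)
      q (hmono n _ (le_max_right m n) hn)
  have htot : ∀ x : X, ∃ x', ∃ n, (x, x') ∈ (T n).1 := by
    intro x
    obtain ⟨n, rfl⟩ := he x
    obtain ⟨y, hy⟩ := (hT n).2.1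
    exact ⟨y, n + 1, hy⟩
  have htot' : ∀ x' : X', ∃ x, ∃ n, (x, x') ∈ (T n).1 := by
    intro x'
    obtain ⟨n, rfl⟩ := he' x'
    obtain ⟨z, hz⟩ := (hT n).2.2
    exact ⟨z, n + 1, hz⟩
  choose g hg using htot
  choose g' hg' using htot'
  have huniq : ∀ {a : X} {a' b' : X'}, (∃ n, (a, a') ∈ (T n).1) →
      (∃ n, (a, b') ∈ (T n).1) → a' = b' := by
    intro a a' b' h1 h2
    have H1 := (hgood h1 h2).1
    have H2 := (hgood h2 h1).1
    exact le_antisymm (not_lt.1 fun h => lt_irrefl a (H2.mpr h))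
      (not_lt.1 fun h => lt_irrefl a (H1.mpr h))
  have huniq' : ∀ {a b : X} {a' : X'}, (∃ n, (a, a') ∈ (T n).1) →
      (∃ n, (b, a') ∈ (T n).1) → a = b := by
    intro a b a' h1 h2
    have H1 := (hgood h1 h2).1
    have H2 := (hgood h2 h1).1
    exact le_antisymm (not_lt.1 fun h => lt_irrefl a' (H2.mp h))
      (not_lt.1 fun h => lt_irrefl a' (H1.mp h))
  refine ⟨⟨g, g', fun x => huniq' (hg' (g x)) (hg x), fun x' => huniq (hg (g' x')) (hg' x')⟩,
    fun x y => (hgood (hg x) (hg y)).1, fun x => (hgood (hg x) (hg x)).2.1,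
    fun x y => (hgood (hg x) (hg y)).2.2⟩
end

section
/- Let (X, <, R) be a countable homogeneous ordered bipartite graph whose underlying coloured order is the generic 2-coloured linear order ℚ₂ (a countable dense linear order without endpoints in which both red and blue points are dense), and let R₁ = {(a,b) ∈ R : a red, b blue, a < b}. Suppose R₁ is not empty and is not right complete (i.e., R₁ ≠ {(a,b) : a red, b blue, a < b}). Then for every red point a, both R₁(a) = {b ∈ X_b : b > a and R(a,b)} and its complement {b ∈ X_b : b > a and ¬R(a,b)} are infinite and dense in the interval (a, ∞). -/
section Aux
variable {X : Type*} [LinearOrder X] (red : X → Bool) (R : X → X → Prop)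

lemma auto_single (hIrr : ∀ x, ¬ R x x)
    (hHom : Homogeneous (· < · : X → X → Prop) red R)
    {p q : X} (hc : red q = red p) :
    ∃ g : X ≃ X, IsAuto (· < · : X → X → Prop) red R g ∧ g p = q := by
  have hiso : IsPartialIso (· < · : X → X → Prop) red R {p} (fun _ => q) := by
    refine ⟨?_, ?_, ?_⟩
    · intro x hx y hy
      simp only [Finset.mem_singleton] at hx hy
      subst hx; subst hy
      exact iff_of_false (lt_irrefl _) (lt_irrefl _)
    · intro x hx
      simp only [Finset.mem_singleton] at hx; subst hx; exact hc
    · intro x hx y hy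
      simp only [Finset.mem_singleton] at hx hy
      subst hx; subst hy
      exact iff_of_false (hIrr _) (hIrr _)
  obtain ⟨g, hg, hmap⟩ := hHom {p} (fun _ => q) hiso
  exact ⟨g, hg, hmap p (Finset.mem_singleton_self p)⟩

lemma auto_pair (hSymm : ∀ x y, R x y → R y x) (hIrr : ∀ x, ¬ R x x)
    (hHom : Homogeneous (· < · : X → X → Prop) red R)
    {p₁ p₂ q₁ q₂ : X} (hp : p₁ < p₂) (hq : q₁ < q₂)
    (hc₁ : red q₁ = red p₁) (hc₂ : red q₂ = red p₂)
    (hR : R p₁ p₂ ↔ R q₁ q₂) :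
    ∃ g : X ≃ X, IsAuto (· < · : X → X → Prop) red R g ∧ g p₁ = q₁ ∧ g p₂ = q₂ := by
  have hne : p₂ ≠ p₁ := ne_of_gt hp
  set f : X → X := fun x => if x = p₁ then q₁ else q₂ with hf
  have hfp₁ : f p₁ = q₁ := by simp [hf]
  have hfp₂ : f p₂ = q₂ := by simp [hf, hne]
  have hiso : IsPartialIso (· < · : X → X → Prop) red R {p₁, p₂} f := by
    refine ⟨?_, ?_, ?_⟩
    · intro x hx y hy
      simp only [Finset.mem_insert, Finset.mem_singleton] at hx hy
      rcases hx with rfl | rfl <;> rcases hy with rfl | rfl <;>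
        simp only [hfp₁, hfp₂]
      · exact iff_of_false (lt_irrefl _) (lt_irrefl _)
      · exact iff_of_true hp hq
      · exact iff_of_false (asymm hp) (asymm hq)
      · exact iff_of_false (lt_irrefl _) (lt_irrefl _)
    · intro x hx
      simp only [Finset.mem_insert, Finset.mem_singleton] at hx
      rcases hx with rfl | rfl
      · rw [hfp₁]; exact hc₁
      · rw [hfp₂]; exact hc₂
    · intro x hx y hy
      simp only [Finset.mem_insert, Finset.mem_singleton] at hx hy
      rcases hx with rfl | rfl <;> rcases hy with rfl | rfl <;>
        simp only [hfp₁, hfp₂]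
      · exact iff_of_false (hIrr _) (hIrr _)
      · exact hR
      · exact ⟨fun h => hSymm _ _ (hR.mp (hSymm _ _ h)),
          fun h => hSymm _ _ (hR.mpr (hSymm _ _ h))⟩
      · exact iff_of_false (hIrr _) (hIrr _)
  obtain ⟨g, hg, hmap⟩ := hHom {p₁, p₂} f hiso
  exact ⟨g, hg, by rw [hmap p₁ (by simp), hfp₁],
    by rw [hmap p₂ (by simp), hfp₂]⟩

lemma auto_triple (hSymm : ∀ x y, R x y → R y x) (hIrr : ∀ x, ¬ R x x)
    (hHom : Homogeneous (· < · : X → X → Prop) red R)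
    {p₁ p₂ p₃ q₁ q₂ q₃ : X} (hp12 : p₁ < p₂) (hp23 : p₂ < p₃)
    (hq12 : q₁ < q₂) (hq23 : q₂ < q₃)
    (hc₁ : red q₁ = red p₁) (hc₂ : red q₂ = red p₂) (hc₃ : red q₃ = red p₃)
    (hR12 : R p₁ p₂ ↔ R q₁ q₂) (hR13 : R p₁ p₃ ↔ R q₁ q₃)
    (hR23 : R p₂ p₃ ↔ R q₂ q₃) :
    ∃ g : X ≃ X, IsAuto (· < · : X → X → Prop) red R g ∧
      g p₁ = q₁ ∧ g p₂ = q₂ ∧ g p₃ = q₃ := by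
  have h21 : p₂ ≠ p₁ := ne_of_gt hp12
  have h31 : p₃ ≠ p₁ := ne_of_gt (hp12.trans hp23)
  have h32 : p₃ ≠ p₂ := ne_of_gt hp23
  have hp13 := hp12.trans hp23
  have hq13 := hq12.trans hq23
  set f : X → X := fun x => if x = p₁ then q₁ else if x = p₂ then q₂ else q₃ with hf
  have hfp₁ : f p₁ = q₁ := by simp [hf]
  have hfp₂ : f p₂ = q₂ := by simp [hf, h21]
  have hfp₃ : f p₃ = q₃ := by simp [hf, h31, h32]
  have symmIff : ∀ {x y x' y' : X}, (R x y ↔ R x' y') → (R y x ↔ R y' x') :=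
    fun h => ⟨fun hr => hSymm _ _ (h.mp (hSymm _ _ hr)),
      fun hr => hSymm _ _ (h.mpr (hSymm _ _ hr))⟩
  have hiso : IsPartialIso (· < · : X → X → Prop) red R {p₁, p₂, p₃} f := by
    refine ⟨?_, ?_, ?_⟩
    · intro x hx y hy
      simp only [Finset.mem_insert, Finset.mem_singleton] at hx hy
      rcases hx with rfl | rfl | rfl <;> rcases hy with rfl | rfl | rfl <;>
        simp only [hfp₁, hfp₂, hfp₃]
      · exact iff_of_false (lt_irrefl _) (lt_irrefl _)
      · exact iff_of_true hp12 hq12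
      · exact iff_of_true hp13 hq13
      · exact iff_of_false (asymm hp12) (asymm hq12)
      · exact iff_of_false (lt_irrefl _) (lt_irrefl _)
      · exact iff_of_true hp23 hq23
      · exact iff_of_false (asymm hp13) (asymm hq13)
      · exact iff_of_false (asymm hp23) (asymm hq23)
      · exact iff_of_false (lt_irrefl _) (lt_irrefl _)
    · intro x hx
      simp only [Finset.mem_insert, Finset.mem_singleton] at hx
      rcases hx with rfl | rfl | rfl
      · rw [hfp₁]; exact hc₁
      · rw [hfp₂]; exact hc₂
      · rw [hfp₃]; exact hc₃
    · intro x hx y hy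
      simp only [Finset.mem_insert, Finset.mem_singleton] at hx hy
      rcases hx with rfl | rfl | rfl <;> rcases hy with rfl | rfl | rfl <;>
        simp only [hfp₁, hfp₂, hfp₃]
      · exact iff_of_false (hIrr _) (hIrr _)
      · exact hR12
      · exact hR13
      · exact symmIff hR12
      · exact iff_of_false (hIrr _) (hIrr _)
      · exact hR23
      · exact symmIff hR13
      · exact symmIff hR23
      · exact iff_of_false (hIrr _) (hIrr _)
  obtain ⟨g, hg, hmap⟩ := hHom {p₁, p₂, p₃} f hiso
  exact ⟨g, hg, by rw [hmap p₁ (by simp), hfp₁],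
    by rw [hmap p₂ (by simp), hfp₂], by rw [hmap p₃ (by simp), hfp₃]⟩

end Aux

/-- Case (vi): the underlying coloured order is ℚ₂ (no endpoints, both colours dense).
If `R₁ = {(a,b) ∈ R : a red, b blue, a < b}` is neither empty nor right complete, then
for every red point `a` both `R₁(a)` and its complement within the blue part of
`(a, ∞)` are infinite and dense in `(a, ∞)`. -/
theorem stmt16 {X : Type*} [LinearOrder X] [Countable X] [Nonempty X]
    [NoMinOrder X] [NoMaxOrder X]
    (red : X → Bool) (R : X → X → Prop)
    (hSymm : ∀ x y, R x y → R y x) (hIrr : ∀ x, ¬ R x x)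
    (hBip : ∀ x y, R x y → red x ≠ red y)
    (hHom : Homogeneous (· < · : X → X → Prop) red R)
    (hdense : ∀ x y : X, x < y →
      (∃ z, x < z ∧ z < y ∧ red z = true) ∧ (∃ z, x < z ∧ z < y ∧ red z = false))
    (hne : ∃ a b : X, red a = true ∧ red b = false ∧ a < b ∧ R a b)
    (hnrc : ∃ a b : X, red a = true ∧ red b = false ∧ a < b ∧ ¬ R a b) :
    ∀ a : X, red a = true →
      {b : X | red b = false ∧ a < b ∧ R a b}.Infinite ∧
      {b : X | red b = false ∧ a < b ∧ ¬ R a b}.Infinite ∧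
      (∀ x y : X, a ≤ x → x < y →
        ∃ c, red c = false ∧ x < c ∧ c < y ∧ R a c) ∧
      (∀ x y : X, a ≤ x → x < y →
        ∃ c, red c = false ∧ x < c ∧ c < y ∧ ¬ R a c) := by
  -- basic consequences of bipartiteness
  have hSame : ∀ x y : X, red x = red y → ¬ R x y := fun x y he h => hBip x y h he
  have hBlueOf : ∀ x y : X, red x = true → R x y → red y = false := by
    intro x y hx h
    cases hy : red y with
    | false => rfl
    | true => exact absurd (by rw [hx, hy]) (hBip x y h)
  have redBetween : ∀ x y : X, x < y → ∃ z, x < z ∧ z < y ∧ red z = true :=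
    fun x y h => (hdense x y h).1
  have blueBetween : ∀ x y : X, x < y → ∃ z, x < z ∧ z < y ∧ red z = false :=
    fun x y h => (hdense x y h).2
  obtain ⟨a₀, b₀, ha₀, hb₀, hab₀, hR₀⟩ := hne
  obtain ⟨a₁, b₁, ha₁, hb₁, hab₁, hR₁⟩ := hnrc
  -- every red point has a related blue point above it
  have hNex : ∀ c : X, red c = true → ∃ n, red n = false ∧ c < n ∧ R c n := by
    intro c hc
    obtain ⟨g, ⟨hgo, hgc, hgR⟩, hga⟩ :=
      auto_single red R hIrr hHom (p := a₀) (q := c) (hc.trans ha₀.symm)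
    refine ⟨g b₀, by rw [hgc]; exact hb₀, ?_, ?_⟩
    · rw [← hga]; exact (hgo a₀ b₀).mp hab₀
    · rw [← hga]; exact (hgR a₀ b₀).mp hR₀
  -- every red point has an unrelated blue point above it
  have hMex : ∀ c : X, red c = true → ∃ m, red m = false ∧ c < m ∧ ¬ R c m := by
    intro c hc
    obtain ⟨g, ⟨hgo, hgc, hgR⟩, hga⟩ :=
      auto_single red R hIrr hHom (p := a₁) (q := c) (hc.trans ha₁.symm)
    refine ⟨g b₁, by rw [hgc]; exact hb₁, ?_, ?_⟩
    · rw [← hga]; exact (hgo a₁ b₁).mp hab₁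
    · rw [← hga]; intro h; exact hR₁ ((hgR a₁ b₁).mpr h)
  -- pattern MN: an unrelated blue below a related blue
  have hMNex : ∀ c : X, red c = true →
      ∃ m n, red m = false ∧ red n = false ∧ c < m ∧ m < n ∧ ¬ R c m ∧ R c n := by
    have key : ∃ α : X, red α = true ∧
        ∃ m n, red m = false ∧ red n = false ∧ α < m ∧ m < n ∧ ¬ R α m ∧ R α n := by
      by_contra hcon
      push_neg at hcon
      have hdown : ∀ α b b' : X, red α = true → red b' = false → α < b' → b' < b →
          R α b → R α b' := by
        intro α b b' hα hb' h1 h2 hRb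
        by_contra hno
        exact hcon α hα b' b hb' (hBlueOf α b hα hRb) h1 h2 hno hRb
      obtain ⟨α₂, hα₂1, hα₂2, hα₂3⟩ := redBetween a₀ b₀ hab₀
      obtain ⟨y, hy⟩ := exists_gt b₁
      obtain ⟨β₂, hβ₂1, hβ₂2, hβ₂3⟩ := redBetween b₁ y hy
      obtain ⟨g, ⟨hgo, hgc, hgR⟩, hg₁, hg₂⟩ :=
        auto_pair red R hSymm hIrr hHom hα₂1 (hab₁.trans hβ₂1)
          (ha₁.trans ha₀.symm) (hβ₂3.trans hα₂3.symm)
          (iff_of_false (hSame _ _ (ha₀.trans hα₂3.symm))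
            (hSame _ _ (ha₁.trans hβ₂3.symm)))
      have hRc : R a₁ (g b₀) := by rw [← hg₁]; exact (hgR a₀ b₀).mp hR₀
      have hlt : b₁ < g b₀ := by
        have := (hgo α₂ b₀).mp hα₂2
        rw [hg₂] at this
        exact hβ₂1.trans this
      exact hR₁ (hdown a₁ (g b₀) b₁ ha₁ hb₁ hab₁ hlt hRc)
    intro c hc
    obtain ⟨α, hα, m, n, hm, hn, h1, h2, h3, h4⟩ := key
    obtain ⟨g, ⟨hgo, hgc, hgR⟩, hga⟩ :=
      auto_single red R hIrr hHom (p := α) (q := c) (hc.trans hα.symm)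
    refine ⟨g m, g n, by rw [hgc]; exact hm, by rw [hgc]; exact hn, ?_, ?_, ?_, ?_⟩
    · rw [← hga]; exact (hgo α m).mp h1
    · exact (hgo m n).mp h2
    · rw [← hga]; intro h; exact h3 ((hgR α m).mpr h)
    · rw [← hga]; exact (hgR α n).mp h4
  -- pattern NM: a related blue below an unrelated blue
  have hNMex : ∀ c : X, red c = true →
      ∃ n m, red n = false ∧ red m = false ∧ c < n ∧ n < m ∧ R c n ∧ ¬ R c m := by
    have key : ∃ α : X, red α = true ∧
        ∃ n m, red n = false ∧ red m = false ∧ α < n ∧ n < m ∧ R α n ∧ ¬ R α m := by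
      by_contra hcon
      push_neg at hcon
      have hup : ∀ α b b' : X, red α = true → red b = false → α < b' → b' < b →
          R α b' → R α b := by
        intro α b b' hα hb h1 h2 hRb'
        exact hcon α hα b' b (hBlueOf α b' hα hRb') hb h1 h2 hRb'
      obtain ⟨β₂, hβ₂1, hβ₂2, hβ₂3⟩ := redBetween a₁ b₁ hab₁
      obtain ⟨y, hy⟩ := exists_gt b₀
      obtain ⟨α₂, hα₂1, hα₂2, hα₂3⟩ := redBetween b₀ y hy
      obtain ⟨g, ⟨hgo, hgc, hgR⟩, hg₁, hg₂⟩ :=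
        auto_pair red R hSymm hIrr hHom hβ₂1 (hab₀.trans hα₂1)
          (ha₀.trans ha₁.symm) (hα₂3.trans hβ₂3.symm)
          (iff_of_false (hSame _ _ (ha₁.trans hβ₂3.symm))
            (hSame _ _ (ha₀.trans hα₂3.symm)))
      have hRc : ¬ R a₀ (g b₁) := by
        rw [← hg₁]; intro h; exact hR₁ ((hgR a₁ b₁).mpr h)
      have hblue : red (g b₁) = false := by rw [hgc]; exact hb₁
      have hlt : b₀ < g b₁ := by
        have := (hgo β₂ b₁).mp hβ₂2
        rw [hg₂] at this
        exact hα₂1.trans this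
      exact hRc (hup a₀ (g b₁) b₀ ha₀ hblue hab₀ hlt hR₀)
    intro c hc
    obtain ⟨α, hα, n, m, hn, hm, h1, h2, h3, h4⟩ := key
    obtain ⟨g, ⟨hgo, hgc, hgR⟩, hga⟩ :=
      auto_single red R hIrr hHom (p := α) (q := c) (hc.trans hα.symm)
    refine ⟨g n, g m, by rw [hgc]; exact hn, by rw [hgc]; exact hm, ?_, ?_, ?_, ?_⟩
    · rw [← hga]; exact (hgo α n).mp h1
    · exact (hgo n m).mp h2
    · rw [← hga]; exact (hgR α n).mp h3
    · rw [← hga]; intro h; exact h4 ((hgR α m).mpr h)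
  -- now fix the red point a
  intro a ha
  obtain ⟨nstar, hn1, hn2, hn3⟩ := hNex a ha
  obtain ⟨mstar, hm1, hm2, hm3⟩ := hMex a ha
  -- M N M configuration around nstar
  have hMNM : ∃ m₁ m₂, red m₁ = false ∧ red m₂ = false ∧ a < m₁ ∧ m₁ < nstar ∧
      nstar < m₂ ∧ ¬ R a m₁ ∧ ¬ R a m₂ := by
    obtain ⟨m, n, hmb, hnb, ham, hmn, hRm, hRn⟩ := hMNex a ha
    obtain ⟨g, ⟨hgo, hgc, hgR⟩, hga, hgn⟩ :=
      auto_pair red R hSymm hIrr hHom (ham.trans hmn) hn2 rfl (hn1.trans hnb.symm)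
        (iff_of_true hRn hn3)
    obtain ⟨n', m', hnb', hmb', han', hnm', hRn', hRm'⟩ := hNMex a ha
    obtain ⟨g', ⟨hgo', hgc', hgR'⟩, hga', hgn'⟩ :=
      auto_pair red R hSymm hIrr hHom han' hn2 rfl (hn1.trans hnb'.symm)
        (iff_of_true hRn' hn3)
    refine ⟨g m, g' m', by rw [hgc]; exact hmb, by rw [hgc']; exact hmb', ?_, ?_, ?_, ?_, ?_⟩
    · rw [← hga]; exact (hgo a m).mp ham
    · rw [← hgn]; exact (hgo m n).mp hmn
    · rw [← hgn']; exact (hgo' n' m').mp hnm'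
    · rw [← hga]; intro h; exact hRm ((hgR a m).mpr h)
    · rw [← hga']; intro h; exact hRm' ((hgR' a m').mpr h)
  -- N M N configuration around mstar
  have hNMN : ∃ n₁ n₂, red n₁ = false ∧ red n₂ = false ∧ a < n₁ ∧ n₁ < mstar ∧
      mstar < n₂ ∧ R a n₁ ∧ R a n₂ := by
    obtain ⟨n', m', hnb', hmb', han', hnm', hRn', hRm'⟩ := hNMex a ha
    obtain ⟨g, ⟨hgo, hgc, hgR⟩, hga, hgm⟩ :=
      auto_pair red R hSymm hIrr hHom (han'.trans hnm') hm2 rfl (hm1.trans hmb'.symm)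
        (iff_of_false hRm' hm3)
    obtain ⟨m, n, hmb, hnb, ham, hmn, hRm, hRn⟩ := hMNex a ha
    obtain ⟨g', ⟨hgo', hgc', hgR'⟩, hga', hgm'⟩ :=
      auto_pair red R hSymm hIrr hHom ham hm2 rfl (hm1.trans hmb.symm)
        (iff_of_false hRm hm3)
    refine ⟨g n', g' n, by rw [hgc]; exact hnb', by rw [hgc']; exact hnb, ?_, ?_, ?_, ?_, ?_⟩
    · rw [← hga]; exact (hgo a n').mp han'
    · rw [← hgm]; exact (hgo n' m').mp hnm'
    · rw [← hgm']; exact (hgo' m n).mp hmn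
    · rw [← hga]; exact (hgR a n').mp hRn'
    · rw [← hga']; exact (hgR' a n).mp hRn
  obtain ⟨m₁, m₂, hm₁b, hm₂b, ham₁, hm₁n, hnm₂, hRm₁, hRm₂⟩ := hMNM
  obtain ⟨n₁, n₂, hn₁b, hn₂b, han₁, hn₁m, hmn₂, hRn₁, hRn₂⟩ := hNMN
  -- density of related blues
  have densN : ∀ x y : X, a ≤ x → x < y → ∃ c, red c = false ∧ x < c ∧ c < y ∧ R a c := by
    intro x y hax hxy
    obtain ⟨c₁, hc₁x, hc₁y, hc₁b⟩ := blueBetween x y hxy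
    obtain ⟨c₂, hc₂1, hc₂2, hc₂b⟩ := blueBetween c₁ y hc₁y
    by_cases h₁ : R a c₁
    · exact ⟨c₁, hc₁b, hc₁x, hc₁y, h₁⟩
    by_cases h₂ : R a c₂
    · exact ⟨c₂, hc₂b, hc₁x.trans hc₂1, hc₂2, h₂⟩
    have hac₁ : a < c₁ := lt_of_le_of_lt hax hc₁x
    obtain ⟨g, ⟨hgo, hgc, hgR⟩, hga, hg₁, hg₂⟩ :=
      auto_triple red R hSymm hIrr hHom ham₁ (hm₁n.trans hnm₂) hac₁ hc₂1 rfl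
        (hc₁b.trans hm₁b.symm) (hc₂b.trans hm₂b.symm)
        (iff_of_false hRm₁ h₁) (iff_of_false hRm₂ h₂)
        (iff_of_false (hSame _ _ (hm₁b.trans hm₂b.symm))
          (hSame _ _ (hc₁b.trans hc₂b.symm)))
    refine ⟨g nstar, by rw [hgc]; exact hn1, ?_, ?_, ?_⟩
    · have := (hgo m₁ nstar).mp hm₁n
      rw [hg₁] at this
      exact hc₁x.trans this
    · have := (hgo nstar m₂).mp hnm₂
      rw [hg₂] at this
      exact this.trans hc₂2
    · rw [← hga]; exact (hgR a nstar).mp hn3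
  -- density of unrelated blues
  have densM : ∀ x y : X, a ≤ x → x < y →
      ∃ c, red c = false ∧ x < c ∧ c < y ∧ ¬ R a c := by
    intro x y hax hxy
    obtain ⟨c₁, hc₁x, hc₁y, hc₁b⟩ := blueBetween x y hxy
    obtain ⟨c₂, hc₂1, hc₂2, hc₂b⟩ := blueBetween c₁ y hc₁y
    by_cases h₁ : R a c₁
    swap
    · exact ⟨c₁, hc₁b, hc₁x, hc₁y, h₁⟩
    by_cases h₂ : R a c₂
    swap
    · exact ⟨c₂, hc₂b, hc₁x.trans hc₂1, hc₂2, h₂⟩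
    have hac₁ : a < c₁ := lt_of_le_of_lt hax hc₁x
    obtain ⟨g, ⟨hgo, hgc, hgR⟩, hga, hg₁, hg₂⟩ :=
      auto_triple red R hSymm hIrr hHom han₁ (hn₁m.trans hmn₂) hac₁ hc₂1 rfl
        (hc₁b.trans hn₁b.symm) (hc₂b.trans hn₂b.symm)
        (iff_of_true hRn₁ h₁) (iff_of_true hRn₂ h₂)
        (iff_of_false (hSame _ _ (hn₁b.trans hn₂b.symm))
          (hSame _ _ (hc₁b.trans hc₂b.symm)))
    refine ⟨g mstar, by rw [hgc]; exact hm1, ?_, ?_, ?_⟩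
    · have := (hgo n₁ mstar).mp hn₁m
      rw [hg₁] at this
      exact hc₁x.trans this
    · have := (hgo mstar n₂).mp hmn₂
      rw [hg₂] at this
      exact this.trans hc₂2
    · rw [← hga]; intro h; exact hm3 ((hgR a mstar).mpr h)
  -- infinitude from density
  have infN : {b : X | red b = false ∧ a < b ∧ R a b}.Infinite := by
    by_contra hfin
    rw [Set.not_infinite] at hfin
    obtain ⟨u, hu⟩ := hfin.bddAbove
    obtain ⟨y, hy⟩ := exists_gt (max a u)
    obtain ⟨c, hcb, hcx, hcy, hcR⟩ := densN (max a u) y (le_max_left a u) hy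
    have hmem : c ∈ {b : X | red b = false ∧ a < b ∧ R a b} :=
      ⟨hcb, lt_of_le_of_lt (le_max_left a u) hcx, hcR⟩
    exact absurd (hu hmem) (not_le.mpr (lt_of_le_of_lt (le_max_right a u) hcx))
  have infM : {b : X | red b = false ∧ a < b ∧ ¬ R a b}.Infinite := by
    by_contra hfin
    rw [Set.not_infinite] at hfin
    obtain ⟨u, hu⟩ := hfin.bddAbove
    obtain ⟨y, hy⟩ := exists_gt (max a u)
    obtain ⟨c, hcb, hcx, hcy, hcR⟩ := densM (max a u) y (le_max_left a u) hy
    have hmem : c ∈ {b : X | red b = false ∧ a < b ∧ ¬ R a b} :=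
      ⟨hcb, lt_of_le_of_lt (le_max_left a u) hcx, hcR⟩
    exact absurd (hu hmem) (not_le.mpr (lt_of_le_of_lt (le_max_right a u) hcx))
  exact ⟨infN, infM, densN, densM⟩
end

section
/- Let (X, <, R) be a countable homogeneous ordered bipartite graph whose underlying coloured order is the generic 2-coloured linear order ℚ₂ (a countable dense linear order without endpoints in which both red and blue points are dense), and let R₁ = {(a,b) ∈ R : a red, b blue, a < b}. Suppose that for every red point a, both {b ∈ X_b : b > a and R(a,b)} and {b ∈ X_b : b > a and ¬R(a,b)} are dense in (a, ∞), and symmetrically for every blue point b with the interval (−∞, b) in the red class. Then for every pair of finite disjoint sets A₁ and A₂ of red points, the set of blue points b > max(A₁ ∪ A₂) joined (via R₁) to all members of A₁ and to no members of A₂ is dense in the interval (max(A₁ ∪ A₂), ∞). -/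
/-- The flip lemma: if `c` is a blue point in `(x, y)`, `a` is a red point with
`a ≤ x` above all of the red set `A'`, then there is a blue point `c'` in `(x, y)`
with the same relations to `A'` as `c` but the opposite relation to `a`. -/
lemma flip_aux {X : Type*} [LinearOrder X] [DecidableEq X] [NoMinOrder X]
    (red : X → Bool) (R : X → X → Prop)
    (hBip : ∀ x y, R x y → red x ≠ red y)
    (hHom : Homogeneous (· < · : X → X → Prop) red R)
    (hdense : ∀ x y : X, x < y →
      (∃ z, x < z ∧ z < y ∧ red z = true) ∧ (∃ z, x < z ∧ z < y ∧ red z = false))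
    (hdb : ∀ b : X, red b = false → ∀ x y : X, x < y → y ≤ b →
      (∃ c, red c = true ∧ x < c ∧ c < y ∧ R c b) ∧
      (∃ c, red c = true ∧ x < c ∧ c < y ∧ ¬ R c b))
    (A' : Finset X) (hA'red : ∀ b ∈ A', red b = true)
    (a : X) (hared : red a = true) (haA : ∀ b ∈ A', b < a)
    (x y c : X) (hax : a ≤ x) (hxc : x < c) (hcy : c < y) (hcred : red c = false) :
    ∃ c', red c' = false ∧ x < c' ∧ c' < y ∧ (∀ b ∈ A', (R b c' ↔ R b c)) ∧
      (R a c' ↔ ¬ R a c) := by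
  classical
  obtain ⟨l, hlx, hbl⟩ : ∃ l, l < x ∧ ∀ b ∈ A', b ≤ l := by
    by_cases hA' : A'.Nonempty
    · exact ⟨A'.max' hA', lt_of_lt_of_le (haA _ (A'.max'_mem hA')) hax,
        fun b hb => A'.le_max' b hb⟩
    · obtain ⟨l, hl⟩ := exists_lt x
      exact ⟨l, hl, fun b hb => absurd ⟨b, hb⟩ hA'⟩
  obtain ⟨a', ha'red, hla', ha'x, ha'R⟩ :
      ∃ a', red a' = true ∧ l < a' ∧ a' < x ∧ (R a' c ↔ ¬ R a c) := by
    obtain ⟨⟨a₁, h₁red, h₁l, h₁x, h₁R⟩, ⟨a₂, h₂red, h₂l, h₂x, h₂R⟩⟩ :=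
      hdb c hcred l x hlx hxc.le
    by_cases hR : R a c
    · exact ⟨a₂, h₂red, h₂l, h₂x, iff_of_false h₂R (not_not_intro hR)⟩
    · exact ⟨a₁, h₁red, h₁l, h₁x, iff_of_true h₁R hR⟩
  obtain ⟨p, hxp, hpc, hpred⟩ := (hdense x c hxc).1
  obtain ⟨q, hcq, hqy, hqred⟩ := (hdense c y hcy).1
  set s : Finset X := insert a' (insert p (insert q A')) with hs
  set f : X → X := fun z => if z = a' then a else z with hf
  have hfa' : f a' = a := if_pos rfl
  have hfz : ∀ z, z ≠ a' → f z = z := fun z hz => if_neg hz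
  have ha'p : a' < p := lt_trans ha'x hxp
  have hap : a < p := lt_of_le_of_lt hax hxp
  have ha'q : a' < q := lt_trans ha'p (lt_trans hpc hcq)
  have haq : a < q := lt_trans hap (lt_trans hpc hcq)
  have hba' : ∀ b ∈ A', b < a' := fun b hb => lt_of_le_of_lt (hbl b hb) hla'
  have hmem : ∀ z ∈ s, z = a' ∨ z = p ∨ z = q ∨ z ∈ A' := by
    intro z hz; simpa [hs, Finset.mem_insert] using hz
  have hredall : ∀ z ∈ s, red z = true := by
    intro z hz
    rcases hmem z hz with rfl | rfl | rfl | h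
    exacts [ha'red, hpred, hqred, hA'red z h]
  have noR : ∀ u v : X, red u = true → red v = true → ¬ R u v :=
    fun u v hu hv h => hBip u v h (by rw [hu, hv])
  have hfred : ∀ z ∈ s, red (f z) = true := by
    intro z hz
    by_cases h : z = a'
    · rw [h, hfa']; exact hared
    · rw [hfz z h]; exact hredall z hz
  have cmp : ∀ w ∈ s, w ≠ a' → ((w < a' ↔ w < a) ∧ (a' < w ↔ a < w)) := by
    intro w hw hwa
    rcases hmem w hw with rfl | rfl | rfl | h
    · exact absurd rfl hwa
    · exact ⟨iff_of_false (asymm ha'p) (asymm hap), iff_of_true ha'p hap⟩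
    · exact ⟨iff_of_false (asymm ha'q) (asymm haq), iff_of_true ha'q haq⟩
    · exact ⟨iff_of_true (hba' w h) (haA w h),
        iff_of_false (asymm (hba' w h)) (asymm (haA w h))⟩
  have hiso : IsPartialIso (· < · : X → X → Prop) red R s f := by
    refine ⟨?_, ?_, ?_⟩
    · intro u hu v hv
      show u < v ↔ f u < f v
      by_cases hu' : u = a' <;> by_cases hv' : v = a'
      · subst hu'; subst hv'; rw [hfa']
        exact iff_of_false (lt_irrefl _) (lt_irrefl _)
      · subst hu'; rw [hfa', hfz v hv']
        exact (cmp v hv hv').2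
      · subst hv'; rw [hfa', hfz u hu']
        exact (cmp u hu hu').1
      · rw [hfz u hu', hfz v hv']
    · intro z hz
      rw [hfred z hz, hredall z hz]
    · intro u hu v hv
      exact iff_of_false (noR u v (hredall u hu) (hredall v hv))
        (noR _ _ (hfred u hu) (hfred v hv))
  obtain ⟨g, ⟨gord, gred, gR⟩, gfix⟩ := hHom s f hiso
  have hga' : g a' = a := by
    rw [gfix a' (by simp [hs]), hfa']
  have hgp : g p = p := by
    rw [gfix p (by simp [hs]), hfz p (ne_of_gt ha'p)]
  have hgq : g q = q := by
    rw [gfix q (by simp [hs]), hfz q (ne_of_gt ha'q)]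
  refine ⟨g c, ?_, ?_, ?_, ?_, ?_⟩
  · rw [gred c]; exact hcred
  · have h1 : p < g c := by rw [← hgp]; exact (gord p c).1 hpc
    exact lt_trans hxp h1
  · have h1 : g c < q := by rw [← hgq]; exact (gord c q).1 hcq
    exact lt_trans h1 hqy
  · intro b hb
    have hgb : g b = b := by
      rw [gfix b (by simp [hs, hb]), hfz b (ne_of_lt (hba' b hb))]
    have := gR b c
    rw [hgb] at this
    exact this.symm
  · have := gR a' c
    rw [hga'] at this
    exact this.symm.trans ha'R

/-- Case (vi): underlying coloured order ℚ₂; if for each red `a` both `R₁(a)` and its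
complement are dense in `(a, ∞)`, and symmetrically for each blue `b` in `(-∞, b)`, then
for all finite disjoint sets `A₁, A₂` of red points the set of blue witnesses above
`max (A₁ ∪ A₂)` joined to everything in `A₁` and nothing in `A₂` is dense in
`(max (A₁ ∪ A₂), ∞)`. -/
theorem stmt17 {X : Type*} [LinearOrder X] [Countable X] [Nonempty X] [DecidableEq X]
    [NoMinOrder X] [NoMaxOrder X]
    (red : X → Bool) (R : X → X → Prop)
    (hSymm : ∀ x y, R x y → R y x) (hIrr : ∀ x, ¬ R x x)
    (hBip : ∀ x y, R x y → red x ≠ red y)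
    (hHom : Homogeneous (· < · : X → X → Prop) red R)
    (hdense : ∀ x y : X, x < y →
      (∃ z, x < z ∧ z < y ∧ red z = true) ∧ (∃ z, x < z ∧ z < y ∧ red z = false))
    (hda : ∀ a : X, red a = true → ∀ x y : X, a ≤ x → x < y →
      (∃ c, red c = false ∧ x < c ∧ c < y ∧ R a c) ∧
      (∃ c, red c = false ∧ x < c ∧ c < y ∧ ¬ R a c))
    (hdb : ∀ b : X, red b = false → ∀ x y : X, x < y → y ≤ b →
      (∃ c, red c = true ∧ x < c ∧ c < y ∧ R c b) ∧
      (∃ c, red c = true ∧ x < c ∧ c < y ∧ ¬ R c b)) :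
    ∀ A₁ A₂ : Finset X, (∀ a ∈ A₁, red a = true) → (∀ a ∈ A₂, red a = true) →
      Disjoint A₁ A₂ → ∀ hne : (A₁ ∪ A₂).Nonempty,
      ∀ x y : X, (A₁ ∪ A₂).max' hne ≤ x → x < y →
        ∃ c, red c = false ∧ x < c ∧ c < y ∧
          (∀ a ∈ A₁, R a c) ∧ (∀ a ∈ A₂, ¬ R a c) := by
  classical
  suffices H : ∀ n : ℕ, ∀ A₁ A₂ : Finset X, (A₁ ∪ A₂).card ≤ n →
      (∀ a ∈ A₁, red a = true) → (∀ a ∈ A₂, red a = true) →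
      Disjoint A₁ A₂ → ∀ hne : (A₁ ∪ A₂).Nonempty,
      ∀ x y : X, (A₁ ∪ A₂).max' hne ≤ x → x < y →
        ∃ c, red c = false ∧ x < c ∧ c < y ∧
          (∀ a ∈ A₁, R a c) ∧ (∀ a ∈ A₂, ¬ R a c) by
    intro A₁ A₂ h1 h2 hd hne x y hx hxy
    exact H (A₁ ∪ A₂).card A₁ A₂ le_rfl h1 h2 hd hne x y hx hxy
  intro n
  induction n with
  | zero =>
    intro A₁ A₂ hcard h1 h2 hd hne
    exact absurd (Finset.card_pos.mpr hne) (by omega)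
  | succ n ih =>
    intro A₁ A₂ hcard h1 h2 hd hne x y hx hxy
    set a := (A₁ ∪ A₂).max' hne with ha_def
    have haU : a ∈ A₁ ∪ A₂ := Finset.max'_mem _ _
    have hared : red a = true := by
      rcases Finset.mem_union.1 haU with h | h
      exacts [h1 a h, h2 a h]
    set A₁' := A₁.erase a with hA₁'
    set A₂' := A₂.erase a with hA₂'
    have hU' : A₁' ∪ A₂' = (A₁ ∪ A₂).erase a := (Finset.erase_union_distrib _ _ _).symm
    have haA : ∀ b ∈ A₁' ∪ A₂', b < a := by
      intro b hb
      rw [hU'] at hb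
      exact lt_of_le_of_ne (Finset.le_max' _ b (Finset.mem_of_mem_erase hb))
        (Finset.ne_of_mem_erase hb)
    have hA'red : ∀ b ∈ A₁' ∪ A₂', red b = true := by
      intro b hb
      rcases Finset.mem_union.1 hb with h | h
      exacts [h1 b (Finset.mem_of_mem_erase h), h2 b (Finset.mem_of_mem_erase h)]
    obtain ⟨c, hcred, hxc, hcy, hc1, hc2⟩ :
        ∃ c, red c = false ∧ x < c ∧ c < y ∧
          (∀ b ∈ A₁', R b c) ∧ (∀ b ∈ A₂', ¬ R b c) := by
      by_cases hA' : (A₁' ∪ A₂').Nonempty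
      · have hcard' : (A₁' ∪ A₂').card ≤ n := by
          rw [hU']
          have := Finset.card_erase_of_mem haU
          omega
        have hmax : (A₁' ∪ A₂').max' hA' ≤ x :=
          le_trans (le_of_lt (haA _ (Finset.max'_mem _ _))) hx
        exact ih A₁' A₂' hcard'
          (fun b hb => h1 b (Finset.mem_of_mem_erase hb))
          (fun b hb => h2 b (Finset.mem_of_mem_erase hb))
          (hd.mono (Finset.erase_subset _ _) (Finset.erase_subset _ _))
          hA' x y hmax hxy
      · obtain ⟨c, hxc, hcy, hcred⟩ := (hdense x y hxy).2
        refine ⟨c, hcred, hxc, hcy, ?_, ?_⟩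
        · intro b hb; exact absurd ⟨b, Finset.mem_union_left _ hb⟩ hA'
        · intro b hb; exact absurd ⟨b, Finset.mem_union_right _ hb⟩ hA'
    by_cases haA₁ : a ∈ A₁
    · have haA₂ : a ∉ A₂ := Finset.disjoint_left.1 hd haA₁
      by_cases hR : R a c
      · refine ⟨c, hcred, hxc, hcy, ?_, ?_⟩
        · intro b hb
          rcases eq_or_ne b a with rfl | hba
          · exact hR
          · exact hc1 b (Finset.mem_erase.2 ⟨hba, hb⟩)
        · intro b hb
          have hba : b ≠ a := fun h => haA₂ (h ▸ hb)
          exact hc2 b (Finset.mem_erase.2 ⟨hba, hb⟩)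
      · obtain ⟨c', hc'red, hxc', hc'y, hrel, hflip⟩ :=
          flip_aux red R hBip hHom hdense hdb (A₁' ∪ A₂') hA'red a hared haA
            x y c hx hxc hcy hcred
        refine ⟨c', hc'red, hxc', hc'y, ?_, ?_⟩
        · intro b hb
          rcases eq_or_ne b a with rfl | hba
          · exact hflip.2 hR
          · have hb' : b ∈ A₁' ∪ A₂' :=
              Finset.mem_union_left _ (Finset.mem_erase.2 ⟨hba, hb⟩)
            exact (hrel b hb').2 (hc1 b (Finset.mem_erase.2 ⟨hba, hb⟩))
        · intro b hb
          have hba : b ≠ a := fun h => haA₂ (h ▸ hb)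
          have hb' : b ∈ A₁' ∪ A₂' :=
            Finset.mem_union_right _ (Finset.mem_erase.2 ⟨hba, hb⟩)
          exact fun h => hc2 b (Finset.mem_erase.2 ⟨hba, hb⟩) ((hrel b hb').1 h)
    · have haA₂ : a ∈ A₂ := by
        rcases Finset.mem_union.1 haU with h | h
        exacts [absurd h haA₁, h]
      by_cases hR : R a c
      · obtain ⟨c', hc'red, hxc', hc'y, hrel, hflip⟩ :=
          flip_aux red R hBip hHom hdense hdb (A₁' ∪ A₂') hA'red a hared haA
            x y c hx hxc hcy hcred
        refine ⟨c', hc'red, hxc', hc'y, ?_, ?_⟩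
        · intro b hb
          have hba : b ≠ a := fun h => haA₁ (h ▸ hb)
          have hb' : b ∈ A₁' ∪ A₂' :=
            Finset.mem_union_left _ (Finset.mem_erase.2 ⟨hba, hb⟩)
          exact (hrel b hb').2 (hc1 b (Finset.mem_erase.2 ⟨hba, hb⟩))
        · intro b hb
          rcases eq_or_ne b a with rfl | hba
          · exact fun h => (hflip.1 h) hR
          · have hb' : b ∈ A₁' ∪ A₂' :=
              Finset.mem_union_right _ (Finset.mem_erase.2 ⟨hba, hb⟩)
            exact fun h => hc2 b (Finset.mem_erase.2 ⟨hba, hb⟩) ((hrel b hb').1 h)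
      · refine ⟨c, hcred, hxc, hcy, ?_, ?_⟩
        · intro b hb
          have hba : b ≠ a := fun h => haA₁ (h ▸ hb)
          exact hc1 b (Finset.mem_erase.2 ⟨hba, hb⟩)
        · intro b hb
          rcases eq_or_ne b a with rfl | hba
          · exact hR
          · exact hc2 b (Finset.mem_erase.2 ⟨hba, hb⟩)
end

section
/- Let (X, <, R) and (X', <', R') be two countable ordered bipartite graphs, in each of which the underlying coloured order is the generic 2-coloured linear order ℚ₂ (a countable dense linear order without endpoints in which both red and blue points are dense), every edge (a,b) with a red and b blue satisfies a < b, and the right generic witness property holds: for any finite disjoint sets A₁, A₂ of red points, the set of blue points joined to all members of A₁ and to none of A₂ is dense in (max(A₁ ∪ A₂), ∞), and for any finite disjoint sets B₁, B₂ of blue points, the set of red points joined to all members of B₁ and to none of B₂ is dense in (−∞, min(B₁ ∪ B₂)). Then (X, <, R) and (X', <', R') are isomorphic as ordered coloured bipartite graphs. -/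
/-!
Back and forth over finite partial isomorphisms, as in Cantor's theorem
(`Order.iso_of_countable_dense`). When a red point `a` is added to a partial isomorphism `f`,
edges from `a` to red points or to points below `a` are impossible, so only the blue points of
`dom f` above `a` constrain its image: this must be a red point `b` in the gap of `im f`
corresponding to `a`, adjacent exactly to the images of the blue neighbours of `a` above it, and
the right generic witness property provides such a `b`. Blue points are symmetric, with their
possible neighbours below them, and the back step is the forth step for the inverse.
-/

/-- The right generic witness property: for all finite disjoint sets `A₁, A₂` of red
points the set of blue points joined to everything in `A₁` and nothing in `A₂` is dense
in `(max (A₁ ∪ A₂), ∞)`, and for all finite disjoint sets `B₁, B₂` of blue points the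
set of red points joined to everything in `B₁` and nothing in `B₂` is dense in
`(-∞, min (B₁ ∪ B₂))`. -/
def RightGenericWitness {X : Type*} [LinearOrder X] [DecidableEq X]
    (red : X → Bool) (R : X → X → Prop) : Prop :=
  (∀ A₁ A₂ : Finset X, (∀ a ∈ A₁, red a = true) → (∀ a ∈ A₂, red a = true) →
    Disjoint A₁ A₂ → ∀ hne : (A₁ ∪ A₂).Nonempty,
    ∀ x y : X, (A₁ ∪ A₂).max' hne ≤ x → x < y →
      ∃ c, red c = false ∧ x < c ∧ c < y ∧
        (∀ a ∈ A₁, R a c) ∧ (∀ a ∈ A₂, ¬ R a c)) ∧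
  (∀ B₁ B₂ : Finset X, (∀ b ∈ B₁, red b = false) → (∀ b ∈ B₂, red b = false) →
    Disjoint B₁ B₂ → ∀ hne : (B₁ ∪ B₂).Nonempty,
    ∀ x y : X, x < y → y ≤ (B₁ ∪ B₂).min' hne →
      ∃ c, red c = true ∧ x < c ∧ c < y ∧
        (∀ b ∈ B₁, R c b) ∧ (∀ b ∈ B₂, ¬ R c b))

section

variable {α β : Type*} [LinearOrder α] [LinearOrder β]

structure IsDirectedBipartite (red : α → Bool) (R : α → α → Prop) : Prop where
  symm : ∀ x y, R x y → R y x
  color_ne : ∀ x y, R x y → red x ≠ red y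
  lt_of_red_blue : ∀ a b, red a = true → red b = false → R a b → a < b

def ColorDense (red : α → Bool) : Prop :=
  ∀ x y : α, x < y →
    (∃ z, x < z ∧ z < y ∧ red z = true) ∧ (∃ z, x < z ∧ z < y ∧ red z = false)

/-- The constraints that an edge between `x` and `y` would have to satisfy: opposite colours,
with the red end below the blue one. -/
def CanAdj (red : α → Bool) (x y : α) : Prop :=
  red x ≠ red y ∧ cmp x y = cond (red x) .lt .gt

section Graph

variable {red : α → Bool} {R : α → α → Prop}

theorem IsDirectedBipartite.not_adj_self (h : IsDirectedBipartite red R) (x : α) : ¬ R x x :=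
  fun hx => h.color_ne x x hx rfl

theorem IsDirectedBipartite.adj_comm (h : IsDirectedBipartite red R) {x y : α} :
    R x y ↔ R y x :=
  ⟨h.symm x y, h.symm y x⟩

theorem IsDirectedBipartite.canAdj (h : IsDirectedBipartite red R) {x y : α} (hxy : R x y) :
    CanAdj red x y := by
  refine ⟨h.color_ne x y hxy, ?_⟩
  have hne := h.color_ne x y hxy
  cases hx : red x <;> cases hy : red y <;> simp only [hx, hy, ne_eq, not_true] at hne
  · exact (cmp_eq_gt_iff _ _).2 (h.lt_of_red_blue y x hy hx (h.symm x y hxy))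
  · exact (cmp_eq_lt_iff _ _).2 (h.lt_of_red_blue x y hx hy hxy)

theorem canAdj_congr {red' : β → Bool} {x y : α} {x' y' : β} (hx : red' x' = red x)
    (hy : red' y' = red y) (hxy : cmp x y = cmp x' y') : CanAdj red' x' y' ↔ CanAdj red x y := by
  simp only [CanAdj, hx, hy, hxy]

theorem ColorDense.exists_between (h : ColorDense red) (col : Bool) {x y : α} (hxy : x < y) :
    ∃ z, x < z ∧ z < y ∧ red z = col := by
  cases col
  exacts [(h x y hxy).2, (h x y hxy).1]

theorem ColorDense.denselyOrdered (h : ColorDense red) : DenselyOrdered α :=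
  ⟨fun _ _ hxy => let ⟨z, hxz, hzy, _⟩ := h.exists_between true hxy; ⟨z, hxz, hzy⟩⟩

variable [Nonempty α] [NoMinOrder α] [NoMaxOrder α]

theorem ColorDense.exists_between_finsets (h : ColorDense red) (col : Bool) {L H : Finset α}
    (hLH : ∀ x ∈ L, ∀ y ∈ H, x < y) :
    ∃ c, red c = col ∧ (∀ x ∈ L, x < c) ∧ ∀ y ∈ H, c < y := by
  have := h.denselyOrdered
  obtain ⟨m, hLm, hmH⟩ := Order.exists_between_finsets L H hLH
  obtain ⟨m', hLm', hm'⟩ := Order.exists_between_finsets L (insert m H) fun x hx y hy => by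
    rcases Finset.mem_insert.1 hy with rfl | hy
    exacts [hLm x hx, hLH x hx y hy]
  obtain ⟨c, hm'c, hcm, hc⟩ := h.exists_between col (hm' m (Finset.mem_insert_self m H))
  exact ⟨c, hc, fun x hx => (hLm' x hx).trans hm'c, fun y hy => hcm.trans (hmH y hy)⟩

variable [DecidableEq α]

theorem RightGenericWitness.exists_red_between (hW : RightGenericWitness red R)
    (hd : ColorDense red) {L H B₁ B₂ : Finset α} (hLH : ∀ x ∈ L, ∀ y ∈ H, x < y)
    (hB : Disjoint B₁ B₂) (hne : (B₁ ∪ B₂).Nonempty) (hBH : ∀ b ∈ B₁ ∪ B₂, red b = false ∧ b ∈ H) :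
    ∃ c, red c = true ∧ (∀ x ∈ L, x < c) ∧ (∀ y ∈ H, c < y) ∧
      (∀ b ∈ B₁, R c b) ∧ ∀ b ∈ B₂, ¬ R c b := by
  have := hd.denselyOrdered
  have hH : H.Nonempty := hne.mono fun b hb => (hBH b hb).2
  obtain ⟨x, hLx, hxy⟩ := Order.exists_between_finsets L {H.min' hH}
    fun x hx y hy => Finset.mem_singleton.1 hy ▸ hLH x hx _ (H.min'_mem hH)
  obtain ⟨c, hc, hxc, hcy, hB₁, hB₂⟩ := hW.2 B₁ B₂
    (fun b hb => (hBH b (Finset.mem_union_left _ hb)).1)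
    (fun b hb => (hBH b (Finset.mem_union_right _ hb)).1) hB hne x _
    (hxy _ (Finset.mem_singleton_self _)) (H.min'_le _ (hBH _ ((B₁ ∪ B₂).min'_mem hne)).2)
  exact ⟨c, hc, fun y hy => (hLx y hy).trans hxc, fun y hy => hcy.trans_le (H.min'_le y hy),
    hB₁, hB₂⟩

theorem RightGenericWitness.exists_blue_between (hW : RightGenericWitness red R)
    (hd : ColorDense red) {L H A₁ A₂ : Finset α} (hLH : ∀ x ∈ L, ∀ y ∈ H, x < y)
    (hA : Disjoint A₁ A₂) (hne : (A₁ ∪ A₂).Nonempty) (hAL : ∀ a ∈ A₁ ∪ A₂, red a = true ∧ a ∈ L) :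
    ∃ c, red c = false ∧ (∀ x ∈ L, x < c) ∧ (∀ y ∈ H, c < y) ∧
      (∀ a ∈ A₁, R a c) ∧ ∀ a ∈ A₂, ¬ R a c := by
  have := hd.denselyOrdered
  have hL : L.Nonempty := hne.mono fun a ha => (hAL a ha).2
  obtain ⟨y, hxy, hyH⟩ := Order.exists_between_finsets {L.max' hL} H
    fun x hx y hy => Finset.mem_singleton.1 hx ▸ hLH _ (L.max'_mem hL) y hy
  obtain ⟨c, hc, hxc, hcy, hA₁, hA₂⟩ := hW.1 A₁ A₂
    (fun a ha => (hAL a (Finset.mem_union_left _ ha)).1)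
    (fun a ha => (hAL a (Finset.mem_union_right _ ha)).1) hA hne _ y
    (L.le_max' _ (hAL _ ((A₁ ∪ A₂).max'_mem hne)).2) (hxy _ (Finset.mem_singleton_self _))
  exact ⟨c, hc, fun x hx => (L.le_max' x hx).trans_lt hxc, fun x hx => hcy.trans (hyH x hx),
    hA₁, hA₂⟩

/-- `cond col H L` is the side on which the neighbours of a point of colour `col` lie. -/
theorem RightGenericWitness.exists_between (hW : RightGenericWitness red R) (hd : ColorDense red)
    (hsymm : ∀ x y, R x y → R y x) (col : Bool) {L H S₁ S₂ : Finset α}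
    (hLH : ∀ x ∈ L, ∀ y ∈ H, x < y) (hS : Disjoint S₁ S₂)
    (hside : ∀ s ∈ S₁ ∪ S₂, red s ≠ col ∧ s ∈ cond col H L) :
    ∃ c, red c = col ∧ (∀ x ∈ L, x < c) ∧ (∀ y ∈ H, c < y) ∧
      (∀ s ∈ S₁, R c s) ∧ ∀ s ∈ S₂, ¬ R c s := by
  rcases (S₁ ∪ S₂).eq_empty_or_nonempty with hempty | hne
  · obtain ⟨c, hc, hLc, hcH⟩ := hd.exists_between_finsets col hLH
    rw [Finset.union_eq_empty] at hempty
    exact ⟨c, hc, hLc, hcH, by simp [hempty.1], by simp [hempty.2]⟩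
  cases col
  · obtain ⟨c, hc, hLc, hcH, h₁, h₂⟩ := hW.exists_blue_between hd hLH hS hne
      fun s hs => ⟨by simpa using (hside s hs).1, (hside s hs).2⟩
    exact ⟨c, hc, hLc, hcH, fun s hs => hsymm _ _ (h₁ s hs), fun s hs h => h₂ s hs (hsymm _ _ h)⟩
  · exact hW.exists_red_between hd hLH hS hne
      fun s hs => ⟨by simpa using (hside s hs).1, (hside s hs).2⟩

end Graph

structure IsPartialIso_s18 (red : α → Bool) (R : α → α → Prop) (red' : β → Bool)
    (R' : β → β → Prop) (f : Finset (α × β)) : Prop where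
  color_eq : ∀ p ∈ f, red' p.2 = red p.1
  cmp_eq : ∀ p ∈ f, ∀ q ∈ f, cmp p.1 q.1 = cmp p.2 q.2
  adj_iff : ∀ p ∈ f, ∀ q ∈ f, R p.1 q.1 ↔ R' p.2 q.2

section PartialIso

variable {red : α → Bool} {R : α → α → Prop} {red' : β → Bool} {R' : β → β → Prop}
  {f : Finset (α × β)}

theorem IsPartialIso_s18.empty : IsPartialIso_s18 red R red' R' ∅ :=
  ⟨by simp, by simp, by simp⟩

theorem IsPartialIso_s18.swap [DecidableEq α] [DecidableEq β] (hf : IsPartialIso_s18 red R red' R' f) :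
    IsPartialIso_s18 red' R' red R (f.image Prod.swap) := by
  refine ⟨?_, ?_, ?_⟩ <;> simp only [Finset.forall_mem_image, Prod.fst_swap, Prod.snd_swap]
  · exact fun p hp => (hf.color_eq p hp).symm
  · exact fun p hp q hq => (hf.cmp_eq p hp q hq).symm
  · exact fun p hp q hq => (hf.adj_iff p hp q hq).symm

theorem IsPartialIso_s18.insert [DecidableEq α] [DecidableEq β] (hα : IsDirectedBipartite red R)
    (hβ : IsDirectedBipartite red' R') (hf : IsPartialIso_s18 red R red' R' f) {a : α} {b : β}
    (hab : red' b = red a) (hcmp : ∀ p ∈ f, cmp p.1 a = cmp p.2 b)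
    (hadj : ∀ p ∈ f, R a p.1 ↔ R' b p.2) : IsPartialIso_s18 red R red' R' (insert (a, b) f) := by
  refine ⟨?_, ?_, ?_⟩ <;> simp only [Finset.forall_mem_insert]
  · exact ⟨hab, hf.color_eq⟩
  · exact ⟨⟨by simp, fun q hq => cmp_eq_cmp_symm.1 (hcmp q hq)⟩,
      fun p hp => ⟨hcmp p hp, hf.cmp_eq p hp⟩⟩
  · refine ⟨⟨iff_of_false (hα.not_adj_self a) (hβ.not_adj_self b), hadj⟩,
      fun p hp => ⟨?_, hf.adj_iff p hp⟩⟩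
    rw [hα.adj_comm, hβ.adj_comm]
    exact hadj p hp

def imageBelow (f : Finset (α × β)) (a : α) : Finset β := {p ∈ f | p.1 < a}.image Prod.snd

def imageAbove (f : Finset (α × β)) (a : α) : Finset β := {p ∈ f | a < p.1}.image Prod.snd

theorem mem_imageBelow {p : α × β} {a : α} (hp : p ∈ f) (h : p.1 < a) : p.2 ∈ imageBelow f a :=
  Finset.mem_image_of_mem _ (Finset.mem_filter.2 ⟨hp, h⟩)

theorem mem_imageAbove {p : α × β} {a : α} (hp : p ∈ f) (h : a < p.1) : p.2 ∈ imageAbove f a :=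
  Finset.mem_image_of_mem _ (Finset.mem_filter.2 ⟨hp, h⟩)

theorem IsPartialIso_s18.imageBelow_lt_imageAbove (hf : IsPartialIso_s18 red R red' R' f) (a : α) :
    ∀ x ∈ imageBelow f a, ∀ y ∈ imageAbove f a, x < y := by
  simp only [imageBelow, imageAbove, Finset.forall_mem_image, Finset.mem_filter]
  exact fun p hp q hq => (lt_iff_lt_of_cmp_eq_cmp (hf.cmp_eq p hp.1 q hq.1)).1 (hp.2.trans hq.2)

theorem cmp_eq_of_imageBelow_lt_of_lt_imageAbove {a : α} {b : β} (ha : ∀ b, (a, b) ∉ f)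
    (hLb : ∀ x ∈ imageBelow f a, x < b) (hbH : ∀ y ∈ imageAbove f a, b < y) :
    ∀ p ∈ f, cmp p.1 a = cmp p.2 b := by
  intro p hp
  rcases lt_or_gt_of_ne fun h : p.1 = a => ha p.2 (h ▸ hp) with h | h
  · rw [(cmp_eq_lt_iff _ _).2 h, (cmp_eq_lt_iff _ _).2 (hLb _ (mem_imageBelow hp h))]
  · rw [(cmp_eq_gt_iff _ _).2 h, (cmp_eq_gt_iff _ _).2 (hbH _ (mem_imageAbove hp h))]

theorem IsPartialIso_s18.fst_eq_of_snd_eq (hf : IsPartialIso_s18 red R red' R' f) {p q : α × β}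
    (hp : p ∈ f) (hq : q ∈ f) (h : p.2 = q.2) : p.1 = q.1 :=
  (eq_iff_eq_of_cmp_eq_cmp (hf.cmp_eq p hp q hq)).2 h

theorem IsPartialIso_s18.color_ne_and_mem_side_of_canAdj (hf : IsPartialIso_s18 red R red' R' f)
    {p : α × β} {a : α} (hp : p ∈ f) (h : CanAdj red a p.1) :
    red' p.2 ≠ red a ∧ p.2 ∈ cond (red a) (imageAbove f a) (imageBelow f a) := by
  obtain ⟨hne, hpos⟩ := h
  refine ⟨hf.color_eq p hp ▸ hne.symm, ?_⟩
  cases hred : red a <;> rw [hred] at hpos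
  · exact mem_imageBelow hp ((cmp_eq_gt_iff _ _).1 hpos)
  · exact mem_imageAbove hp ((cmp_eq_lt_iff _ _).1 hpos)

theorem IsPartialIso_s18.exists_insert_left [DecidableEq α] [DecidableEq β] [Nonempty β]
    [NoMinOrder β] [NoMaxOrder β] (hα : IsDirectedBipartite red R)
    (hβ : IsDirectedBipartite red' R') (hd : ColorDense red') (hW : RightGenericWitness red' R')
    (hf : IsPartialIso_s18 red R red' R' f) (a : α) :
    ∃ b, IsPartialIso_s18 red R red' R' (Insert.insert (a, b) f) := by
  classical
  by_cases hdom : ∃ b, (a, b) ∈ f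
  · obtain ⟨b, hab⟩ := hdom
    exact ⟨b, by rwa [Finset.insert_eq_of_mem hab]⟩
  push Not at hdom
  set S₁ := {p ∈ f | R a p.1}.image Prod.snd
  set S₂ := {p ∈ f | CanAdj red a p.1 ∧ ¬ R a p.1}.image Prod.snd
  have hS : Disjoint S₁ S₂ := by
    rw [Finset.disjoint_left]
    rintro _ hs₁ hs₂
    obtain ⟨p, hp, rfl⟩ := Finset.mem_image.1 hs₁
    obtain ⟨q, hq, hqp⟩ := Finset.mem_image.1 hs₂
    rw [Finset.mem_filter] at hp hq
    exact hq.2.2 (hf.fst_eq_of_snd_eq hq.1 hp.1 hqp ▸ hp.2)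
  have hside : ∀ s ∈ S₁ ∪ S₂,
      red' s ≠ red a ∧ s ∈ cond (red a) (imageAbove f a) (imageBelow f a) := by
    simp only [S₁, S₂, Finset.forall_mem_union, Finset.forall_mem_image, Finset.mem_filter]
    exact ⟨fun p hp => hf.color_ne_and_mem_side_of_canAdj hp.1 (hα.canAdj hp.2),
      fun p hp => hf.color_ne_and_mem_side_of_canAdj hp.1 hp.2.1⟩
  obtain ⟨b, hb, hLb, hbH, hS₁, hS₂⟩ :=
    hW.exists_between hd hβ.symm (red a) (hf.imageBelow_lt_imageAbove a) hS hside
  have hcmp := cmp_eq_of_imageBelow_lt_of_lt_imageAbove hdom hLb hbH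
  refine ⟨b, hf.insert hα hβ hb hcmp fun p hp => ⟨fun h => ?_, fun h => ?_⟩⟩
  · exact hS₁ _ (Finset.mem_image_of_mem _ (Finset.mem_filter.2 ⟨hp, h⟩))
  · by_contra hna
    have hcan : CanAdj red a p.1 := (canAdj_congr hb (hf.color_eq p hp)
      (cmp_eq_cmp_symm.1 (hcmp p hp))).1 (hβ.canAdj h)
    exact hS₂ _ (Finset.mem_image_of_mem _ (Finset.mem_filter.2 ⟨hp, hcan, hna⟩)) h

theorem IsPartialIso_s18.exists_insert_right [DecidableEq α] [DecidableEq β] [Nonempty α]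
    [NoMinOrder α] [NoMaxOrder α] (hα : IsDirectedBipartite red R)
    (hβ : IsDirectedBipartite red' R') (hd : ColorDense red) (hW : RightGenericWitness red R)
    (hf : IsPartialIso_s18 red R red' R' f) (b : β) :
    ∃ a, IsPartialIso_s18 red R red' R' (Insert.insert (a, b) f) := by
  obtain ⟨a, ha⟩ := hf.swap.exists_insert_left hβ hα hd hW b
  exact ⟨a, by simpa [Finset.image_insert, Finset.image_image] using ha.swap⟩

end PartialIso

def PartialGraphIso (red : α → Bool) (R : α → α → Prop) (red' : β → Bool)
    (R' : β → β → Prop) : Type _ :=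
  { f : Finset (α × β) // IsPartialIso_s18 red R red' R' f }

namespace PartialGraphIso

variable {red : α → Bool} {R : α → α → Prop} {red' : β → Bool} {R' : β → β → Prop}

instance : Preorder (PartialGraphIso red R red' R') := Subtype.preorder _

instance : Inhabited (PartialGraphIso red R red' R') := ⟨⟨∅, IsPartialIso_s18.empty⟩⟩

theorem cmp_eq_and_adj_iff_of_mem_ideal (I : Order.Ideal (PartialGraphIso red R red' R'))
    {p q : α × β} (hp : ∃ f ∈ I, p ∈ f.1) (hq : ∃ g ∈ I, q ∈ g.1) :
    cmp p.1 q.1 = cmp p.2 q.2 ∧ (R p.1 q.1 ↔ R' p.2 q.2) := by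
  obtain ⟨f, hf, hpf⟩ := hp
  obtain ⟨g, hg, hqg⟩ := hq
  obtain ⟨m, -, hfm, hgm⟩ := I.directed f hf g hg
  exact ⟨m.2.cmp_eq p (hfm hpf) q (hgm hqg), m.2.adj_iff p (hfm hpf) q (hgm hqg)⟩

variable [DecidableEq α] [DecidableEq β]
  (hα : IsDirectedBipartite red R) (hβ : IsDirectedBipartite red' R')

def definedAtLeft [Nonempty β] [NoMinOrder β] [NoMaxOrder β] (hd : ColorDense red')
    (hW : RightGenericWitness red' R') (a : α) : Order.Cofinal (PartialGraphIso red R red' R') where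
  carrier := {f | ∃ b, (a, b) ∈ f.1}
  isCofinal f :=
    let ⟨b, hb⟩ := f.2.exists_insert_left hα hβ hd hW a
    ⟨⟨_, hb⟩, ⟨b, Finset.mem_insert_self _ _⟩, Finset.subset_insert _ _⟩

def definedAtRight [Nonempty α] [NoMinOrder α] [NoMaxOrder α] (hd : ColorDense red)
    (hW : RightGenericWitness red R) (b : β) : Order.Cofinal (PartialGraphIso red R red' R') where
  carrier := {f | ∃ a, (a, b) ∈ f.1}
  isCofinal f :=
    let ⟨a, ha⟩ := f.2.exists_insert_right hα hβ hd hW b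
    ⟨⟨_, ha⟩, ⟨a, Finset.mem_insert_self _ _⟩, Finset.subset_insert _ _⟩

end PartialGraphIso

end

theorem stmt18_general {X X' : Type*} [LinearOrder X] [LinearOrder X']
    [Countable X] [Countable X'] [DecidableEq X] [DecidableEq X']
    [Nonempty X] [NoMinOrder X] [NoMaxOrder X]
    [Nonempty X'] [NoMinOrder X'] [NoMaxOrder X']
    (red : X → Bool) (R : X → X → Prop)
    (hSymm : ∀ x y, R x y → R y x)
    (hBip : ∀ x y, R x y → red x ≠ red y)
    (hdense : ∀ x y : X, x < y →
      (∃ z, x < z ∧ z < y ∧ red z = true) ∧ (∃ z, x < z ∧ z < y ∧ red z = false))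
    (hdir : ∀ a b : X, red a = true → red b = false → R a b → a < b)
    (hW : RightGenericWitness red R)
    (red' : X' → Bool) (R' : X' → X' → Prop)
    (hSymm' : ∀ x y, R' x y → R' y x)
    (hBip' : ∀ x y, R' x y → red' x ≠ red' y)
    (hdense' : ∀ x y : X', x < y →
      (∃ z, x < z ∧ z < y ∧ red' z = true) ∧ (∃ z, x < z ∧ z < y ∧ red' z = false))
    (hdir' : ∀ a b : X', red' a = true → red' b = false → R' a b → a < b)
    (hW' : RightGenericWitness red' R') :
    ∃ g : X ≃ X', (∀ x y : X, x < y ↔ g x < g y) ∧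
      (∀ x : X, red' (g x) = red x) ∧
      (∀ x y : X, R x y ↔ R' (g x) (g y)) := by
  have hX : IsDirectedBipartite red R := ⟨hSymm, hBip, hdir⟩
  have hX' : IsDirectedBipartite red' R' := ⟨hSymm', hBip', hdir'⟩
  cases nonempty_encodable X
  cases nonempty_encodable X'
  let D : X ⊕ X' → Order.Cofinal (PartialGraphIso red R red' R') :=
    Sum.elim (PartialGraphIso.definedAtLeft hX hX' hdense' hW')
      (PartialGraphIso.definedAtRight hX hX' hdense hW)
  let I := Order.idealOfCofinals default D
  have hF : ∀ a, ∃ b, ∃ f ∈ I, (a, b) ∈ f.1 := fun a =>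
    let ⟨f, ⟨b, hb⟩, hf⟩ := Order.cofinal_meets_idealOfCofinals default D (Sum.inl a)
    ⟨b, f, hf, hb⟩
  have hG : ∀ b, ∃ a, ∃ f ∈ I, (a, b) ∈ f.1 := fun b =>
    let ⟨f, ⟨a, ha⟩, hf⟩ := Order.cofinal_meets_idealOfCofinals default D (Sum.inr b)
    ⟨a, f, hf, ha⟩
  choose F hF using hF
  choose G hG using hG
  let e := OrderIso.ofCmpEqCmp F G fun a b =>
    (PartialGraphIso.cmp_eq_and_adj_iff_of_mem_ideal I (hF a) (hG b)).1
  refine ⟨e.toEquiv, fun x y => e.lt_iff_lt.symm, fun x => ?_, fun x y =>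
    (PartialGraphIso.cmp_eq_and_adj_iff_of_mem_ideal I (hF x) (hF y)).2⟩
  obtain ⟨f, -, hx⟩ := hF x
  exact f.2.color_eq _ hx

/-- Any two countable ordered bipartite graphs whose underlying coloured order is ℚ₂
(no endpoints, both colours dense), in which every edge goes from a red point up to a
blue point, and which satisfy the right generic witness property, are isomorphic. -/
theorem stmt18 {X X' : Type*} [LinearOrder X] [LinearOrder X']
    [Countable X] [Countable X'] [DecidableEq X] [DecidableEq X']
    [Nonempty X] [NoMinOrder X] [NoMaxOrder X]
    [Nonempty X'] [NoMinOrder X'] [NoMaxOrder X']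
    (red : X → Bool) (R : X → X → Prop)
    (hSymm : ∀ x y, R x y → R y x) (hIrr : ∀ x, ¬ R x x)
    (hBip : ∀ x y, R x y → red x ≠ red y)
    (hdense : ∀ x y : X, x < y →
      (∃ z, x < z ∧ z < y ∧ red z = true) ∧ (∃ z, x < z ∧ z < y ∧ red z = false))
    (hdir : ∀ a b : X, red a = true → red b = false → R a b → a < b)
    (hW : RightGenericWitness red R)
    (red' : X' → Bool) (R' : X' → X' → Prop)
    (hSymm' : ∀ x y, R' x y → R' y x) (hIrr' : ∀ x, ¬ R' x x)
    (hBip' : ∀ x y, R' x y → red' x ≠ red' y)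
    (hdense' : ∀ x y : X', x < y →
      (∃ z, x < z ∧ z < y ∧ red' z = true) ∧ (∃ z, x < z ∧ z < y ∧ red' z = false))
    (hdir' : ∀ a b : X', red' a = true → red' b = false → R' a b → a < b)
    (hW' : RightGenericWitness red' R') :
    ∃ g : X ≃ X', (∀ x y : X, x < y ↔ g x < g y) ∧
      (∀ x : X, red' (g x) = red x) ∧
      (∀ x y : X, R x y ↔ R' (g x) (g y)) :=
  stmt18_general red R hSymm hBip hdense hdir hW red' R' hSymm' hBip' hdense' hdir' hW'
end
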